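/- arXiv:2201.02267 — 15 statements merged into one kernel-verified Lean document; each statement's English description precedes it below -/
import Mathlib

section
/- Let U ⊆ ℝ be an open interval, A : U → ℝ differentiable, B : U → ℝ, and let u : U → ℝ be twice differentiable with u(z) ≠ 0 for all z ∈ U. Let g : U → ℝ be differentiable with g'(z) = 2A(z)·u(z)⁴ on U, and suppose u satisfies the generalized Ermakov equation u'' = B·u + g/(6u³) on U. Then the function y := g/u⁴ satisfies the Painlevé XXV–Ermakov equation y·y'' - (5/4)(y')² + (2/3)y³ + 3A·y' + 4B·y² - 2A'·y - A² = 0 on U. -/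
/-- If u solves the generalized Ermakov equation u'' = B·u + g/(6u³) with
g' = 2A·u⁴, then y = g/u⁴ solves the Painlevé XXV–Ermakov equation. -/
theorem painleveXXV_ermakov_of_generalized_ermakov
    (U : Set ℝ) (hU : IsOpen U) (hUconn : IsConnected U)
    (A B u g : ℝ → ℝ)
    (hA : ∀ z ∈ U, DifferentiableAt ℝ A z)
    (hu : ∀ z ∈ U, DifferentiableAt ℝ u z)
    (hu' : ∀ z ∈ U, DifferentiableAt ℝ (deriv u) z)
    (hune : ∀ z ∈ U, u z ≠ 0)
    (hg : ∀ z ∈ U, DifferentiableAt ℝ g z)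
    (hg' : ∀ z ∈ U, deriv g z = 2 * A z * (u z) ^ 4)
    (herm : ∀ z ∈ U, deriv (deriv u) z = B z * u z + g z / (6 * (u z) ^ 3)) :
    ∀ z ∈ U,
      (fun t => g t / (u t) ^ 4) z * deriv (deriv (fun t => g t / (u t) ^ 4)) z
      - 5 / 4 * (deriv (fun t => g t / (u t) ^ 4) z) ^ 2
      + 2 / 3 * ((fun t => g t / (u t) ^ 4) z) ^ 3
      + 3 * A z * deriv (fun t => g t / (u t) ^ 4) z
      + 4 * B z * ((fun t => g t / (u t) ^ 4) z) ^ 2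
      - 2 * deriv A z * ((fun t => g t / (u t) ^ 4) z)
      - (A z) ^ 2 = 0 := by
  intro z hz
  set y : ℝ → ℝ := fun t => g t / (u t) ^ 4 with hy
  -- first derivative formula on U
  have hyderiv : ∀ w ∈ U, deriv y w
      = (deriv g w * u w ^ 4 - g w * (4 * u w ^ 3 * deriv u w)) / (u w ^ 4) ^ 2 := by
    intro w hw
    have h1 : HasDerivAt (fun t => u t ^ 4) (4 * u w ^ 3 * deriv u w) w := by
      have := ((hu w hw).hasDerivAt).pow 4
      refine this.congr_deriv ?_
      norm_num
    have h2 : HasDerivAt g (deriv g w) w := (hg w hw).hasDerivAt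
    have hne : u w ^ 4 ≠ 0 := pow_ne_zero _ (hune w hw)
    exact ((h2.div h1 hne)).deriv
  -- nicer form of first derivative on U
  have hyderiv' : ∀ w ∈ U, deriv y w
      = 2 * A w - 4 * g w * deriv u w / u w ^ 5 := by
    intro w hw
    have hne : u w ≠ 0 := hune w hw
    rw [hyderiv w hw, hg' w hw]
    field_simp
  -- second derivative at z
  have heq : deriv y =ᶠ[nhds z] (fun w => 2 * A w - 4 * g w * deriv u w / u w ^ 5) := by
    filter_upwards [hU.mem_nhds hz] with w hw using hyderiv' w hw
  have hd2 : deriv (deriv y) z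
      = deriv (fun w => 2 * A w - 4 * g w * deriv u w / u w ^ 5) z :=
    Filter.EventuallyEq.deriv_eq heq
  have hne : u z ≠ 0 := hune z hz
  have hne5 : u z ^ 5 ≠ 0 := pow_ne_zero _ hne
  have hder2 : HasDerivAt (fun w => 2 * A w - 4 * g w * deriv u w / u w ^ 5)
      (2 * deriv A z -
        ((4 * deriv g z * deriv u z + 4 * g z * deriv (deriv u) z) * u z ^ 5
          - 4 * g z * deriv u z * (5 * u z ^ 4 * deriv u z)) / (u z ^ 5) ^ 2) z := by
    have hA' : HasDerivAt (fun w => 2 * A w) (2 * deriv A z) z :=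
      ((hA z hz).hasDerivAt).const_mul 2
    have hnum : HasDerivAt (fun w => 4 * g w * deriv u w)
        (4 * deriv g z * deriv u z + 4 * g z * deriv (deriv u) z) z := by
      have := (((hg z hz).hasDerivAt).const_mul 4).mul ((hu' z hz).hasDerivAt)
      refine this.congr_deriv ?_
      ring
    have hden : HasDerivAt (fun w => u w ^ 5) (5 * u z ^ 4 * deriv u z) z := by
      have := ((hu z hz).hasDerivAt).pow 5
      refine this.congr_deriv ?_
      norm_num
    exact hA'.sub (hnum.div hden hne5)
  have hyz : y z = g z / u z ^ 4 := rfl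
  rw [hd2] at *
  rw [hder2.deriv, hyderiv' z hz, hyz, hg' z hz, herm z hz]
  have h6 : (6 : ℝ) * u z ^ 3 ≠ 0 := by positivity
  field_simp
  ring
end

section
/- Let U ⊆ ℝ be an open interval, A : U → ℝ twice differentiable with A(z) ≠ 0 for all z ∈ U, B : U → ℝ, and let u : U → ℝ be twice differentiable with u(z) ≠ 0 for all z ∈ U. If u satisfies the Painlevé XXV equation u'' = 3(u')²/(4u) + (A'/(2A) - (3/2)u)·u' - u³/4 + (A'/(2A))·u² + (4B - 5(A')²/(4A²) + A''/A)·u + (4/3)A on U, then y := 2A/u satisfies the Painlevé XXV–Ermakov equation y·y'' - (5/4)(y')² + (2/3)y³ + 3A·y' + 4B·y² - 2A'·y - A² = 0 on U. -/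
/-- first derivative of y = 2A/u at a point -/
lemma yderiv_aux (A u : ℝ → ℝ) (z : ℝ)
    (hA : DifferentiableAt ℝ A z) (hu : DifferentiableAt ℝ u z) (hune : u z ≠ 0) :
    deriv (fun t => 2 * A t / u t) z =
      (2 * deriv A z * u z - 2 * A z * deriv u z) / (u z) ^ 2 := by
  have h := ((hA.hasDerivAt.const_mul 2).div hu.hasDerivAt hune).deriv
  exact h

/-- If u solves the Painlevé XXV equation, then y = 2A/u solves the
Painlevé XXV–Ermakov equation. -/
theorem painleveXXV_ermakov_of_painleveXXV
    (U : Set ℝ) (hU : IsOpen U) (hUconn : IsConnected U)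
    (A B u : ℝ → ℝ)
    (hA : ∀ z ∈ U, DifferentiableAt ℝ A z)
    (hA' : ∀ z ∈ U, DifferentiableAt ℝ (deriv A) z)
    (hAne : ∀ z ∈ U, A z ≠ 0)
    (hu : ∀ z ∈ U, DifferentiableAt ℝ u z)
    (hu' : ∀ z ∈ U, DifferentiableAt ℝ (deriv u) z)
    (hune : ∀ z ∈ U, u z ≠ 0)
    (hXXV : ∀ z ∈ U, deriv (deriv u) z =
      3 * (deriv u z) ^ 2 / (4 * u z)
      + (deriv A z / (2 * A z) - 3 / 2 * u z) * deriv u z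
      - (u z) ^ 3 / 4
      + (deriv A z / (2 * A z)) * (u z) ^ 2
      + (4 * B z - 5 * (deriv A z) ^ 2 / (4 * (A z) ^ 2) + deriv (deriv A) z / A z) * u z
      + 4 / 3 * A z) :
    ∀ z ∈ U,
      (fun t => 2 * A t / u t) z * deriv (deriv (fun t => 2 * A t / u t)) z
      - 5 / 4 * (deriv (fun t => 2 * A t / u t) z) ^ 2
      + 2 / 3 * ((fun t => 2 * A t / u t) z) ^ 3
      + 3 * A z * deriv (fun t => 2 * A t / u t) z
      + 4 * B z * ((fun t => 2 * A t / u t) z) ^ 2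
      - 2 * deriv A z * ((fun t => 2 * A t / u t) z)
      - (A z) ^ 2 = 0 := by
  intro z hz
  have hmem : U ∈ nhds z := hU.mem_nhds hz
  -- deriv y agrees with the explicit formula near z
  have hev : (deriv (fun t => 2 * A t / u t)) =ᶠ[nhds z]
      (fun t => (2 * deriv A t * u t - 2 * A t * deriv u t) / (u t) ^ 2) := by
    filter_upwards [hmem] with t ht
    exact yderiv_aux A u t (hA t ht) (hu t ht) (hune t ht)
  have hy1 : deriv (fun t => 2 * A t / u t) z =
      (2 * deriv A z * u z - 2 * A z * deriv u z) / (u z) ^ 2 :=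
    yderiv_aux A u z (hA z hz) (hu z hz) (hune z hz)
  -- second derivative
  have hnum : HasDerivAt (fun t => 2 * deriv A t * u t - 2 * A t * deriv u t)
      ((2 * deriv (deriv A) z) * u z + (2 * deriv A z) * deriv u z
        - ((2 * deriv A z) * deriv u z + (2 * A z) * deriv (deriv u) z)) z := by
    exact (((hA' z hz).hasDerivAt.const_mul 2).mul (hu z hz).hasDerivAt).sub
      (((hA z hz).hasDerivAt.const_mul 2).mul (hu' z hz).hasDerivAt)
  have hden : HasDerivAt (fun t => (u t) ^ 2) (2 * u z * deriv u z) z := by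
    have := ((hu z hz).hasDerivAt.pow 2)
    have h2 : HasDerivAt (u ^ 2) (2 * u z * deriv u z) z := by
      simpa [mul_comm, mul_assoc, mul_left_comm] using this
    exact h2
  have hune2 : (u z) ^ 2 ≠ 0 := pow_ne_zero 2 (hune z hz)
  have hy2 : deriv (deriv (fun t => 2 * A t / u t)) z =
      ((2 * deriv (deriv A) z * u z + 2 * deriv A z * deriv u z
        - (2 * deriv A z * deriv u z + 2 * A z * deriv (deriv u) z)) * (u z) ^ 2
        - (2 * deriv A z * u z - 2 * A z * deriv u z) * (2 * u z * deriv u z))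
        / ((u z) ^ 2) ^ 2 := by
    rw [hev.deriv_eq]
    have := (hnum.div hden hune2).deriv
    exact this
  rw [hy1, hy2]
  simp only
  rw [hXXV z hz]
  have hA0 := hAne z hz
  have hu0 := hune z hz
  field_simp
  ring
end

section
/- Let U ⊆ ℝ be an open interval, A : U → ℝ, B : U → ℝ differentiable, and let w : U → ℝ be a solution of the third-order linear equation in normal form w''' - 4B·w' - 2(B' + A/3)·w = 0 with w(z) ≠ 0 for all z ∈ U. Then the function y := 3w''/w - (3/2)(w'/w)² - 6B satisfies the Painlevé XXV–Ermakov equation y·y'' - (5/4)(y')² + (2/3)y³ + 3A·y' + 4B·y² - 2A'·y - A² = 0 on U. -/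
set_option maxHeartbeats 1600000 in
/-- If w solves w''' - 4B·w' - 2(B' + A/3)·w = 0 and is nonvanishing,
then y = 3w''/w - (3/2)(w'/w)² - 6B solves the Painlevé XXV–Ermakov equation. -/
theorem painleveXXV_ermakov_of_linear_third_order
    (U : Set ℝ) (hU : IsOpen U) (hUconn : IsConnected U)
    (A B w : ℝ → ℝ)
    (hA : ∀ z ∈ U, DifferentiableAt ℝ A z)
    (hB : ∀ z ∈ U, DifferentiableAt ℝ B z)
    (hw : ∀ z ∈ U, DifferentiableAt ℝ w z)
    (hw' : ∀ z ∈ U, DifferentiableAt ℝ (deriv w) z)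
    (hw'' : ∀ z ∈ U, DifferentiableAt ℝ (deriv (deriv w)) z)
    (hwne : ∀ z ∈ U, w z ≠ 0)
    (hode : ∀ z ∈ U, deriv (deriv (deriv w)) z - 4 * B z * deriv w z
      - 2 * (deriv B z + A z / 3) * w z = 0) :
    ∀ z ∈ U,
      (fun t => 3 * deriv (deriv w) t / w t - 3 / 2 * (deriv w t / w t) ^ 2 - 6 * B t) z
        * deriv (deriv (fun t => 3 * deriv (deriv w) t / w t
            - 3 / 2 * (deriv w t / w t) ^ 2 - 6 * B t)) z
      - 5 / 4 * (deriv (fun t => 3 * deriv (deriv w) t / w t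
            - 3 / 2 * (deriv w t / w t) ^ 2 - 6 * B t) z) ^ 2
      + 2 / 3 * ((fun t => 3 * deriv (deriv w) t / w t
            - 3 / 2 * (deriv w t / w t) ^ 2 - 6 * B t) z) ^ 3
      + 3 * A z * deriv (fun t => 3 * deriv (deriv w) t / w t
            - 3 / 2 * (deriv w t / w t) ^ 2 - 6 * B t) z
      + 4 * B z * ((fun t => 3 * deriv (deriv w) t / w t
            - 3 / 2 * (deriv w t / w t) ^ 2 - 6 * B t) z) ^ 2
      - 2 * deriv A z * ((fun t => 3 * deriv (deriv w) t / w t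
            - 3 / 2 * (deriv w t / w t) ^ 2 - 6 * B t) z)
      - (A z) ^ 2 = 0 := by
  set f : ℝ → ℝ := fun t => 3 * deriv (deriv w) t / w t
      - 3 / 2 * (deriv w t / w t) ^ 2 - 6 * B t with hf
  set g : ℝ → ℝ := fun t => 12 * B t * (deriv w t / w t) + 2 * A t
      - 6 * ((deriv w t / w t) * (deriv (deriv w) t / w t))
      + 3 * (deriv w t / w t) ^ 3 with hg
  -- Step A: f has derivative g on U
  have hfd : ∀ x ∈ U, HasDerivAt f (g x) x := by
    intro x hx
    have hne := hwne x hx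
    have hw1 := (hw x hx).hasDerivAt
    have hw2 := (hw' x hx).hasDerivAt
    have hw3 := (hw'' x hx).hasDerivAt
    have hB1 := (hB x hx).hasDerivAt
    have hW3 : deriv (deriv (deriv w)) x
        = 4 * B x * deriv w x + 2 * (deriv B x + A x / 3) * w x := by
      have := hode x hx; linarith
    have h1 : HasDerivAt (fun t => 3 * deriv (deriv w) t / w t)
        ((3 * deriv (deriv (deriv w)) x * w x
          - 3 * deriv (deriv w) x * deriv w x) / w x ^ 2) x :=
      (hw3.const_mul 3).div hw1 hne
    have hp : HasDerivAt (fun t => deriv w t / w t)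
        ((deriv (deriv w) x * w x - deriv w x * deriv w x) / w x ^ 2) x :=
      hw2.div hw1 hne
    have h2 : HasDerivAt (fun t => 3 / 2 * (deriv w t / w t) ^ 2)
        (3 / 2 * (2 * (deriv w x / w x) ^ 1
          * ((deriv (deriv w) x * w x - deriv w x * deriv w x) / w x ^ 2))) x :=
      (hp.pow 2).const_mul (3 / 2)
    have h3 : HasDerivAt (fun t => 6 * B t) (6 * deriv B x) x := hB1.const_mul 6
    have H := (h1.sub h2).sub h3
    convert H using 1
    case e'_4 => rfl
    case e'_5 => rfl
    case e'_8 => rfl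
    rw [hW3]
    simp only [hg]
    field_simp
    ring_nf
  have hdf : ∀ x ∈ U, deriv f x = g x := fun x hx => (hfd x hx).deriv
  intro z hz
  have hne := hwne z hz
  have hw1 := (hw z hz).hasDerivAt
  have hw2 := (hw' z hz).hasDerivAt
  have hw3 := (hw'' z hz).hasDerivAt
  have hB1 := (hB z hz).hasDerivAt
  have hA1 := (hA z hz).hasDerivAt
  have hW3 : deriv (deriv (deriv w)) z
      = 4 * B z * deriv w z + 2 * (deriv B z + A z / 3) * w z := by
    have := hode z hz; linarith
  -- Step B: derivative of g at z
  have hp : HasDerivAt (fun t => deriv w t / w t)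
      ((deriv (deriv w) z * w z - deriv w z * deriv w z) / w z ^ 2) z :=
    hw2.div hw1 hne
  have hq : HasDerivAt (fun t => deriv (deriv w) t / w t)
      ((deriv (deriv (deriv w)) z * w z - deriv (deriv w) z * deriv w z) / w z ^ 2) z :=
    hw3.div hw1 hne
  have hg1 := ((hB1.const_mul 12).mul hp)
  have hg2 := hA1.const_mul 2
  have hg3 := (hp.mul hq).const_mul 6
  have hg4 := ((hp.pow 3)).const_mul 3
  have hgd := ((hg1.add hg2).sub hg3).add hg4
  have hdfg : deriv f =ᶠ[nhds z] g :=
    Filter.eventuallyEq_of_mem (hU.mem_nhds hz) hdf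
  have hddf : deriv (deriv f) z = deriv g z := hdfg.deriv_eq
  have hdg : deriv g z = _ := hgd.deriv
  rw [hddf, hdg, hdf z hz]
  simp only [hg, hf]
  rw [hW3]
  push_cast
  field_simp
  ring
end

section
/- Let U ⊆ ℝ be an open interval, B : U → ℝ differentiable, and let w : U → ℝ be a solution of the linear equation w''' - 4B·w' - 2B'·w = 0 on U. Then the function z ↦ w''(z)·w(z) - (1/2)w'(z)² - 2B(z)·w(z)² is constant on U; call its value 2I. Moreover, if u : U → ℝ is twice differentiable, nonvanishing on U, and satisfies u² = w, then u satisfies the Ermakov equation u'' = B·u + I/u³ on U. -/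
/-- The linear equation w''' - 4B·w' - 2B'·w = 0 has the first integral
w''·w - (1/2)(w')² - 2B·w² = 2I, and if u² = w with u nonvanishing then u solves the
Ermakov equation u'' = B·u + I/u³. -/
theorem first_integral_and_ermakov
    (U : Set ℝ) (hU : IsOpen U) (hUconn : IsConnected U)
    (B w : ℝ → ℝ)
    (hB : ∀ z ∈ U, DifferentiableAt ℝ B z)
    (hw : ∀ z ∈ U, DifferentiableAt ℝ w z)
    (hw' : ∀ z ∈ U, DifferentiableAt ℝ (deriv w) z)
    (hw'' : ∀ z ∈ U, DifferentiableAt ℝ (deriv (deriv w)) z)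
    (hode : ∀ z ∈ U, deriv (deriv (deriv w)) z - 4 * B z * deriv w z
      - 2 * deriv B z * w z = 0) :
    ∃ I : ℝ,
      (∀ z ∈ U, deriv (deriv w) z * w z - 1 / 2 * (deriv w z) ^ 2
        - 2 * B z * (w z) ^ 2 = 2 * I) ∧
      ∀ u : ℝ → ℝ,
        (∀ z ∈ U, DifferentiableAt ℝ u z) →
        (∀ z ∈ U, DifferentiableAt ℝ (deriv u) z) →
        (∀ z ∈ U, u z ≠ 0) →
        (∀ z ∈ U, (u z) ^ 2 = w z) →
        ∀ z ∈ U, deriv (deriv u) z = B z * u z + I / (u z) ^ 3 := by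
  set F : ℝ → ℝ := fun z => deriv (deriv w) z * w z - 1 / 2 * (deriv w z) ^ 2
      - 2 * B z * (w z) ^ 2 with hF
  -- F has derivative 0 on U
  have hFderiv : ∀ z ∈ U, HasDerivAt F 0 z := by
    intro z hz
    have h1 : HasDerivAt (deriv (deriv w)) (deriv (deriv (deriv w)) z) z :=
      (hw'' z hz).hasDerivAt
    have h2 : HasDerivAt (deriv w) (deriv (deriv w) z) z := (hw' z hz).hasDerivAt
    have h3 : HasDerivAt w (deriv w z) z := (hw z hz).hasDerivAt
    have h4 : HasDerivAt B (deriv B z) z := (hB z hz).hasDerivAt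
    have h : HasDerivAt F
        (deriv (deriv (deriv w)) z * w z + deriv (deriv w) z * deriv w z
          - 1 / 2 * (2 * deriv w z * deriv (deriv w) z)
          - (2 * deriv B z * (w z) ^ 2
            + 2 * B z * (2 * w z * deriv w z))) z := by
      have := ((h1.mul h3).sub ((h2.pow 2).const_mul (1 / 2 : ℝ))).sub
        (((h4.const_mul (2 : ℝ)).mul (h3.pow 2)))
      refine this.congr_deriv ?_
      simp only [Pi.pow_apply]; ring
    have key := hode z hz
    convert h using 1
    linear_combination (-(w z)) * key
  obtain ⟨z₀, hz₀⟩ := hUconn.nonempty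
  refine ⟨F z₀ / 2, ?_, ?_⟩
  · intro z hz
    have hconv : Convex ℝ U := hUconn.isPreconnected.convex
    have hdiff : DifferentiableOn ℝ F U := fun x hx =>
      ((hFderiv x hx).differentiableAt).differentiableWithinAt
    have hzero : ∀ x ∈ U, fderivWithin ℝ F U x = 0 := by
      intro x hx
      rw [fderivWithin_of_isOpen hU hx]
      have := (hFderiv x hx).hasFDerivAt.fderiv
      rw [this]; ext; simp
    have := hconv.is_const_of_fderivWithin_eq_zero hdiff hzero hz hz₀
    have : F z = F z₀ := this
    rw [show deriv (deriv w) z * w z - 1 / 2 * (deriv w z) ^ 2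
        - 2 * B z * (w z) ^ 2 = F z from rfl, this]
    ring
  · intro u hu hu' hune hu2 z hz
    -- deriv w = 2 u u' on U
    have hderiv1 : ∀ x ∈ U, deriv w x = 2 * u x * deriv u x := by
      intro x hx
      have hev : w =ᶠ[nhds x] (fun y => (u y) ^ 2) := by
        filter_upwards [hU.mem_nhds hx] with y hy using (hu2 y hy).symm
      rw [Filter.EventuallyEq.deriv_eq hev]
      have : HasDerivAt (fun y => (u y) ^ 2) (2 * u x * deriv u x) x := by
        have := (hu x hx).hasDerivAt.pow 2
        refine this.congr_deriv ?_; ring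
      exact this.deriv
    have hderiv2 : deriv (deriv w) z
        = 2 * (deriv u z) ^ 2 + 2 * u z * deriv (deriv u) z := by
      have hev : deriv w =ᶠ[nhds z] (fun y => 2 * u y * deriv u y) := by
        filter_upwards [hU.mem_nhds hz] with y hy using hderiv1 y hy
      rw [Filter.EventuallyEq.deriv_eq hev]
      have : HasDerivAt (fun y => 2 * u y * deriv u y)
          (2 * (deriv u z) ^ 2 + 2 * u z * deriv (deriv u) z) z := by
        have := (((hu z hz).const_mul (2 : ℝ)).hasDerivAt.mul (hu' z hz).hasDerivAt)
        refine this.congr_deriv ?_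
        rw [deriv_const_mul _ (hu z hz)]; ring
      exact this.deriv
    -- first integral at z
    have hFI : deriv (deriv w) z * w z - 1 / 2 * (deriv w z) ^ 2
        - 2 * B z * (w z) ^ 2 = 2 * (F z₀ / 2) := by
      have hconv : Convex ℝ U := hUconn.isPreconnected.convex
      have hdiff : DifferentiableOn ℝ F U := fun x hx =>
        ((hFderiv x hx).differentiableAt).differentiableWithinAt
      have hzero : ∀ x ∈ U, fderivWithin ℝ F U x = 0 := by
        intro x hx
        rw [fderivWithin_of_isOpen hU hx]
        have := (hFderiv x hx).hasFDerivAt.fderiv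
        rw [this]; ext; simp
      have := hconv.is_const_of_fderivWithin_eq_zero hdiff hzero hz hz₀
      have : F z = F z₀ := this
      rw [show deriv (deriv w) z * w z - 1 / 2 * (deriv w z) ^ 2
          - 2 * B z * (w z) ^ 2 = F z from rfl, this]
      ring
    have hwz : w z = (u z) ^ 2 := (hu2 z hz).symm
    have hw1 : deriv w z = 2 * u z * deriv u z := hderiv1 z hz
    rw [hderiv2, hwz, hw1] at hFI
    have hne : u z ≠ 0 := hune z hz
    have hne3 : (u z) ^ 3 ≠ 0 := pow_ne_zero 3 hne
    field_simp
    linear_combination hFI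
end

section
/- Let U ⊆ ℝ be an open interval, c a real constant, and let v : U → ℝ be four times differentiable with v'(z) ≠ 0 for all z ∈ U. Define A := c·e^v/(v')³, B := v'''/v' - c·e^v/(3(v')⁴), and y := 2c·e^v/(v')⁴. Then: (i) y satisfies the Painlevé XXV–Ermakov equation y·y'' - (5/4)(y')² + (2/3)y³ + 3A·y' + 4B·y² - 2A'·y - A² = 0 on U; (ii) u := v' satisfies the linear equation u'' = B·u + A/3 on U; (iii) u := v' satisfies u'''·u + 3u''·u' - (A/3)·u² - 4B·u·u' - B'·u² = 0 on U; and (iv) if moreover c ≠ 0, u := v' satisfies the Painlevé XXV equation u'' = 3(u')²/(4u) + (A'/(2A) - (3/2)u)·u' - u³/4 + (A'/(2A))·u² + (4B - 5(A')²/(4A²) + A''/A)·u + (4/3)A on U. -/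
set_option maxHeartbeats 1600000 in
/-- With A = c·e^v/(v')³, B = v'''/v' - c·e^v/(3(v')⁴), the function
y = 2c·e^v/(v')⁴ solves the Painlevé XXV–Ermakov equation, and u = v' solves the linear
equation u'' = B·u + A/3, the quadratic equation u'''u + 3u''u' - (A/3)u² - 4Buu' - B'u² = 0,
and (if c ≠ 0) the Painlevé XXV equation. -/
theorem special_solutions_from_riccati
    (U : Set ℝ) (hU : IsOpen U) (hUconn : IsConnected U)
    (c : ℝ) (v : ℝ → ℝ)
    (hv : ∀ z ∈ U, DifferentiableAt ℝ v z)
    (hv' : ∀ z ∈ U, DifferentiableAt ℝ (deriv v) z)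
    (hv'' : ∀ z ∈ U, DifferentiableAt ℝ (deriv (deriv v)) z)
    (hv''' : ∀ z ∈ U, DifferentiableAt ℝ (deriv (deriv (deriv v))) z)
    (hv'ne : ∀ z ∈ U, deriv v z ≠ 0)
    (A B y : ℝ → ℝ)
    (hA : A = fun z => c * Real.exp (v z) / (deriv v z) ^ 3)
    (hB : B = fun z => deriv (deriv (deriv v)) z / deriv v z
      - c * Real.exp (v z) / (3 * (deriv v z) ^ 4))
    (hy : y = fun z => 2 * c * Real.exp (v z) / (deriv v z) ^ 4) :
    (∀ z ∈ U,
      y z * deriv (deriv y) z - 5 / 4 * (deriv y z) ^ 2 + 2 / 3 * (y z) ^ 3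
      + 3 * A z * deriv y z + 4 * B z * (y z) ^ 2 - 2 * deriv A z * y z - (A z) ^ 2 = 0) ∧
    (∀ z ∈ U, deriv (deriv (deriv v)) z = B z * deriv v z + A z / 3) ∧
    (∀ z ∈ U,
      deriv (deriv (deriv (deriv v))) z * deriv v z
      + 3 * deriv (deriv (deriv v)) z * deriv (deriv v) z
      - A z / 3 * (deriv v z) ^ 2
      - 4 * B z * deriv v z * deriv (deriv v) z
      - deriv B z * (deriv v z) ^ 2 = 0) ∧
    (c ≠ 0 → ∀ z ∈ U,
      deriv (deriv (deriv v)) z =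
        3 * (deriv (deriv v) z) ^ 2 / (4 * deriv v z)
        + (deriv A z / (2 * A z) - 3 / 2 * deriv v z) * deriv (deriv v) z
        - (deriv v z) ^ 3 / 4
        + (deriv A z / (2 * A z)) * (deriv v z) ^ 2
        + (4 * B z - 5 * (deriv A z) ^ 2 / (4 * (A z) ^ 2)
            + deriv (deriv A) z / A z) * deriv v z
        + 4 / 3 * A z) := by
  subst hA hB hy
  have hE : ∀ z ∈ U, HasDerivAt (fun z => Real.exp (v z)) (Real.exp (v z) * deriv v z) z := by
    intro z hz
    exact (hv z hz).hasDerivAt.exp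
  have hAd : ∀ z ∈ U, HasDerivAt (fun z => c * Real.exp (v z) / (deriv v z) ^ 3)
      (c * Real.exp (v z) * ((deriv v z) ^ 2 - 3 * deriv (deriv v) z) / (deriv v z) ^ 4) z := by
    intro z hz
    have h1 := ((hE z hz).const_mul c).fun_div ((hv' z hz).hasDerivAt.fun_pow 3)
      (pow_ne_zero 3 (hv'ne z hz))
    refine h1.congr_deriv ?_
    have h0 := hv'ne z hz
    field_simp
    ring
  have hyd : ∀ z ∈ U, HasDerivAt (fun z => 2 * c * Real.exp (v z) / (deriv v z) ^ 4)
      (2 * c * Real.exp (v z) * ((deriv v z) ^ 2 - 4 * deriv (deriv v) z) / (deriv v z) ^ 5) z := by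
    intro z hz
    have h1 := ((hE z hz).const_mul (2 * c)).fun_div ((hv' z hz).hasDerivAt.fun_pow 4)
      (pow_ne_zero 4 (hv'ne z hz))
    refine h1.congr_deriv ?_
    have h0 := hv'ne z hz
    field_simp
    ring
  have hBd : ∀ z ∈ U, HasDerivAt (fun z => deriv (deriv (deriv v)) z / deriv v z
      - c * Real.exp (v z) / (3 * (deriv v z) ^ 4))
      ((deriv (deriv (deriv (deriv v))) z * deriv v z
          - deriv (deriv (deriv v)) z * deriv (deriv v) z) / (deriv v z) ^ 2
        - c * Real.exp (v z) * ((deriv v z) ^ 2 - 4 * deriv (deriv v) z) / (3 * (deriv v z) ^ 5)) z := by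
    intro z hz
    have h0 := hv'ne z hz
    have h1 := (hv''' z hz).hasDerivAt.fun_div (hv' z hz).hasDerivAt h0
    have h2 := ((hE z hz).const_mul c).fun_div (((hv' z hz).hasDerivAt.fun_pow 4).const_mul 3)
      (by positivity)
    have h3 := h1.sub h2
    refine h3.congr_deriv ?_
    field_simp
    ring
  have hAd1 : ∀ z ∈ U, deriv (fun z => c * Real.exp (v z) / (deriv v z) ^ 3) z
      = c * Real.exp (v z) * ((deriv v z) ^ 2 - 3 * deriv (deriv v) z) / (deriv v z) ^ 4 := by
    intro z hz
    exact (hAd z hz).deriv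
  have hyd1 : ∀ z ∈ U, deriv (fun z => 2 * c * Real.exp (v z) / (deriv v z) ^ 4) z
      = 2 * c * Real.exp (v z) * ((deriv v z) ^ 2 - 4 * deriv (deriv v) z) / (deriv v z) ^ 5 := by
    intro z hz
    exact (hyd z hz).deriv
  have hBd1 : ∀ z ∈ U, deriv (fun z => deriv (deriv (deriv v)) z / deriv v z
      - c * Real.exp (v z) / (3 * (deriv v z) ^ 4)) z
      = (deriv (deriv (deriv (deriv v))) z * deriv v z
          - deriv (deriv (deriv v)) z * deriv (deriv v) z) / (deriv v z) ^ 2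
        - c * Real.exp (v z) * ((deriv v z) ^ 2 - 4 * deriv (deriv v) z) / (3 * (deriv v z) ^ 5) := by
    intro z hz
    exact (hBd z hz).deriv
  have hAd2 : ∀ z ∈ U, deriv (deriv (fun z => c * Real.exp (v z) / (deriv v z) ^ 3)) z
      = c * Real.exp (v z) * ((deriv v z) ^ 4 - 5 * (deriv v z) ^ 2 * deriv (deriv v) z
          - 3 * deriv v z * deriv (deriv (deriv v)) z + 12 * (deriv (deriv v) z) ^ 2)
        / (deriv v z) ^ 5 := by
    intro z hz
    have hev : deriv (fun z => c * Real.exp (v z) / (deriv v z) ^ 3)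
        =ᶠ[nhds z] (fun z => c * Real.exp (v z) * ((deriv v z) ^ 2 - 3 * deriv (deriv v) z)
          / (deriv v z) ^ 4) := by
      filter_upwards [hU.mem_nhds hz] with w hw
      exact hAd1 w hw
    rw [hev.deriv_eq]
    have h0 := hv'ne z hz
    have hnum : HasDerivAt (fun z => c * Real.exp (v z) * ((deriv v z) ^ 2 - 3 * deriv (deriv v) z))
        (c * (Real.exp (v z) * deriv v z) * ((deriv v z) ^ 2 - 3 * deriv (deriv v) z)
          + c * Real.exp (v z) * ((2 : ℕ) * (deriv v z) ^ 1 * deriv (deriv v) z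
              - 3 * deriv (deriv (deriv v)) z)) z := by
      exact ((hE z hz).const_mul c).mul
        (((hv' z hz).hasDerivAt.pow 2).sub ((hv'' z hz).hasDerivAt.const_mul 3))
    have h1 := hnum.fun_div ((hv' z hz).hasDerivAt.fun_pow 4) (pow_ne_zero 4 h0)
    rw [h1.deriv]
    field_simp
    ring
  have hyd2 : ∀ z ∈ U, deriv (deriv (fun z => 2 * c * Real.exp (v z) / (deriv v z) ^ 4)) z
      = 2 * c * Real.exp (v z) * ((deriv v z) ^ 4 - 7 * (deriv v z) ^ 2 * deriv (deriv v) z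
          - 4 * deriv v z * deriv (deriv (deriv v)) z + 20 * (deriv (deriv v) z) ^ 2)
        / (deriv v z) ^ 6 := by
    intro z hz
    have hev : deriv (fun z => 2 * c * Real.exp (v z) / (deriv v z) ^ 4)
        =ᶠ[nhds z] (fun z => 2 * c * Real.exp (v z) * ((deriv v z) ^ 2 - 4 * deriv (deriv v) z)
          / (deriv v z) ^ 5) := by
      filter_upwards [hU.mem_nhds hz] with w hw
      exact hyd1 w hw
    rw [hev.deriv_eq]
    have h0 := hv'ne z hz
    have hnum : HasDerivAt
        (fun z => 2 * c * Real.exp (v z) * ((deriv v z) ^ 2 - 4 * deriv (deriv v) z))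
        (2 * c * (Real.exp (v z) * deriv v z) * ((deriv v z) ^ 2 - 4 * deriv (deriv v) z)
          + 2 * c * Real.exp (v z) * ((2 : ℕ) * (deriv v z) ^ 1 * deriv (deriv v) z
              - 4 * deriv (deriv (deriv v)) z)) z := by
      exact ((hE z hz).const_mul (2 * c)).mul
        (((hv' z hz).hasDerivAt.pow 2).sub ((hv'' z hz).hasDerivAt.const_mul 4))
    have h1 := hnum.fun_div ((hv' z hz).hasDerivAt.fun_pow 5) (pow_ne_zero 5 h0)
    rw [h1.deriv]
    field_simp
    ring
  refine ⟨?_, ?_, ?_, ?_⟩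
  · intro z hz
    have h0 := hv'ne z hz
    have he := Real.exp_ne_zero (v z)
    rw [hyd2 z hz, hyd1 z hz, hAd1 z hz]
    simp only
    field_simp
    ring
  · intro z hz
    have h0 := hv'ne z hz
    simp only
    field_simp
    ring
  · intro z hz
    have h0 := hv'ne z hz
    rw [hBd1 z hz]
    simp only
    field_simp
    ring
  · intro hc z hz
    have h0 := hv'ne z hz
    have he := Real.exp_ne_zero (v z)
    have hAne : c * Real.exp (v z) / (deriv v z) ^ 3 ≠ 0 :=
      div_ne_zero (mul_ne_zero hc he) (pow_ne_zero 3 h0)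
    rw [hAd2 z hz, hAd1 z hz]
    simp only
    field_simp
    ring
end

section
/- Let U ⊆ ℝ be an open interval, A : U → ℝ, B : U → ℝ differentiable, and let w₁, w₂ : U → ℝ be solutions of the third-order linear equation in normal form wᵢ''' - 4B·wᵢ' - 2(B' + A/3)·wᵢ = 0 (i = 1, 2) on U. Then their Wronskian w := w₁·w₂' - w₁'·w₂ satisfies w''' - 4B·w' - 2(B' - A/3)·w = 0 on U. -/
/-- If w₁, w₂ solve w''' - 4B·w' - 2(B' + A/3)·w = 0, then their Wronskian
w = w₁·w₂' - w₁'·w₂ solves w''' - 4B·w' - 2(B' - A/3)·w = 0. -/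
theorem wronskian_solves_adjoint_normal_form
    (U : Set ℝ) (hU : IsOpen U) (hUconn : IsConnected U)
    (A B w₁ w₂ : ℝ → ℝ)
    (hB : ∀ z ∈ U, DifferentiableAt ℝ B z)
    (hw₁ : ∀ z ∈ U, DifferentiableAt ℝ w₁ z)
    (hw₁' : ∀ z ∈ U, DifferentiableAt ℝ (deriv w₁) z)
    (hw₁'' : ∀ z ∈ U, DifferentiableAt ℝ (deriv (deriv w₁)) z)
    (hw₂ : ∀ z ∈ U, DifferentiableAt ℝ w₂ z)
    (hw₂' : ∀ z ∈ U, DifferentiableAt ℝ (deriv w₂) z)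
    (hw₂'' : ∀ z ∈ U, DifferentiableAt ℝ (deriv (deriv w₂)) z)
    (hode₁ : ∀ z ∈ U, deriv (deriv (deriv w₁)) z - 4 * B z * deriv w₁ z
      - 2 * (deriv B z + A z / 3) * w₁ z = 0)
    (hode₂ : ∀ z ∈ U, deriv (deriv (deriv w₂)) z - 4 * B z * deriv w₂ z
      - 2 * (deriv B z + A z / 3) * w₂ z = 0) :
    ∀ z ∈ U,
      deriv (deriv (deriv (fun t => w₁ t * deriv w₂ t - deriv w₁ t * w₂ t))) z
      - 4 * B z * deriv (fun t => w₁ t * deriv w₂ t - deriv w₁ t * w₂ t) z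
      - 2 * (deriv B z - A z / 3) * (w₁ z * deriv w₂ z - deriv w₁ z * w₂ z) = 0 := by
  set w : ℝ → ℝ := fun t => w₁ t * deriv w₂ t - deriv w₁ t * w₂ t with hw_def
  -- first derivative of w
  have hwd : ∀ t ∈ U, HasDerivAt w
      (w₁ t * deriv (deriv w₂) t - deriv (deriv w₁) t * w₂ t) t := by
    intro t ht
    have h := (((hw₁ t ht).hasDerivAt.mul (hw₂' t ht).hasDerivAt).sub
      ((hw₁' t ht).hasDerivAt.mul (hw₂ t ht).hasDerivAt))
    simp only [Pi.mul_def, Pi.sub_def] at h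
    refine h.congr_deriv ?_
    ring
  have hstep1 : ∀ t ∈ U, deriv w t
      = w₁ t * deriv (deriv w₂) t - deriv (deriv w₁) t * w₂ t := fun t ht =>
    (hwd t ht).deriv
  -- second derivative of w
  have hstep2 : ∀ t ∈ U, deriv (deriv w) t
      = 4 * B t * w t + (deriv w₁ t * deriv (deriv w₂) t
        - deriv (deriv w₁) t * deriv w₂ t) := by
    intro t ht
    have heq : deriv (deriv w) t
        = deriv (fun s => w₁ s * deriv (deriv w₂) s - deriv (deriv w₁) s * w₂ s) t := by
      apply Filter.EventuallyEq.deriv_eq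
      filter_upwards [hU.mem_nhds ht] with s hs using hstep1 s hs
    have h := (((hw₁ t ht).hasDerivAt.mul (hw₂'' t ht).hasDerivAt).sub
      ((hw₁'' t ht).hasDerivAt.mul (hw₂ t ht).hasDerivAt)).deriv
    simp only [Pi.mul_def, Pi.sub_def] at h
    rw [heq, h]
    have h1 := hode₁ t ht
    have h2 := hode₂ t ht
    simp only [hw_def]
    linear_combination w₁ t * h2 - w₂ t * h1
  -- third derivative
  intro z hz
  have hwdiff : DifferentiableAt ℝ w z := (hwd z hz).differentiableAt
  have heq3 : deriv (deriv (deriv w)) z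
      = deriv (fun s => 4 * B s * w s + (deriv w₁ s * deriv (deriv w₂) s
        - deriv (deriv w₁) s * deriv w₂ s)) z := by
    apply Filter.EventuallyEq.deriv_eq
    filter_upwards [hU.mem_nhds hz] with s hs using hstep2 s hs
  have h3 := ((((hB z hz).hasDerivAt.const_mul 4).mul (hwd z hz)).add
    (((hw₁' z hz).hasDerivAt.mul (hw₂'' z hz).hasDerivAt).sub
      ((hw₁'' z hz).hasDerivAt.mul (hw₂' z hz).hasDerivAt))).deriv
  simp only [Pi.mul_def, Pi.sub_def, Pi.add_def] at h3
  rw [heq3, h3, hstep1 z hz]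
  have h1 := hode₁ z hz
  have h2 := hode₂ z hz
  simp only [hw_def]
  linear_combination deriv w₁ z * h2 - deriv w₂ z * h1
end

section
/- Let U ⊆ ℝ be an open interval, B : U → ℝ differentiable, c a real constant, and let u₁, u₂ : U → ℝ be nonvanishing solutions of the Ermakov equation uᵢ'' = B·uᵢ + c/uᵢ³ (i = 1, 2) on U. Suppose u : U → ℝ is twice differentiable, nonvanishing on U, and satisfies u² = 2u₁·u₂·(u₁·u₂' - u₂·u₁') on U. Then there exists a real constant k such that u satisfies the Ermakov equation u'' = B·u + k/u³ on U. -/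
set_option maxHeartbeats 2000000

/-- If u₁, u₂ solve the Ermakov equation u'' = B·u + c/u³ and
u² = 2u₁u₂(u₁u₂' - u₂u₁'), then u solves an Ermakov equation u'' = B·u + k/u³
for some constant k. -/
theorem ermakov_backlund_same_constant
    (U : Set ℝ) (hU : IsOpen U) (hUconn : IsConnected U)
    (B : ℝ → ℝ) (c : ℝ) (u₁ u₂ u : ℝ → ℝ)
    (hB : ∀ z ∈ U, DifferentiableAt ℝ B z)
    (hu₁ : ∀ z ∈ U, DifferentiableAt ℝ u₁ z)
    (hu₁' : ∀ z ∈ U, DifferentiableAt ℝ (deriv u₁) z)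
    (hu₁ne : ∀ z ∈ U, u₁ z ≠ 0)
    (hode₁ : ∀ z ∈ U, deriv (deriv u₁) z = B z * u₁ z + c / (u₁ z) ^ 3)
    (hu₂ : ∀ z ∈ U, DifferentiableAt ℝ u₂ z)
    (hu₂' : ∀ z ∈ U, DifferentiableAt ℝ (deriv u₂) z)
    (hu₂ne : ∀ z ∈ U, u₂ z ≠ 0)
    (hode₂ : ∀ z ∈ U, deriv (deriv u₂) z = B z * u₂ z + c / (u₂ z) ^ 3)
    (hu : ∀ z ∈ U, DifferentiableAt ℝ u z)
    (hu' : ∀ z ∈ U, DifferentiableAt ℝ (deriv u) z)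
    (hune : ∀ z ∈ U, u z ≠ 0)
    (hsq : ∀ z ∈ U, (u z) ^ 2 = 2 * u₁ z * u₂ z * (u₁ z * deriv u₂ z - u₂ z * deriv u₁ z)) :
    ∃ k : ℝ, ∀ z ∈ U, deriv (deriv u) z = B z * u z + k / (u z) ^ 3 := by
  set g₁ : ℝ → ℝ := fun t =>
    (deriv u₁ t * u₂ t + u₁ t * deriv u₂ t) * (u₁ t * deriv u₂ t - u₂ t * deriv u₁ t)
      + c * ((u₁ t) ^ 2 / (u₂ t) ^ 2 - (u₂ t) ^ 2 / (u₁ t) ^ 2) with hg₁def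
  set J : ℝ → ℝ := fun t =>
    (u₁ t * deriv u₂ t - u₂ t * deriv u₁ t) ^ 2
      + c * ((u₁ t) ^ 2 / (u₂ t) ^ 2 + (u₂ t) ^ 2 / (u₁ t) ^ 2) with hJdef
  -- Step 1:  u·u' = g₁ on U
  have key1 : ∀ z ∈ U, u z * deriv u z = g₁ z := by
    intro z hz
    have h1 : HasDerivAt u₁ (deriv u₁ z) z := (hu₁ z hz).hasDerivAt
    have h2 : HasDerivAt u₂ (deriv u₂ z) z := (hu₂ z hz).hasDerivAt
    have h1' : HasDerivAt (deriv u₁) (B z * u₁ z + c / (u₁ z) ^ 3) z := by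
      have := (hu₁' z hz).hasDerivAt; rwa [hode₁ z hz] at this
    have h2' : HasDerivAt (deriv u₂) (B z * u₂ z + c / (u₂ z) ^ 3) z := by
      have := (hu₂' z hz).hasDerivAt; rwa [hode₂ z hz] at this
    have hW : HasDerivAt (fun t => u₁ t * deriv u₂ t - u₂ t * deriv u₁ t)
        (deriv u₁ z * deriv u₂ z + u₁ z * (B z * u₂ z + c / (u₂ z) ^ 3)
          - (deriv u₂ z * deriv u₁ z + u₂ z * (B z * u₁ z + c / (u₁ z) ^ 3))) z :=
      (h1.mul h2').sub (h2.mul h1')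
    have hP : HasDerivAt (fun t => 2 * u₁ t * u₂ t)
        (2 * deriv u₁ z * u₂ z + 2 * u₁ z * deriv u₂ z) z :=
      (h1.const_mul 2).mul h2
    have hg0 : HasDerivAt (fun t => 2 * u₁ t * u₂ t * (u₁ t * deriv u₂ t - u₂ t * deriv u₁ t))
        ((2 * deriv u₁ z * u₂ z + 2 * u₁ z * deriv u₂ z) *
            (u₁ z * deriv u₂ z - u₂ z * deriv u₁ z)
          + 2 * u₁ z * u₂ z *
            (deriv u₁ z * deriv u₂ z + u₁ z * (B z * u₂ z + c / (u₂ z) ^ 3)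
              - (deriv u₂ z * deriv u₁ z + u₂ z * (B z * u₁ z + c / (u₁ z) ^ 3)))) z :=
      hP.mul hW
    have hf0 : HasDerivAt (fun t => u t ^ 2) (2 * u z * deriv u z) z := by
      have := ((hu z hz).hasDerivAt).fun_pow 2
      simpa using this
    have hev : (fun t => u t ^ 2) =ᶠ[nhds z]
        (fun t => 2 * u₁ t * u₂ t * (u₁ t * deriv u₂ t - u₂ t * deriv u₁ t)) :=
      Filter.eventuallyEq_of_mem (hU.mem_nhds hz) (fun t ht => hsq t ht)
    have hd := hev.deriv_eq
    rw [hf0.deriv, hg0.deriv] at hd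
    have ha := hu₁ne z hz
    have hb := hu₂ne z hz
    have h2ab : (2:ℝ) * (u₁ z * u₂ z) ≠ 0 :=
      mul_ne_zero two_ne_zero (mul_ne_zero ha hb)
    simp only [hg₁def]
    refine mul_left_cancel₀ h2ab ?_
    field_simp at hd ⊢
    linear_combination hd
  -- Step 2:  u'^2 + u·u'' = (explicit derivative of g₁) on U
  have key2 : ∀ z ∈ U, deriv u z ^ 2 + u z * deriv (deriv u) z =
      ((B z * u₁ z + c / (u₁ z) ^ 3) * u₂ z + 2 * deriv u₁ z * deriv u₂ z
          + u₁ z * (B z * u₂ z + c / (u₂ z) ^ 3)) *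
        (u₁ z * deriv u₂ z - u₂ z * deriv u₁ z)
      + (deriv u₁ z * u₂ z + u₁ z * deriv u₂ z) *
        (deriv u₁ z * deriv u₂ z + u₁ z * (B z * u₂ z + c / (u₂ z) ^ 3)
          - (deriv u₂ z * deriv u₁ z + u₂ z * (B z * u₁ z + c / (u₁ z) ^ 3)))
      + c * ((2 * u₁ z * deriv u₁ z * (u₂ z) ^ 2
              - (u₁ z) ^ 2 * (2 * u₂ z * deriv u₂ z)) / ((u₂ z) ^ 2) ^ 2
            - (2 * u₂ z * deriv u₂ z * (u₁ z) ^ 2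
              - (u₂ z) ^ 2 * (2 * u₁ z * deriv u₁ z)) / ((u₁ z) ^ 2) ^ 2) := by
    intro z hz
    have h1 : HasDerivAt u₁ (deriv u₁ z) z := (hu₁ z hz).hasDerivAt
    have h2 : HasDerivAt u₂ (deriv u₂ z) z := (hu₂ z hz).hasDerivAt
    have h1' : HasDerivAt (deriv u₁) (B z * u₁ z + c / (u₁ z) ^ 3) z := by
      have := (hu₁' z hz).hasDerivAt; rwa [hode₁ z hz] at this
    have h2' : HasDerivAt (deriv u₂) (B z * u₂ z + c / (u₂ z) ^ 3) z := by
      have := (hu₂' z hz).hasDerivAt; rwa [hode₂ z hz] at this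
    have ha := hu₁ne z hz
    have hb := hu₂ne z hz
    have ha2 : (u₁ z) ^ 2 ≠ 0 := pow_ne_zero _ ha
    have hb2 : (u₂ z) ^ 2 ≠ 0 := pow_ne_zero _ hb
    have hW : HasDerivAt (fun t => u₁ t * deriv u₂ t - u₂ t * deriv u₁ t)
        (deriv u₁ z * deriv u₂ z + u₁ z * (B z * u₂ z + c / (u₂ z) ^ 3)
          - (deriv u₂ z * deriv u₁ z + u₂ z * (B z * u₁ z + c / (u₁ z) ^ 3))) z :=
      (h1.mul h2').sub (h2.mul h1')
    have hQ : HasDerivAt (fun t => deriv u₁ t * u₂ t + u₁ t * deriv u₂ t)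
        ((B z * u₁ z + c / (u₁ z) ^ 3) * u₂ z + deriv u₁ z * deriv u₂ z
          + (deriv u₁ z * deriv u₂ z + u₁ z * (B z * u₂ z + c / (u₂ z) ^ 3))) z :=
      (h1'.mul h2).add (h1.mul h2')
    have ha2' : HasDerivAt (fun t => (u₁ t) ^ 2) (2 * u₁ z * deriv u₁ z) z := by
      have := h1.fun_pow 2; simpa [mul_comm, mul_assoc] using this
    have hb2' : HasDerivAt (fun t => (u₂ t) ^ 2) (2 * u₂ z * deriv u₂ z) z := by
      have := h2.fun_pow 2; simpa [mul_comm, mul_assoc] using this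
    have hq1 : HasDerivAt (fun t => (u₁ t) ^ 2 / (u₂ t) ^ 2)
        ((2 * u₁ z * deriv u₁ z * (u₂ z) ^ 2
          - (u₁ z) ^ 2 * (2 * u₂ z * deriv u₂ z)) / ((u₂ z) ^ 2) ^ 2) z :=
      ha2'.div hb2' hb2
    have hq2 : HasDerivAt (fun t => (u₂ t) ^ 2 / (u₁ t) ^ 2)
        ((2 * u₂ z * deriv u₂ z * (u₁ z) ^ 2
          - (u₂ z) ^ 2 * (2 * u₁ z * deriv u₁ z)) / ((u₁ z) ^ 2) ^ 2) z :=
      hb2'.div ha2' ha2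
    have hg1 : HasDerivAt g₁
        (((B z * u₁ z + c / (u₁ z) ^ 3) * u₂ z + deriv u₁ z * deriv u₂ z
            + (deriv u₁ z * deriv u₂ z + u₁ z * (B z * u₂ z + c / (u₂ z) ^ 3))) *
          (u₁ z * deriv u₂ z - u₂ z * deriv u₁ z)
        + (deriv u₁ z * u₂ z + u₁ z * deriv u₂ z) *
          (deriv u₁ z * deriv u₂ z + u₁ z * (B z * u₂ z + c / (u₂ z) ^ 3)
            - (deriv u₂ z * deriv u₁ z + u₂ z * (B z * u₁ z + c / (u₁ z) ^ 3)))
        + c * ((2 * u₁ z * deriv u₁ z * (u₂ z) ^ 2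
                - (u₁ z) ^ 2 * (2 * u₂ z * deriv u₂ z)) / ((u₂ z) ^ 2) ^ 2
              - (2 * u₂ z * deriv u₂ z * (u₁ z) ^ 2
                - (u₂ z) ^ 2 * (2 * u₁ z * deriv u₁ z)) / ((u₁ z) ^ 2) ^ 2)) z :=
      (hQ.mul hW).add ((hq1.sub hq2).const_mul c)
    have hf1 : HasDerivAt (fun t => u t * deriv u t)
        (deriv u z * deriv u z + u z * deriv (deriv u) z) z :=
      (hu z hz).hasDerivAt.mul (hu' z hz).hasDerivAt
    have hev : (fun t => u t * deriv u t) =ᶠ[nhds z] g₁ :=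
      Filter.eventuallyEq_of_mem (hU.mem_nhds hz) (fun t ht => key1 t ht)
    have hd := hev.deriv_eq
    rw [hf1.deriv, hg1.deriv] at hd
    linear_combination hd
  -- Step 3: J is constant on U
  have hJconst : ∀ z ∈ U, ∀ z' ∈ U, J z = J z' := by
    have hJderiv : ∀ z ∈ U, HasDerivAt J 0 z := by
      intro z hz
      have h1 : HasDerivAt u₁ (deriv u₁ z) z := (hu₁ z hz).hasDerivAt
      have h2 : HasDerivAt u₂ (deriv u₂ z) z := (hu₂ z hz).hasDerivAt
      have h1' : HasDerivAt (deriv u₁) (B z * u₁ z + c / (u₁ z) ^ 3) z := by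
        have := (hu₁' z hz).hasDerivAt; rwa [hode₁ z hz] at this
      have h2' : HasDerivAt (deriv u₂) (B z * u₂ z + c / (u₂ z) ^ 3) z := by
        have := (hu₂' z hz).hasDerivAt; rwa [hode₂ z hz] at this
      have ha := hu₁ne z hz
      have hb := hu₂ne z hz
      have ha2 : (u₁ z) ^ 2 ≠ 0 := pow_ne_zero _ ha
      have hb2 : (u₂ z) ^ 2 ≠ 0 := pow_ne_zero _ hb
      have hW : HasDerivAt (fun t => u₁ t * deriv u₂ t - u₂ t * deriv u₁ t)
          (deriv u₁ z * deriv u₂ z + u₁ z * (B z * u₂ z + c / (u₂ z) ^ 3)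
            - (deriv u₂ z * deriv u₁ z + u₂ z * (B z * u₁ z + c / (u₁ z) ^ 3))) z :=
        (h1.mul h2').sub (h2.mul h1')
      have hW2 : HasDerivAt (fun t => (u₁ t * deriv u₂ t - u₂ t * deriv u₁ t) ^ 2)
          (2 * (u₁ z * deriv u₂ z - u₂ z * deriv u₁ z) *
            (deriv u₁ z * deriv u₂ z + u₁ z * (B z * u₂ z + c / (u₂ z) ^ 3)
              - (deriv u₂ z * deriv u₁ z + u₂ z * (B z * u₁ z + c / (u₁ z) ^ 3)))) z := by
        have := hW.fun_pow 2; simpa [mul_comm, mul_assoc] using this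
      have ha2' : HasDerivAt (fun t => (u₁ t) ^ 2) (2 * u₁ z * deriv u₁ z) z := by
        have := h1.fun_pow 2; simpa [mul_comm, mul_assoc] using this
      have hb2' : HasDerivAt (fun t => (u₂ t) ^ 2) (2 * u₂ z * deriv u₂ z) z := by
        have := h2.fun_pow 2; simpa [mul_comm, mul_assoc] using this
      have hq1 : HasDerivAt (fun t => (u₁ t) ^ 2 / (u₂ t) ^ 2)
          ((2 * u₁ z * deriv u₁ z * (u₂ z) ^ 2
            - (u₁ z) ^ 2 * (2 * u₂ z * deriv u₂ z)) / ((u₂ z) ^ 2) ^ 2) z :=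
        ha2'.div hb2' hb2
      have hq2 : HasDerivAt (fun t => (u₂ t) ^ 2 / (u₁ t) ^ 2)
          ((2 * u₂ z * deriv u₂ z * (u₁ z) ^ 2
            - (u₂ z) ^ 2 * (2 * u₁ z * deriv u₁ z)) / ((u₁ z) ^ 2) ^ 2) z :=
        hb2'.div ha2' ha2
      have hJ' : HasDerivAt J
          (2 * (u₁ z * deriv u₂ z - u₂ z * deriv u₁ z) *
            (deriv u₁ z * deriv u₂ z + u₁ z * (B z * u₂ z + c / (u₂ z) ^ 3)
              - (deriv u₂ z * deriv u₁ z + u₂ z * (B z * u₁ z + c / (u₁ z) ^ 3)))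
          + c * ((2 * u₁ z * deriv u₁ z * (u₂ z) ^ 2
                - (u₁ z) ^ 2 * (2 * u₂ z * deriv u₂ z)) / ((u₂ z) ^ 2) ^ 2
              + (2 * u₂ z * deriv u₂ z * (u₁ z) ^ 2
                - (u₂ z) ^ 2 * (2 * u₁ z * deriv u₁ z)) / ((u₁ z) ^ 2) ^ 2)) z :=
        hW2.add ((hq1.add hq2).const_mul c)
      have hzero : (2 * (u₁ z * deriv u₂ z - u₂ z * deriv u₁ z) *
            (deriv u₁ z * deriv u₂ z + u₁ z * (B z * u₂ z + c / (u₂ z) ^ 3)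
              - (deriv u₂ z * deriv u₁ z + u₂ z * (B z * u₁ z + c / (u₁ z) ^ 3)))
          + c * ((2 * u₁ z * deriv u₁ z * (u₂ z) ^ 2
                - (u₁ z) ^ 2 * (2 * u₂ z * deriv u₂ z)) / ((u₂ z) ^ 2) ^ 2
              + (2 * u₂ z * deriv u₂ z * (u₁ z) ^ 2
                - (u₂ z) ^ 2 * (2 * u₁ z * deriv u₁ z)) / ((u₁ z) ^ 2) ^ 2)) = 0 := by
        field_simp
        ring
      rw [hzero] at hJ'
      exact hJ'
    intro z hz z' hz'
    have hconv : Convex ℝ U := hUconn.isPreconnected.ordConnected.convex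
    refine hconv.is_const_of_fderivWithin_eq_zero
      (fun x hx => ((hJderiv x hx).differentiableAt).differentiableWithinAt) ?_ hz hz'
    intro x hx
    have hfd : HasFDerivAt J ((1 : ℝ →L[ℝ] ℝ).smulRight 0) x := (hJderiv x hx).hasFDerivAt
    rw [hfd.hasFDerivWithinAt.fderivWithin (hU.uniqueDiffWithinAt hx)]
    ext; simp
  -- Step 4: conclude with k = 4c² - (J z₀)²
  obtain ⟨z₀, hz₀⟩ := hUconn.nonempty
  refine ⟨4 * c ^ 2 - (J z₀) ^ 2, fun z hz => ?_⟩
  have ha := hu₁ne z hz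
  have hb := hu₂ne z hz
  have hv := hune z hz
  have hv3 : u z ^ 3 ≠ 0 := pow_ne_zero _ hv
  have hm : J z₀ = J z := (hJconst z hz z₀ hz₀).symm
  have hJval : J z = (u₁ z * deriv u₂ z - u₂ z * deriv u₁ z) ^ 2
      + c * ((u₁ z) ^ 2 / (u₂ z) ^ 2 + (u₂ z) ^ 2 / (u₁ z) ^ 2) := by
    rw [hJdef]
  have hmain : u z ^ 3 * deriv (deriv u) z =
      u z ^ 2 * (deriv u z ^ 2 + u z * deriv (deriv u) z) - (u z * deriv u z) ^ 2 := by
    ring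
  rw [key2 z hz, key1 z hz, hsq z hz] at hmain
  have hgoal : u z ^ 3 * deriv (deriv u) z = B z * u z ^ 4
      + (4 * c ^ 2 - ((u₁ z * deriv u₂ z - u₂ z * deriv u₁ z) ^ 2
          + c * ((u₁ z) ^ 2 / (u₂ z) ^ 2 + (u₂ z) ^ 2 / (u₁ z) ^ 2)) ^ 2) := by
    rw [show u z ^ 4 = (u z ^ 2) ^ 2 by ring, hsq z hz, hmain, hg₁def]
    field_simp
    ring
  rw [hm]
  field_simp
  rw [hJval]
  linear_combination hgoal
end

section
/- Let U ⊆ ℝ be an open interval, B : U → ℝ differentiable, c, k real constants, and let u₁, u₂ : U → ℝ be nonvanishing solutions of the Ermakov equation uᵢ'' = B·uᵢ + c/uᵢ³ (i = 1, 2) on U. Suppose u : U → ℝ is twice differentiable, nonvanishing on U, satisfies u² = 2u₁·u₂·(u₁·u₂' - u₂·u₁') on U, and satisfies the Ermakov equation u'' = B·u + k/u³ on U. Then there exists a real constant a with k = -a(a + 4c) such that u⁴/4 + c·(u₁² - u₂²)² - a·u₁²·u₂² = 0 holds identically on U. -/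
/-- Pure algebra: given the first and second derivative relations for `u²`,
the Ermakov ODE for `u` forces `k = -a(a+4c)` where `a` is the invariant. -/
private lemma ermakov_key_alg (x y p q b c u u' u'' k : ℝ)
    (hx : x ≠ 0) (hy : y ≠ 0) (hu : u ≠ 0)
    (hsq : u ^ 2 = 2 * x * y * (x * q - y * p))
    (eq1 : 2 * (u * u') =
      2 * (p * y + x * q) * (x * q - y * p) + 2 * c * (x ^ 2 / y ^ 2 - y ^ 2 / x ^ 2))
    (eq2 : 2 * (u' * u' + u * u'') =
      2 * ((b * x + c / x ^ 3) * y + 2 * (p * q) + x * (b * y + c / y ^ 3)) * (x * q - y * p)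
        + 2 * (p * y + x * q) * (c * (x / y ^ 3 - y / x ^ 3))
        + 2 * c * (2 * x * p / y ^ 2 - 2 * x ^ 2 * q / y ^ 3
            - (2 * y * q / x ^ 2 - 2 * y ^ 2 * p / x ^ 3)))
    (hode : u'' = b * u + k / u ^ 3) :
    k = -((x * q - y * p) ^ 2 + c * (x ^ 2 - y ^ 2) ^ 2 / (x ^ 2 * y ^ 2)) *
        (((x * q - y * p) ^ 2 + c * (x ^ 2 - y ^ 2) ^ 2 / (x ^ 2 * y ^ 2)) + 4 * c) := by
  have h1 : u' * u' * u ^ 2 = (2 * (u * u')) ^ 2 / 4 := by ring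
  rw [eq1] at h1
  have h3 : u * u'' * u ^ 2 = (2 * (u' * u' + u * u'')) * u ^ 2 / 2 - u' * u' * u ^ 2 := by
    ring
  rw [eq2, h1, hode] at h3
  have h4 : (b * u + k / u ^ 3) * u ^ 3 = b * u ^ 4 + k := by
    field_simp
  have h5 : u * (b * u + k / u ^ 3) * u ^ 2 = b * u ^ 4 + k := by
    rw [← h4]; ring
  rw [h5] at h3
  have h6 : u ^ 4 = (2 * x * y * (x * q - y * p)) ^ 2 := by
    rw [show u ^ 4 = (u ^ 2) ^ 2 by ring, hsq]
  rw [h6, hsq] at h3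
  have key : (2 * ((b * x + c / x ^ 3) * y + 2 * (p * q) + x * (b * y + c / y ^ 3)) *
            (x * q - y * p) +
          2 * (p * y + x * q) * (c * (x / y ^ 3 - y / x ^ 3)) +
        2 * c * (2 * x * p / y ^ 2 - 2 * x ^ 2 * q / y ^ 3
            - (2 * y * q / x ^ 2 - 2 * y ^ 2 * p / x ^ 3))) *
          (2 * x * y * (x * q - y * p)) / 2 -
        (2 * (p * y + x * q) * (x * q - y * p) +
          2 * c * (x ^ 2 / y ^ 2 - y ^ 2 / x ^ 2)) ^ 2 / 4 -
        b * (2 * x * y * (x * q - y * p)) ^ 2 =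
      -((x * q - y * p) ^ 2 + c * (x ^ 2 - y ^ 2) ^ 2 / (x ^ 2 * y ^ 2)) *
        (((x * q - y * p) ^ 2 + c * (x ^ 2 - y ^ 2) ^ 2 / (x ^ 2 * y ^ 2)) + 4 * c) := by
    field_simp
    ring
  linarith [key, h3]

set_option maxHeartbeats 1600000 in
/-- Under the hypotheses of the Ermakov Bäcklund transformation with equal
constants c, the solutions satisfy the polynomial relation
u⁴/4 + c(u₁² - u₂²)² - a·u₁²u₂² = 0 with k = -a(a + 4c). -/
theorem ermakov_polynomial_relation_equal_constants
    (U : Set ℝ) (hU : IsOpen U) (hUconn : IsConnected U)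
    (B : ℝ → ℝ) (c k : ℝ) (u₁ u₂ u : ℝ → ℝ)
    (hB : ∀ z ∈ U, DifferentiableAt ℝ B z)
    (hu₁ : ∀ z ∈ U, DifferentiableAt ℝ u₁ z)
    (hu₁' : ∀ z ∈ U, DifferentiableAt ℝ (deriv u₁) z)
    (hu₁ne : ∀ z ∈ U, u₁ z ≠ 0)
    (hode₁ : ∀ z ∈ U, deriv (deriv u₁) z = B z * u₁ z + c / (u₁ z) ^ 3)
    (hu₂ : ∀ z ∈ U, DifferentiableAt ℝ u₂ z)
    (hu₂' : ∀ z ∈ U, DifferentiableAt ℝ (deriv u₂) z)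
    (hu₂ne : ∀ z ∈ U, u₂ z ≠ 0)
    (hode₂ : ∀ z ∈ U, deriv (deriv u₂) z = B z * u₂ z + c / (u₂ z) ^ 3)
    (hu : ∀ z ∈ U, DifferentiableAt ℝ u z)
    (hu' : ∀ z ∈ U, DifferentiableAt ℝ (deriv u) z)
    (hune : ∀ z ∈ U, u z ≠ 0)
    (hsq : ∀ z ∈ U, (u z) ^ 2 = 2 * u₁ z * u₂ z * (u₁ z * deriv u₂ z - u₂ z * deriv u₁ z))
    (hode : ∀ z ∈ U, deriv (deriv u) z = B z * u z + k / (u z) ^ 3) :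
    ∃ a : ℝ, k = -a * (a + 4 * c) ∧
      ∀ z ∈ U, (u z) ^ 4 / 4 + c * ((u₁ z) ^ 2 - (u₂ z) ^ 2) ^ 2
        - a * (u₁ z) ^ 2 * (u₂ z) ^ 2 = 0 := by
  obtain ⟨z₀, hz₀⟩ := hUconn.nonempty
  have hconv : Convex ℝ U := hUconn.isPreconnected.ordConnected.convex
  -- derivative of the Wronskian-type expression
  have hW : ∀ z ∈ U, HasDerivAt (fun t => u₁ t * deriv u₂ t - u₂ t * deriv u₁ t)
      ((deriv u₁ z * deriv u₂ z + u₁ z * (B z * u₂ z + c / u₂ z ^ 3))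
        - (deriv u₂ z * deriv u₁ z + u₂ z * (B z * u₁ z + c / u₁ z ^ 3))) z := by
    intro z hz
    have hp : HasDerivAt (deriv u₁) (B z * u₁ z + c / u₁ z ^ 3) z := by
      have h := (hu₁' z hz).hasDerivAt
      rwa [hode₁ z hz] at h
    have hq : HasDerivAt (deriv u₂) (B z * u₂ z + c / u₂ z ^ 3) z := by
      have h := (hu₂' z hz).hasDerivAt
      rwa [hode₂ z hz] at h
    exact ((hu₁ z hz).hasDerivAt.mul hq).sub ((hu₂ z hz).hasDerivAt.mul hp)
  -- the invariant G has zero derivative on U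
  have hG : ∀ z ∈ U, HasDerivAt (fun t => (u₁ t * deriv u₂ t - u₂ t * deriv u₁ t) ^ 2
      + c * ((u₁ t) ^ 2 - (u₂ t) ^ 2) ^ 2 / ((u₁ t) ^ 2 * (u₂ t) ^ 2)) 0 z := by
    intro z hz
    have hx := (hu₁ z hz).hasDerivAt
    have hy := (hu₂ z hz).hasDerivAt
    have hx0 := hu₁ne z hz
    have hy0 := hu₂ne z hz
    have hD : ((u₁ z) ^ 2 * (u₂ z) ^ 2) ≠ 0 :=
      mul_ne_zero (pow_ne_zero 2 hx0) (pow_ne_zero 2 hy0)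
    have h := ((hW z hz).fun_pow 2).fun_add
      (((((hx.fun_pow 2).fun_sub (hy.fun_pow 2)).fun_pow 2).const_mul c).fun_div ((hx.fun_pow 2).fun_mul (hy.fun_pow 2)) hD)
    refine h.congr_deriv ?_
    push_cast
    field_simp
    ring
  -- G is constant on U
  have hconst : ∀ z ∈ U, (u₁ z * deriv u₂ z - u₂ z * deriv u₁ z) ^ 2
      + c * ((u₁ z) ^ 2 - (u₂ z) ^ 2) ^ 2 / ((u₁ z) ^ 2 * (u₂ z) ^ 2)
      = (u₁ z₀ * deriv u₂ z₀ - u₂ z₀ * deriv u₁ z₀) ^ 2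
      + c * ((u₁ z₀) ^ 2 - (u₂ z₀) ^ 2) ^ 2 / ((u₁ z₀) ^ 2 * (u₂ z₀) ^ 2) := by
    intro z hz
    exact hconv.is_const_of_fderivWithin_eq_zero
      (fun t ht => ((hG t ht).differentiableAt).differentiableWithinAt)
      (fun t ht => by
        rw [fderivWithin_of_isOpen hU ht, ((hG t ht).hasFDerivAt).fderiv]
        ext w
        simp) hz hz₀
  -- derivative of 2 u₁ u₂ W
  have hE1 : ∀ z ∈ U, HasDerivAt
      (fun t => 2 * u₁ t * u₂ t * (u₁ t * deriv u₂ t - u₂ t * deriv u₁ t))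
      (2 * (deriv u₁ z * u₂ z + u₁ z * deriv u₂ z)
          * (u₁ z * deriv u₂ z - u₂ z * deriv u₁ z)
        + 2 * c * ((u₁ z) ^ 2 / (u₂ z) ^ 2 - (u₂ z) ^ 2 / (u₁ z) ^ 2)) z := by
    intro z hz
    have hx := (hu₁ z hz).hasDerivAt
    have hy := (hu₂ z hz).hasDerivAt
    have hx0 := hu₁ne z hz
    have hy0 := hu₂ne z hz
    have h := ((hx.const_mul 2).fun_mul hy).fun_mul (hW z hz)
    refine h.congr_deriv ?_
    field_simp
    ring
  -- first derivative relation for u²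
  have heq1 : ∀ z ∈ U, 2 * (u z * deriv u z)
      = 2 * (deriv u₁ z * u₂ z + u₁ z * deriv u₂ z)
          * (u₁ z * deriv u₂ z - u₂ z * deriv u₁ z)
        + 2 * c * ((u₁ z) ^ 2 / (u₂ z) ^ 2 - (u₂ z) ^ 2 / (u₁ z) ^ 2) := by
    intro z hz
    have hv2 : HasDerivAt (fun t => (u t) ^ 2) (2 * (u z * deriv u z)) z := by
      have h := (hu z hz).hasDerivAt.fun_pow 2
      refine h.congr_deriv ?_
      push_cast
      ring
    have hv1 := (hE1 z hz).congr_of_eventuallyEq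
      (Filter.eventuallyEq_of_mem (hU.mem_nhds hz) (fun t ht => hsq t ht))
    exact hv2.unique hv1
  -- second derivative relation at z₀
  have hx := (hu₁ z₀ hz₀).hasDerivAt
  have hy := (hu₂ z₀ hz₀).hasDerivAt
  have hp : HasDerivAt (deriv u₁) (B z₀ * u₁ z₀ + c / u₁ z₀ ^ 3) z₀ := by
    have h := (hu₁' z₀ hz₀).hasDerivAt
    rwa [hode₁ z₀ hz₀] at h
  have hq : HasDerivAt (deriv u₂) (B z₀ * u₂ z₀ + c / u₂ z₀ ^ 3) z₀ := by
    have h := (hu₂' z₀ hz₀).hasDerivAt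
    rwa [hode₂ z₀ hz₀] at h
  have hx0 := hu₁ne z₀ hz₀
  have hy0 := hu₂ne z₀ hz₀
  have hu0 := hune z₀ hz₀
  have hE2 : HasDerivAt
      (fun t => 2 * (deriv u₁ t * u₂ t + u₁ t * deriv u₂ t)
          * (u₁ t * deriv u₂ t - u₂ t * deriv u₁ t)
        + 2 * c * ((u₁ t) ^ 2 / (u₂ t) ^ 2 - (u₂ t) ^ 2 / (u₁ t) ^ 2))
      (2 * ((B z₀ * u₁ z₀ + c / u₁ z₀ ^ 3) * u₂ z₀ + 2 * (deriv u₁ z₀ * deriv u₂ z₀)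
            + u₁ z₀ * (B z₀ * u₂ z₀ + c / u₂ z₀ ^ 3))
          * (u₁ z₀ * deriv u₂ z₀ - u₂ z₀ * deriv u₁ z₀)
        + 2 * (deriv u₁ z₀ * u₂ z₀ + u₁ z₀ * deriv u₂ z₀)
          * (c * (u₁ z₀ / u₂ z₀ ^ 3 - u₂ z₀ / u₁ z₀ ^ 3))
        + 2 * c * (2 * u₁ z₀ * deriv u₁ z₀ / u₂ z₀ ^ 2
            - 2 * u₁ z₀ ^ 2 * deriv u₂ z₀ / u₂ z₀ ^ 3
            - (2 * u₂ z₀ * deriv u₂ z₀ / u₁ z₀ ^ 2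
              - 2 * u₂ z₀ ^ 2 * deriv u₁ z₀ / u₁ z₀ ^ 3))) z₀ := by
    have h := ((((hp.fun_mul hy).fun_add (hx.fun_mul hq)).const_mul 2).fun_mul (hW z₀ hz₀)).fun_add
      ((((hx.fun_pow 2).fun_div (hy.fun_pow 2) (pow_ne_zero 2 hy0)).fun_sub
        ((hy.fun_pow 2).fun_div (hx.fun_pow 2) (pow_ne_zero 2 hx0))).const_mul (2 * c))
    refine h.congr_deriv ?_
    push_cast
    field_simp
    ring
  have hg2 : HasDerivAt (fun t => 2 * (u t * deriv u t))
      (2 * (deriv u z₀ * deriv u z₀ + u z₀ * deriv (deriv u) z₀)) z₀ :=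
    ((hu z₀ hz₀).hasDerivAt.mul (hu' z₀ hz₀).hasDerivAt).const_mul 2
  have hg1 := hE2.congr_of_eventuallyEq
    (Filter.eventuallyEq_of_mem (hU.mem_nhds hz₀) (fun t ht => heq1 t ht))
  have eq2 := hg2.unique hg1
  refine ⟨(u₁ z₀ * deriv u₂ z₀ - u₂ z₀ * deriv u₁ z₀) ^ 2
      + c * ((u₁ z₀) ^ 2 - (u₂ z₀) ^ 2) ^ 2 / ((u₁ z₀) ^ 2 * (u₂ z₀) ^ 2), ?_, ?_⟩
  · exact ermakov_key_alg (u₁ z₀) (u₂ z₀) (deriv u₁ z₀) (deriv u₂ z₀) (B z₀) c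
      (u z₀) (deriv u z₀) (deriv (deriv u) z₀) k hx0 hy0 hu0
      (hsq z₀ hz₀) (heq1 z₀ hz₀) eq2 (hode z₀ hz₀)
  · intro z hz
    have hc := hconst z hz
    have hx0' := hu₁ne z hz
    have hy0' := hu₂ne z hz
    rw [← hc, show (u z) ^ 4 = ((u z) ^ 2) ^ 2 by ring, hsq z hz]
    field_simp
    ring
end

section
/- Let U ⊆ ℝ be an open interval, B : U → ℝ differentiable, c₁, c₂ real constants, and let u₁, u₂ : U → ℝ be nonvanishing solutions of the Ermakov equations uᵢ'' = B·uᵢ + cᵢ/uᵢ³ (i = 1, 2) on U. Suppose u : U → ℝ is twice differentiable, nonvanishing on U, and satisfies u² = 2u₁·u₂·(u₁·u₂' - u₂·u₁') on U. Then there exists a real constant k such that u satisfies the Ermakov equation u'' = B·u + k/u³ on U and the polynomial relation u⁸/16 + ((c₁·u₂⁴ + c₂·u₁⁴)/2)·u⁴ + (c₁·u₂⁴ - c₂·u₁⁴)² + k·u₁⁴·u₂⁴ = 0 holds identically on U. -/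
set_option maxHeartbeats 1600000

/-- Ermakov Bäcklund transformation with different constants c₁, c₂ and the
polynomial relation u⁸/16 + ((c₁u₂⁴ + c₂u₁⁴)/2)u⁴ + (c₁u₂⁴ - c₂u₁⁴)² + k·u₁⁴u₂⁴ = 0. -/
theorem ermakov_backlund_different_constants
    (U : Set ℝ) (hU : IsOpen U) (hUconn : IsConnected U)
    (B : ℝ → ℝ) (c₁ c₂ : ℝ) (u₁ u₂ u : ℝ → ℝ)
    (hB : ∀ z ∈ U, DifferentiableAt ℝ B z)
    (hu₁ : ∀ z ∈ U, DifferentiableAt ℝ u₁ z)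
    (hu₁' : ∀ z ∈ U, DifferentiableAt ℝ (deriv u₁) z)
    (hu₁ne : ∀ z ∈ U, u₁ z ≠ 0)
    (hode₁ : ∀ z ∈ U, deriv (deriv u₁) z = B z * u₁ z + c₁ / (u₁ z) ^ 3)
    (hu₂ : ∀ z ∈ U, DifferentiableAt ℝ u₂ z)
    (hu₂' : ∀ z ∈ U, DifferentiableAt ℝ (deriv u₂) z)
    (hu₂ne : ∀ z ∈ U, u₂ z ≠ 0)
    (hode₂ : ∀ z ∈ U, deriv (deriv u₂) z = B z * u₂ z + c₂ / (u₂ z) ^ 3)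
    (hu : ∀ z ∈ U, DifferentiableAt ℝ u z)
    (hu' : ∀ z ∈ U, DifferentiableAt ℝ (deriv u) z)
    (hune : ∀ z ∈ U, u z ≠ 0)
    (hsq : ∀ z ∈ U, (u z) ^ 2 = 2 * u₁ z * u₂ z * (u₁ z * deriv u₂ z - u₂ z * deriv u₁ z)) :
    ∃ k : ℝ,
      (∀ z ∈ U, deriv (deriv u) z = B z * u z + k / (u z) ^ 3) ∧
      (∀ z ∈ U, (u z) ^ 8 / 16
        + (c₁ * (u₂ z) ^ 4 + c₂ * (u₁ z) ^ 4) / 2 * (u z) ^ 4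
        + (c₁ * (u₂ z) ^ 4 - c₂ * (u₁ z) ^ 4) ^ 2
        + k * (u₁ z) ^ 4 * (u₂ z) ^ 4 = 0) := by
  obtain ⟨x₀, hx₀⟩ := hUconn.nonempty
  have hWd : ∀ z ∈ U, HasDerivAt (fun y => u₁ y * deriv u₂ y - u₂ y * deriv u₁ y)
      (c₂ * u₁ z / u₂ z ^ 3 - c₁ * u₂ z / u₁ z ^ 3) z := by
    intro z hz
    have h := ((hu₁ z hz).hasDerivAt.mul (hu₂' z hz).hasDerivAt).sub
      ((hu₂ z hz).hasDerivAt.mul (hu₁' z hz).hasDerivAt)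
    refine h.congr_deriv ?_
    rw [hode₁ z hz, hode₂ z hz]
    have ha := hu₁ne z hz
    have hb := hu₂ne z hz
    field_simp
    ring
  have hSd : ∀ z ∈ U, HasDerivAt (fun y =>
      (u₁ y * deriv u₂ y - u₂ y * deriv u₁ y) ^ 2
        + c₁ * u₂ y ^ 2 / u₁ y ^ 2 + c₂ * u₁ y ^ 2 / u₂ y ^ 2) 0 z := by
    intro z hz
    have h1 := (hWd z hz).pow 2
    have h2 := (((hu₂ z hz).hasDerivAt.pow 2).const_mul c₁).div
      ((hu₁ z hz).hasDerivAt.pow 2) (pow_ne_zero 2 (hu₁ne z hz))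
    have h3 := (((hu₁ z hz).hasDerivAt.pow 2).const_mul c₂).div
      ((hu₂ z hz).hasDerivAt.pow 2) (pow_ne_zero 2 (hu₂ne z hz))
    have h := (h1.add h2).add h3
    refine h.congr_deriv ?_
    push_cast
    have ha := hu₁ne z hz
    have hb := hu₂ne z hz
    simp only [Pi.mul_apply, Pi.pow_apply, Pi.add_apply]
    field_simp
    ring
  have hconv : Convex ℝ U := hUconn.isPreconnected.ordConnected.convex
  have hconst : ∀ z ∈ U, ((u₁ z * deriv u₂ z - u₂ z * deriv u₁ z) ^ 2 + c₁ * u₂ z ^ 2 / u₁ z ^ 2 + c₂ * u₁ z ^ 2 / u₂ z ^ 2) = ((u₁ x₀ * deriv u₂ x₀ - u₂ x₀ * deriv u₁ x₀) ^ 2 + c₁ * u₂ x₀ ^ 2 / u₁ x₀ ^ 2 + c₂ * u₁ x₀ ^ 2 / u₂ x₀ ^ 2) := by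
    intro z hz
    exact hconv.is_const_of_fderivWithin_eq_zero
      (fun y hy => (hSd y hy).differentiableAt.differentiableWithinAt)
      (fun y hy => by
        rw [fderivWithin_of_isOpen hU hy, (hSd y hy).hasFDerivAt.fderiv]
        ext t; simp) hz hx₀
  have hphi1 : ∀ z ∈ U, u z * deriv u z
      = (deriv u₁ z * u₂ z + u₁ z * deriv u₂ z) * (u₁ z * deriv u₂ z - u₂ z * deriv u₁ z)
        + c₂ * u₁ z ^ 2 / u₂ z ^ 2 - c₁ * u₂ z ^ 2 / u₁ z ^ 2 := by
    intro z hz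
    have hg := (hu z hz).hasDerivAt.pow 2
    have hh := (((hu₁ z hz).hasDerivAt.const_mul (2:ℝ)).mul (hu₂ z hz).hasDerivAt).mul (hWd z hz)
    have hev : (fun y => (u y) ^ 2)
        =ᶠ[nhds z] (fun y => 2 * u₁ y * u₂ y * (u₁ y * deriv u₂ y - u₂ y * deriv u₁ y)) :=
      Filter.eventuallyEq_of_mem (hU.mem_nhds hz) (fun y hy => hsq y hy)
    have hg2 := hh.congr_of_eventuallyEq hev
    have hg2' : HasDerivAt (fun y => (u y) ^ 2)
        (2 * ((deriv u₁ z * u₂ z + u₁ z * deriv u₂ z) * (u₁ z * deriv u₂ z - u₂ z * deriv u₁ z)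
          + c₂ * u₁ z ^ 2 / u₂ z ^ 2 - c₁ * u₂ z ^ 2 / u₁ z ^ 2)) z := by
      refine hg2.congr_deriv ?_
      have ha := hu₁ne z hz
      have hb := hu₂ne z hz
      simp only [Pi.mul_apply, Pi.pow_apply, Pi.add_apply]
      field_simp
      ring
    have huniq := hg.unique hg2'
    norm_num at huniq
    linarith [huniq]
  have hphi2 : ∀ z ∈ U, deriv u z * deriv u z + u z * deriv (deriv u) z
      = ((2 * B z * u₁ z * u₂ z + c₁ * u₂ z / u₁ z ^ 3 + c₂ * u₁ z / u₂ z ^ 3 + 2 * deriv u₁ z * deriv u₂ z) * (u₁ z * deriv u₂ z - u₂ z * deriv u₁ z) + (deriv u₁ z * u₂ z + u₁ z * deriv u₂ z) * (c₂ * u₁ z / u₂ z ^ 3 - c₁ * u₂ z / u₁ z ^ 3) - 2 * c₂ * u₁ z * (u₁ z * deriv u₂ z - u₂ z * deriv u₁ z) / u₂ z ^ 3 - 2 * c₁ * u₂ z * (u₁ z * deriv u₂ z - u₂ z * deriv u₁ z) / u₁ z ^ 3) := by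
    intro z hz
    have hA := ((hu₁' z hz).hasDerivAt.mul (hu₂ z hz).hasDerivAt).add
      ((hu₁ z hz).hasDerivAt.mul (hu₂' z hz).hasDerivAt)
    have hAB := hA.mul (hWd z hz)
    have hQ := (((hu₁ z hz).hasDerivAt.pow 2).const_mul c₂).div
      ((hu₂ z hz).hasDerivAt.pow 2) (pow_ne_zero 2 (hu₂ne z hz))
    have hP := (((hu₂ z hz).hasDerivAt.pow 2).const_mul c₁).div
      ((hu₁ z hz).hasDerivAt.pow 2) (pow_ne_zero 2 (hu₁ne z hz))
    have htot := (hAB.add hQ).sub hP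
    have hclean : HasDerivAt (fun y =>
        (deriv u₁ y * u₂ y + u₁ y * deriv u₂ y) * (u₁ y * deriv u₂ y - u₂ y * deriv u₁ y)
          + c₂ * u₁ y ^ 2 / u₂ y ^ 2 - c₁ * u₂ y ^ 2 / u₁ y ^ 2)
        ((2 * B z * u₁ z * u₂ z + c₁ * u₂ z / u₁ z ^ 3 + c₂ * u₁ z / u₂ z ^ 3 + 2 * deriv u₁ z * deriv u₂ z) * (u₁ z * deriv u₂ z - u₂ z * deriv u₁ z) + (deriv u₁ z * u₂ z + u₁ z * deriv u₂ z) * (c₂ * u₁ z / u₂ z ^ 3 - c₁ * u₂ z / u₁ z ^ 3) - 2 * c₂ * u₁ z * (u₁ z * deriv u₂ z - u₂ z * deriv u₁ z) / u₂ z ^ 3 - 2 * c₁ * u₂ z * (u₁ z * deriv u₂ z - u₂ z * deriv u₁ z) / u₁ z ^ 3) z := by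
      refine htot.congr_deriv ?_
      rw [hode₁ z hz, hode₂ z hz]
      push_cast
      have ha := hu₁ne z hz
      have hb := hu₂ne z hz
      simp only [Pi.mul_apply, Pi.pow_apply, Pi.add_apply]
      field_simp
      ring
    have hev : (fun y => u y * deriv u y) =ᶠ[nhds z] (fun y =>
        (deriv u₁ y * u₂ y + u₁ y * deriv u₂ y) * (u₁ y * deriv u₂ y - u₂ y * deriv u₁ y)
          + c₂ * u₁ y ^ 2 / u₂ y ^ 2 - c₁ * u₂ y ^ 2 / u₁ y ^ 2) :=
      Filter.eventuallyEq_of_mem (hU.mem_nhds hz) (fun y hy => hphi1 y hy)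
    have hfin := hclean.congr_of_eventuallyEq hev
    exact ((hu z hz).hasDerivAt.mul (hu' z hz).hasDerivAt).unique hfin
  refine ⟨(4 * c₁ * c₂ - ((u₁ x₀ * deriv u₂ x₀ - u₂ x₀ * deriv u₁ x₀) ^ 2 + c₁ * u₂ x₀ ^ 2 / u₁ x₀ ^ 2 + c₂ * u₁ x₀ ^ 2 / u₂ x₀ ^ 2) ^ 2), ?_, ?_⟩
  · intro z hz
    rw [← hconst z hz]
    have hm := hsq z hz
    have hp := hphi1 z hz
    have heq := hphi2 z hz
    have e1 : u z * deriv (deriv u) z = ((2 * B z * u₁ z * u₂ z + c₁ * u₂ z / u₁ z ^ 3 + c₂ * u₁ z / u₂ z ^ 3 + 2 * deriv u₁ z * deriv u₂ z) * (u₁ z * deriv u₂ z - u₂ z * deriv u₁ z) + (deriv u₁ z * u₂ z + u₁ z * deriv u₂ z) * (c₂ * u₁ z / u₂ z ^ 3 - c₁ * u₂ z / u₁ z ^ 3) - 2 * c₂ * u₁ z * (u₁ z * deriv u₂ z - u₂ z * deriv u₁ z) / u₂ z ^ 3 - 2 * c₁ * u₂ z * (u₁ z * deriv u₂ z - u₂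 z * deriv u₁ z) / u₁ z ^ 3) - deriv u z * deriv u z := by linarith [heq]
    have key2 : u z ^ 3 * deriv (deriv u) z = B z * u z ^ 4 + (4 * c₁ * c₂ - ((u₁ z * deriv u₂ z - u₂ z * deriv u₁ z) ^ 2 + c₁ * u₂ z ^ 2 / u₁ z ^ 2 + c₂ * u₁ z ^ 2 / u₂ z ^ 2) ^ 2) := by
      calc u z ^ 3 * deriv (deriv u) z = u z ^ 2 * (u z * deriv (deriv u) z) := by ring
        _ = u z ^ 2 * (((2 * B z * u₁ z * u₂ z + c₁ * u₂ z / u₁ z ^ 3 + c₂ * u₁ z / u₂ z ^ 3 + 2 * deriv u₁ z * deriv u₂ z) * (u₁ z * deriv u₂ z - u₂ z * deriv u₁ z) + (deriv u₁ z * u₂ z + u₁ z * deriv u₂ z) * (c₂ * u₁ z / u₂ z ^ 3 - c₁ * u₂ z / u₁ z ^ 3) - 2 * c₂ * u₁ z * (u₁ z * deriv u₂ z - u₂ z * deriv u₁ z) / u₂ z ^ 3 - 2 * c₁ * u₂ z * (u₁ z * deriv u₂ z - u₂ z * deriv u₁ z) / u₁ z ^ 3) - deriv u z * deriv u z) :=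 by rw [e1]
        _ = u z ^ 2 * ((2 * B z * u₁ z * u₂ z + c₁ * u₂ z / u₁ z ^ 3 + c₂ * u₁ z / u₂ z ^ 3 + 2 * deriv u₁ z * deriv u₂ z) * (u₁ z * deriv u₂ z - u₂ z * deriv u₁ z) + (deriv u₁ z * u₂ z + u₁ z * deriv u₂ z) * (c₂ * u₁ z / u₂ z ^ 3 - c₁ * u₂ z / u₁ z ^ 3) - 2 * c₂ * u₁ z * (u₁ z * deriv u₂ z - u₂ z * deriv u₁ z) / u₂ z ^ 3 - 2 * c₁ * u₂ z * (u₁ z * deriv u₂ z - u₂ z * deriv u₁ z) / u₁ z ^ 3) - (u z * deriv u z) * (u z * deriv u z) := by ring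
        _ = u z ^ 2 * ((2 * B z * u₁ z * u₂ z + c₁ * u₂ z / u₁ z ^ 3 + c₂ * u₁ z / u₂ z ^ 3 + 2 * deriv u₁ z * deriv u₂ z) * (u₁ z * deriv u₂ z - u₂ z * deriv u₁ z) + (deriv u₁ z * u₂ z + u₁ z * deriv u₂ z) * (c₂ * u₁ z / u₂ z ^ 3 - c₁ * u₂ z / u₁ z ^ 3) - 2 * c₂ * u₁ z * (u₁ z * deriv u₂ z - u₂ z * deriv u₁ z) / u₂ z ^ 3 - 2 * c₁ * u₂ z * (u₁ z * deriv u₂ z - u₂ z * deriv u₁ z) / u₁ z ^ 3) - ((deriv u₁ z * u₂ z + u₁ z * deriv u₂ z) * (u₁ z * deriv u₂ z - u₂ z * deriv u₁ z) + c₂ * u₁ z ^ 2 / u₂ z ^ 2 - c₁ * u₂ z ^ 2 / u₁ z ^ 2) * ((deriv u₁ z * u₂ z + u₁ z * deriv u₂ z) * (u₁ z * deriv u₂ z - u₂ z * deriv u₁ z) + c₂ * u₁ z ^ 2 / u₂ z ^ 2 - c₁ * u₂ z ^ 2 / u₁ z ^ 2) := by rw [hp]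
        _ = (2 * u₁ z * u₂ z * (u₁ z * deriv u₂ z - u₂ z * deriv u₁ z)) * ((2 * B z * u₁ z * u₂ z + c₁ * u₂ z / u₁ z ^ 3 + c₂ * u₁ z / u₂ z ^ 3 + 2 * deriv u₁ z * deriv u₂ z) * (u₁ z * deriv u₂ z - u₂ z * deriv u₁ z) + (deriv u₁ z * u₂ z + u₁ z * deriv u₂ z) * (c₂ * u₁ z / u₂ z ^ 3 - c₁ * u₂ z / u₁ z ^ 3) - 2 * c₂ * u₁ z * (u₁ z * deriv u₂ z - u₂ z * deriv u₁ z) / u₂ z ^ 3 - 2 * c₁ * u₂ z * (u₁ z * deriv u₂ z - u₂ z * deriv u₁ z) / u₁ z ^ 3) - ((deriv u₁ z * u₂ z + u₁ z * deriv u₂ z) * (u₁ z * deriv u₂ z - u₂ z * deriv u₁ z) + c₂ * u₁ z ^ 2 / u₂ z ^ 2 - c₁ * u₂ z ^ 2 / u₁ z ^ 2) * ((deriv u₁ z * u₂ z + u₁ z * deriv u₂ z) * (u₁ z * deriv u₂ z - u₂ z * deriv u₁ z) + c₂ * u₁ z ^ 2 / u₂ z ^ 2 - c₁ * u₂ z ^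 2 / u₁ z ^ 2) := by rw [hm]
        _ = B z * (2 * u₁ z * u₂ z * (u₁ z * deriv u₂ z - u₂ z * deriv u₁ z)) ^ 2 + (4 * c₁ * c₂ - ((u₁ z * deriv u₂ z - u₂ z * deriv u₁ z) ^ 2 + c₁ * u₂ z ^ 2 / u₁ z ^ 2 + c₂ * u₁ z ^ 2 / u₂ z ^ 2) ^ 2) := by
            have ha := hu₁ne z hz
            have hb := hu₂ne z hz
            field_simp
            ring
        _ = B z * (u z ^ 2) ^ 2 + (4 * c₁ * c₂ - ((u₁ z * deriv u₂ z - u₂ z * deriv u₁ z) ^ 2 + c₁ * u₂ z ^ 2 / u₁ z ^ 2 + c₂ * u₁ z ^ 2 / u₂ z ^ 2) ^ 2) := by rw [hm]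
        _ = B z * u z ^ 4 + (4 * c₁ * c₂ - ((u₁ z * deriv u₂ z - u₂ z * deriv u₁ z) ^ 2 + c₁ * u₂ z ^ 2 / u₁ z ^ 2 + c₂ * u₁ z ^ 2 / u₂ z ^ 2) ^ 2) := by ring
    have hcube : u z ^ 3 ≠ 0 := pow_ne_zero 3 (hune z hz)
    have h5 : (4 * c₁ * c₂ - ((u₁ z * deriv u₂ z - u₂ z * deriv u₁ z) ^ 2 + c₁ * u₂ z ^ 2 / u₁ z ^ 2 + c₂ * u₁ z ^ 2 / u₂ z ^ 2) ^ 2) / u z ^ 3 = deriv (deriv u) z - B z * u z := by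
      rw [div_eq_iff hcube]
      linear_combination -key2
    linarith [h5]
  · intro z hz
    rw [← hconst z hz]
    have hm := hsq z hz
    have h4 : u z ^ 4 = (2 * u₁ z * u₂ z * (u₁ z * deriv u₂ z - u₂ z * deriv u₁ z)) ^ 2 := by
      rw [show u z ^ 4 = (u z ^ 2) ^ 2 by ring, hm]
    have h8 : u z ^ 8 = (2 * u₁ z * u₂ z * (u₁ z * deriv u₂ z - u₂ z * deriv u₁ z)) ^ 4 := by
      rw [show u z ^ 8 = (u z ^ 2) ^ 4 by ring, hm]
    rw [h4, h8]
    have ha := hu₁ne z hz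
    have hb := hu₂ne z hz
    field_simp
    ring
end

section
/- Let U ⊆ ℝ be an open interval, B : U → ℝ differentiable, and let w₁, w₂ : U → ℝ be nonvanishing solutions of the linear equation wᵢ''' - 4B·wᵢ' - 2B'·wᵢ = 0 (i = 1, 2) on U, with conserved quantities wᵢ''·wᵢ - (1/2)(wᵢ')² - 2B·wᵢ² = 2cᵢ for constants c₁, c₂. Then: (i) the Wronskian w := w₁·w₂' - w₂·w₁' satisfies the same equation w''' - 4B·w' - 2B'·w = 0 on U; (ii) with k the constant such that w''·w - (1/2)(w')² - 2B·w² = 2k on U, the polynomial relation w⁴/16 + ((c₁·w₂² + c₂·w₁²)/2)·w² + (c₂·w₁² - c₁·w₂²)² + k·w₁²·w₂² = 0 holds identically on U; (iii) if c₁ = c₂ = c, then there exists a real constant a with k = -a(a + 4c) such that w²/4 + c·(w₁ - w₂)² - a·w₁·w₂ = 0 holds identically on U. -/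
/-- Wronskian auto-Bäcklund transformation for w''' - 4B·w' - 2B'·w = 0 and
the polynomial relations among the solutions w₁, w₂ and the Wronskian w. -/
theorem wronskian_backlund_and_polynomial_relations
    (U : Set ℝ) (hU : IsOpen U) (hUconn : IsConnected U)
    (B : ℝ → ℝ) (c₁ c₂ : ℝ) (w₁ w₂ : ℝ → ℝ)
    (hB : ∀ z ∈ U, DifferentiableAt ℝ B z)
    (hw₁ : ∀ z ∈ U, DifferentiableAt ℝ w₁ z)
    (hw₁' : ∀ z ∈ U, DifferentiableAt ℝ (deriv w₁) z)
    (hw₁'' : ∀ z ∈ U, DifferentiableAt ℝ (deriv (deriv w₁)) z)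
    (hw₁ne : ∀ z ∈ U, w₁ z ≠ 0)
    (hode₁ : ∀ z ∈ U, deriv (deriv (deriv w₁)) z - 4 * B z * deriv w₁ z
      - 2 * deriv B z * w₁ z = 0)
    (hc₁ : ∀ z ∈ U, deriv (deriv w₁) z * w₁ z - 1 / 2 * (deriv w₁ z) ^ 2
      - 2 * B z * (w₁ z) ^ 2 = 2 * c₁)
    (hw₂ : ∀ z ∈ U, DifferentiableAt ℝ w₂ z)
    (hw₂' : ∀ z ∈ U, DifferentiableAt ℝ (deriv w₂) z)
    (hw₂'' : ∀ z ∈ U, DifferentiableAt ℝ (deriv (deriv w₂)) z)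
    (hw₂ne : ∀ z ∈ U, w₂ z ≠ 0)
    (hode₂ : ∀ z ∈ U, deriv (deriv (deriv w₂)) z - 4 * B z * deriv w₂ z
      - 2 * deriv B z * w₂ z = 0)
    (hc₂ : ∀ z ∈ U, deriv (deriv w₂) z * w₂ z - 1 / 2 * (deriv w₂ z) ^ 2
      - 2 * B z * (w₂ z) ^ 2 = 2 * c₂)
    (w : ℝ → ℝ) (hw : w = fun t => w₁ t * deriv w₂ t - w₂ t * deriv w₁ t) :
    (∀ z ∈ U, deriv (deriv (deriv w)) z - 4 * B z * deriv w z - 2 * deriv B z * w z = 0) ∧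
    ∃ k : ℝ,
      (∀ z ∈ U, deriv (deriv w) z * w z - 1 / 2 * (deriv w z) ^ 2
        - 2 * B z * (w z) ^ 2 = 2 * k) ∧
      (∀ z ∈ U, (w z) ^ 4 / 16
        + (c₁ * (w₂ z) ^ 2 + c₂ * (w₁ z) ^ 2) / 2 * (w z) ^ 2
        + (c₂ * (w₁ z) ^ 2 - c₁ * (w₂ z) ^ 2) ^ 2
        + k * (w₁ z) ^ 2 * (w₂ z) ^ 2 = 0) ∧
      (c₁ = c₂ → ∃ a : ℝ, k = -a * (a + 4 * c₁) ∧
        ∀ z ∈ U, (w z) ^ 2 / 4 + c₁ * (w₁ z - w₂ z) ^ 2 - a * w₁ z * w₂ z = 0) := by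
  have h0 : ∀ z, w z = w₁ z * deriv w₂ z - w₂ z * deriv w₁ z := fun z => by rw [hw]
  -- first derivative of w
  have hwHD : ∀ z ∈ U, HasDerivAt w
      (w₁ z * deriv (deriv w₂) z - w₂ z * deriv (deriv w₁) z) z := by
    intro z hz
    have h := ((hw₁ z hz).hasDerivAt.mul (hw₂' z hz).hasDerivAt).sub
      ((hw₂ z hz).hasDerivAt.mul (hw₁' z hz).hasDerivAt)
    rw [hw]
    refine h.congr_deriv ?_
    ring
  have hdw : ∀ z ∈ U, deriv w z
      = w₁ z * deriv (deriv w₂) z - w₂ z * deriv (deriv w₁) z :=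
    fun z hz => (hwHD z hz).deriv
  -- second derivative of w
  have hw2HD : ∀ z ∈ U, HasDerivAt (deriv w)
      (deriv w₁ z * deriv (deriv w₂) z + w₁ z * deriv (deriv (deriv w₂)) z
        - (deriv w₂ z * deriv (deriv w₁) z + w₂ z * deriv (deriv (deriv w₁)) z)) z := by
    intro z hz
    have hg := ((hw₁ z hz).hasDerivAt.mul (hw₂'' z hz).hasDerivAt).sub
      ((hw₂ z hz).hasDerivAt.mul (hw₁'' z hz).hasDerivAt)
    apply hg.congr_of_eventuallyEq
    filter_upwards [hU.mem_nhds hz] with t ht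
    exact hdw t ht
  have hddw : ∀ z ∈ U, deriv (deriv w) z
      = deriv w₁ z * deriv (deriv w₂) z - deriv w₂ z * deriv (deriv w₁) z
        + 4 * B z * w z := by
    intro z hz
    rw [(hw2HD z hz).deriv]
    linear_combination w₁ z * hode₂ z hz - w₂ z * hode₁ z hz - 4 * B z * h0 z
  -- third derivative of w
  have hw3HD : ∀ z ∈ U, HasDerivAt (deriv (deriv w))
      (deriv (deriv w₁) z * deriv (deriv w₂) z + deriv w₁ z * deriv (deriv (deriv w₂)) z
        - (deriv (deriv w₂) z * deriv (deriv w₁) z + deriv w₂ z * deriv (deriv (deriv w₁)) z)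
        + (4 * deriv B z * w z + 4 * B z * deriv w z)) z := by
    intro z hz
    have hwAt : HasDerivAt w (deriv w z) z := by
      rw [hdw z hz]; exact hwHD z hz
    have hg := (((hw₁' z hz).hasDerivAt.mul (hw₂'' z hz).hasDerivAt).sub
      ((hw₂' z hz).hasDerivAt.mul (hw₁'' z hz).hasDerivAt)).add
      (((hB z hz).hasDerivAt.const_mul (4 : ℝ)).mul hwAt)
    apply hg.congr_of_eventuallyEq
    filter_upwards [hU.mem_nhds hz] with t ht
    exact hddw t ht
  -- part (i)
  have goal1 : ∀ z ∈ U, deriv (deriv (deriv w)) z - 4 * B z * deriv w z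
      - 2 * deriv B z * w z = 0 := by
    intro z hz
    rw [(hw3HD z hz).deriv]
    linear_combination deriv w₁ z * hode₂ z hz - deriv w₂ z * hode₁ z hz
      + 2 * deriv B z * h0 z
  -- the conserved quantity is constant
  have hΦHD : ∀ z ∈ U, HasDerivAt
      (fun t => deriv (deriv w) t * w t - 1 / 2 * (deriv w t) ^ 2
        - 2 * B t * (w t) ^ 2) 0 z := by
    intro z hz
    have hwAt : HasDerivAt w (deriv w z) z := by
      rw [hdw z hz]; exact hwHD z hz
    have hD2 : HasDerivAt (deriv w) (deriv (deriv w) z) z := by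
      rw [(hw2HD z hz).deriv]; exact hw2HD z hz
    have hD3 : HasDerivAt (deriv (deriv w)) (deriv (deriv (deriv w)) z) z := by
      rw [(hw3HD z hz).deriv]; exact hw3HD z hz
    have hP := ((hD3.mul hwAt).sub ((hD2.pow 2).const_mul (1 / 2 : ℝ))).sub
      (((hB z hz).hasDerivAt.const_mul (2 : ℝ)).mul (hwAt.pow 2))
    refine hP.congr_deriv ?_
    have h := goal1 z hz
    push_cast [Pi.pow_apply]
    linear_combination (w z) * h
  have hconv : Convex ℝ U := hUconn.isPreconnected.convex
  obtain ⟨z₀, hz₀⟩ := hUconn.nonempty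
  have hΦconst : ∀ z ∈ U,
      deriv (deriv w) z * w z - 1 / 2 * (deriv w z) ^ 2 - 2 * B z * (w z) ^ 2
      = deriv (deriv w) z₀ * w z₀ - 1 / 2 * (deriv w z₀) ^ 2 - 2 * B z₀ * (w z₀) ^ 2 := by
    intro z hz
    have := hconv.is_const_of_fderivWithin_eq_zero
      (f := fun t => deriv (deriv w) t * w t - 1 / 2 * (deriv w t) ^ 2
        - 2 * B t * (w t) ^ 2)
      (fun x hx => (hΦHD x hx).differentiableAt.differentiableWithinAt)
      (fun x hx => by
        rw [fderivWithin_of_isOpen hU hx, (hΦHD x hx).hasFDerivAt.fderiv]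
        ext y
        simp) hz hz₀
    simpa using this
  set k : ℝ := (deriv (deriv w) z₀ * w z₀ - 1 / 2 * (deriv w z₀) ^ 2
      - 2 * B z₀ * (w z₀) ^ 2) / 2 with hkdef
  have hkfun : ∀ z ∈ U, deriv (deriv w) z * w z - 1 / 2 * (deriv w z) ^ 2
      - 2 * B z * (w z) ^ 2 = 2 * k := by
    intro z hz
    rw [hΦconst z hz, hkdef]; ring
  -- part (ii)
  have hPoly : ∀ z ∈ U, (w z) ^ 4 / 16
      + (c₁ * (w₂ z) ^ 2 + c₂ * (w₁ z) ^ 2) / 2 * (w z) ^ 2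
      + (c₂ * (w₁ z) ^ 2 - c₁ * (w₂ z) ^ 2) ^ 2
      + k * (w₁ z) ^ 2 * (w₂ z) ^ 2 = 0 := by
    intro z hz
    have hkz := hkfun z hz
    rw [hddw z hz, hdw z hz, h0 z] at hkz
    have h1 := hc₁ z hz
    have h2 := hc₂ z hz
    have hG : ((w₁ z) * (w₂ z)) ^ 2 *
        ((w₁ z * deriv w₂ z - w₂ z * deriv w₁ z) ^ 4 / 16
          + (c₁ * (w₂ z) ^ 2 + c₂ * (w₁ z) ^ 2) / 2
            * (w₁ z * deriv w₂ z - w₂ z * deriv w₁ z) ^ 2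
          + (c₂ * (w₁ z) ^ 2 - c₁ * (w₂ z) ^ 2) ^ 2
          + k * (w₁ z) ^ 2 * (w₂ z) ^ 2) = 0 := by
      have h11 : (deriv (deriv w₁) z * w₁ z - 1 / 2 * (deriv w₁ z) ^ 2
          - 2 * B z * (w₁ z) ^ 2) * (deriv (deriv w₁) z * w₁ z - 1 / 2 * (deriv w₁ z) ^ 2
          - 2 * B z * (w₁ z) ^ 2) = (2 * c₁) * (2 * c₁) := by rw [h1]
      have h12 : (deriv (deriv w₁) z * w₁ z - 1 / 2 * (deriv w₁ z) ^ 2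
          - 2 * B z * (w₁ z) ^ 2) * (deriv (deriv w₂) z * w₂ z - 1 / 2 * (deriv w₂ z) ^ 2
          - 2 * B z * (w₂ z) ^ 2) = (2 * c₁) * (2 * c₂) := by rw [h1, h2]
      have h22 : (deriv (deriv w₂) z * w₂ z - 1 / 2 * (deriv w₂ z) ^ 2
          - 2 * B z * (w₂ z) ^ 2) * (deriv (deriv w₂) z * w₂ z - 1 / 2 * (deriv w₂ z) ^ 2
          - 2 * B z * (w₂ z) ^ 2) = (2 * c₂) * (2 * c₂) := by rw [h2]
      linear_combination
        (-(1/4) * (w₁ z) ^ 2 * (w₂ z) ^ 4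
          * (w₁ z * deriv w₂ z - w₂ z * deriv w₁ z) ^ 2) * h1
        + (-(1/4) * (w₁ z) ^ 4 * (w₂ z) ^ 2
          * (w₁ z * deriv w₂ z - w₂ z * deriv w₁ z) ^ 2) * h2
        - (1/4) * (w₁ z) ^ 2 * (w₂ z) ^ 6 * h11
        + (1/2) * (w₁ z) ^ 4 * (w₂ z) ^ 4 * h12
        - (1/4) * (w₁ z) ^ 6 * (w₂ z) ^ 2 * h22
        - ((w₁ z) ^ 4 * (w₂ z) ^ 4 / 2) * hkz
    rw [h0 z]
    rcases mul_eq_zero.mp hG with h | h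
    · exact absurd h (pow_ne_zero 2 (mul_ne_zero (hw₁ne z hz) (hw₂ne z hz)))
    · linear_combination h
  refine ⟨goal1, k, hkfun, hPoly, ?_⟩
  -- part (iii)
  intro hcc
  obtain rfl := hcc
  set g : ℝ → ℝ := fun t => ((w t) ^ 2 / 4 + c₁ * (w₁ t - w₂ t) ^ 2) / (w₁ t * w₂ t)
      + 2 * c₁ with hgdef
  have hg2 : ∀ z ∈ U, (g z) ^ 2 = 4 * c₁ ^ 2 - k := by
    intro z hz
    have ha := hw₁ne z hz
    have hb := hw₂ne z hz
    have hab := mul_ne_zero ha hb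
    have hgz : g z = ((w z) ^ 2 / 4 + c₁ * (w₁ z - w₂ z) ^ 2
        + 2 * c₁ * (w₁ z * w₂ z)) / (w₁ z * w₂ z) := by
      simp only [hgdef]
      field_simp
    rw [hgz, div_pow, div_eq_iff (pow_ne_zero 2 hab)]
    linear_combination hPoly z hz
  have hk4 : (0:ℝ) ≤ 4 * c₁ ^ 2 - k := by rw [← hg2 z₀ hz₀]; positivity
  have hd2 : Real.sqrt (4 * c₁ ^ 2 - k) ^ 2 = 4 * c₁ ^ 2 - k := Real.sq_sqrt hk4
  set d : ℝ := Real.sqrt (4 * c₁ ^ 2 - k) with hddef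
  have hgd : ∀ z ∈ U, g z = d ∨ g z = -d := by
    intro z hz
    have h : (g z - d) * (g z + d) = 0 := by linear_combination hg2 z hz - hd2
    rcases mul_eq_zero.mp h with h' | h'
    · left; linarith
    · right; linarith
  have hgcont : ContinuousOn g U := by
    intro z hz
    apply ContinuousAt.continuousWithinAt
    have hwc : ContinuousAt w z := (hwHD z hz).differentiableAt.continuousAt
    simp only [hgdef]
    exact ((((hwc.pow 2).div_const 4).add (continuousAt_const.mul
      (((hw₁ z hz).continuousAt.sub (hw₂ z hz).continuousAt).pow 2))).div
      ((hw₁ z hz).continuousAt.mul (hw₂ z hz).continuousAt)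
      (mul_ne_zero (hw₁ne z hz) (hw₂ne z hz))).add continuousAt_const
  have hgconst : ∀ z ∈ U, g z = g z₀ := by
    intro z hz
    rcases hgd z hz with h1 | h1 <;> rcases hgd z₀ hz₀ with h2 | h2
    · rw [h1, h2]
    · by_cases hd0 : d = 0
      · rw [h1, h2, hd0]; ring
      · exfalso
        have hdpos : 0 < d := lt_of_le_of_ne (Real.sqrt_nonneg _) (Ne.symm hd0)
        have hsub := hUconn.isPreconnected.intermediate_value hz₀ hz hgcont
        have h0mem : (0:ℝ) ∈ Set.Icc (g z₀) (g z) := by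
          rw [h1, h2, Set.mem_Icc]; constructor <;> linarith
        obtain ⟨y, hyU, hy0⟩ := hsub h0mem
        have hgy := hg2 y hyU
        rw [hy0] at hgy
        nlinarith [hd2]
    · by_cases hd0 : d = 0
      · rw [h1, h2, hd0]; ring
      · exfalso
        have hdpos : 0 < d := lt_of_le_of_ne (Real.sqrt_nonneg _) (Ne.symm hd0)
        have hsub := hUconn.isPreconnected.intermediate_value hz hz₀ hgcont
        have h0mem : (0:ℝ) ∈ Set.Icc (g z) (g z₀) := by
          rw [h1, h2, Set.mem_Icc]; constructor <;> linarith
        obtain ⟨y, hyU, hy0⟩ := hsub h0mem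
        have hgy := hg2 y hyU
        rw [hy0] at hgy
        nlinarith [hd2]
    · rw [h1, h2]
  refine ⟨g z₀ - 2 * c₁, by linear_combination hg2 z₀ hz₀, ?_⟩
  intro z hz
  have h := hgconst z hz
  have hab := mul_ne_zero (hw₁ne z hz) (hw₂ne z hz)
  have hz' : g z = ((w z) ^ 2 / 4 + c₁ * (w₁ z - w₂ z) ^ 2) / (w₁ z * w₂ z)
      + 2 * c₁ := by simp only [hgdef]
  have h2 : ((w z) ^ 2 / 4 + c₁ * (w₁ z - w₂ z) ^ 2) / (w₁ z * w₂ z)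
      = g z₀ - 2 * c₁ := by rw [← h, hz']; ring
  rw [div_eq_iff hab] at h2
  linear_combination h2
end

section
/- Let U ⊆ ℝ be an open interval, B : U → ℝ differentiable, and let w₁, w₂ : U → ℝ be nonvanishing solutions of the linear equation wᵢ''' - 4B·wᵢ' - 2B'·wᵢ = 0 (i = 1, 2) on U with wᵢ''·wᵢ - (1/2)(wᵢ')² - 2B·wᵢ² = 2cᵢ for nonzero constants c₁, c₂. Suppose the Wronskian w := w₁·w₂' - w₂·w₁' is nonvanishing on U and let k be the constant with w''·w - (1/2)(w')² - 2B·w² = 2k, assumed nonzero. Set y₁ := 6c₁/w₁², y₂ := 6c₂/w₂², and y := 6k/w². Then y₁, y₂ and y all satisfy the Painlevé XXV–Ermakov equation with A = 0, y·y'' - (5/4)(y')² + (2/3)y³ + 4B·y² = 0, on U; moreover y = 2k·(y₁·y₂)³/(3c₁·c₂·(y₁·y₂' - y₂·y₁')²) on U, and the polynomial relation 16c₁c₂·(c₁c₂·(y₁ - y₂)² + k·y₁·y₂)·y² + 8c₁c₂·k·y₁·y₂·(y₁ + y₂)·y + k²·y₁²·y₂² = 0 holds identically on U. -/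
private lemma hasDerivAt_const_div_sq (c : ℝ) (v : ℝ → ℝ) (t : ℝ)
    (hv : DifferentiableAt ℝ v t) (hvne : v t ≠ 0) :
    HasDerivAt (fun s => 6 * c / v s ^ 2) (-12 * c * deriv v t / v t ^ 3) t := by
  have h2 : HasDerivAt (fun s => v s ^ 2) (2 * v t ^ 1 * deriv v t) t := by
    simpa using hv.hasDerivAt.fun_pow 2
  have h := (hasDerivAt_const t (6 * c)).fun_div h2 (pow_ne_zero 2 hvne)
  refine h.congr_deriv ?_
  field_simp
  ring

private lemma ermakov_of_first_integral (U : Set ℝ) (hU : IsOpen U)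
    (B : ℝ → ℝ) (c : ℝ) (v g : ℝ → ℝ)
    (hv : ∀ z ∈ U, DifferentiableAt ℝ v z)
    (hv' : ∀ z ∈ U, DifferentiableAt ℝ (deriv v) z)
    (hvne : ∀ z ∈ U, v z ≠ 0)
    (hc : ∀ z ∈ U, deriv (deriv v) z * v z - 1 / 2 * (deriv v z) ^ 2
      - 2 * B z * (v z) ^ 2 = 2 * c)
    (hg : g = fun t => 6 * c / (v t) ^ 2) :
    ∀ z ∈ U, g z * deriv (deriv g) z - 5 / 4 * (deriv g z) ^ 2
      + 2 / 3 * (g z) ^ 3 + 4 * B z * (g z) ^ 2 = 0 := by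
  have hdg : ∀ t ∈ U, deriv g t = -12 * c * deriv v t / v t ^ 3 := by
    intro t ht
    rw [hg]
    exact (hasDerivAt_const_div_sq c v t (hv t ht) (hvne t ht)).deriv
  intro z hz
  have hvz := hvne z hz
  have hev : deriv g =ᶠ[nhds z] fun t => -12 * c * deriv v t / v t ^ 3 := by
    filter_upwards [hU.mem_nhds hz] with t ht using hdg t ht
  have hnum : HasDerivAt (fun s => -12 * c * deriv v s) (-12 * c * deriv (deriv v) z) z :=
    (hv' z hz).hasDerivAt.const_mul (-12 * c)
  have hden : HasDerivAt (fun s => v s ^ 3) (3 * v z ^ 2 * deriv v z) z := by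
    simpa using (hv z hz).hasDerivAt.fun_pow 3
  have hddg : deriv (deriv g) z =
      (-12 * c * deriv (deriv v) z * v z ^ 3
        - -12 * c * deriv v z * (3 * v z ^ 2 * deriv v z)) / (v z ^ 3) ^ 2 := by
    rw [hev.deriv_eq]
    exact (hnum.div hden (pow_ne_zero 3 hvz)).deriv
  have hP : deriv (deriv v) z
      = (2 * c + 1 / 2 * (deriv v z) ^ 2 + 2 * B z * v z ^ 2) / v z := by
    rw [eq_div_iff hvz]
    linarith [hc z hz]
  rw [hdg z hz, hddg, hP, hg]
  field_simp
  ring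

private lemma poly_rel (a b p q P Q Bz W c₁ c₂ k y1 y2 yv : ℝ)
    (hane : a ≠ 0) (hbne : b ≠ 0) (hWne : W ≠ 0)
    (h1 : P * a - 1 / 2 * p ^ 2 - 2 * Bz * a ^ 2 = 2 * c₁)
    (h2 : Q * b - 1 / 2 * q ^ 2 - 2 * Bz * b ^ 2 = 2 * c₂)
    (h3 : (p * Q - q * P + 4 * Bz * W) * W - 1 / 2 * (a * Q - b * P) ^ 2
      - 2 * Bz * W ^ 2 = 2 * k)
    (h4 : W = a * q - b * p)
    (ey1 : y1 = 6 * c₁ / a ^ 2) (ey2 : y2 = 6 * c₂ / b ^ 2) (ey : yv = 6 * k / W ^ 2) :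
    16 * c₁ * c₂ * (c₁ * c₂ * (y1 - y2) ^ 2 + k * y1 * y2) * yv ^ 2
      + 8 * c₁ * c₂ * k * y1 * y2 * (y1 + y2) * yv + k ^ 2 * y1 ^ 2 * y2 ^ 2 = 0 := by
  have quart : W ^ 4 + 8 * (c₁ * b ^ 2 + c₂ * a ^ 2) * W ^ 2
      + 16 * (c₁ * b ^ 2 - c₂ * a ^ 2) ^ 2 + 16 * k * a ^ 2 * b ^ 2 = 0 := by
    linear_combination
      (-4*b^2*W^2 - 8*b^4*c₁ + 2*b^4*p^2 - 4*a*b^4*P + 16*a^2*b^2*c₂ + 8*a^2*b^4*Bz) * h1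
      + (-4*a^2*W^2 - 4*a^2*b^2*p^2 + 8*a^3*b^2*P - 8*a^4*c₂ + 2*a^4*q^2 - 4*a^4*b*Q
          - 8*a^4*b^2*Bz) * h2
      + (-8*a^2*b^2) * h3
      + (W^3 - b*p*W^2 - b^2*p^2*W + b^3*p^3 + a*q*W^2 - 2*a*b*p*q*W + 4*a*b^2*P*W
          + a*b^2*p^2*q - 4*a*b^3*p*P - a^2*q^2*W + 4*a^2*b*Q*W - a^2*b*p*q^2
          - 4*a^2*b^2*q*P + 4*a^2*b^2*p*Q - a^3*q^3 + 4*a^3*b*q*Q) * h4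
  have hz : 1296 * c₁ ^ 2 * c₂ ^ 2 * k ^ 2 / (a ^ 4 * b ^ 4 * W ^ 4)
      * (W ^ 4 + 8 * (c₁ * b ^ 2 + c₂ * a ^ 2) * W ^ 2
        + 16 * (c₁ * b ^ 2 - c₂ * a ^ 2) ^ 2 + 16 * k * a ^ 2 * b ^ 2) = 0 := by
    rw [quart, mul_zero]
  rw [ey1, ey2, ey, ← hz]
  field_simp
  ring

/-- Bäcklund transformation and polynomial relation for the Painlevé
XXV–Ermakov equation with A = 0, via y₁ = 6c₁/w₁², y₂ = 6c₂/w₂², y = 6k/w² where w is the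
Wronskian of w₁ and w₂. -/
theorem painleveXXV_ermakov_backlund_and_polynomial
    (U : Set ℝ) (hU : IsOpen U) (hUconn : IsConnected U)
    (B : ℝ → ℝ) (c₁ c₂ k : ℝ) (w₁ w₂ : ℝ → ℝ)
    (hB : ∀ z ∈ U, DifferentiableAt ℝ B z)
    (hw₁ : ∀ z ∈ U, DifferentiableAt ℝ w₁ z)
    (hw₁' : ∀ z ∈ U, DifferentiableAt ℝ (deriv w₁) z)
    (hw₁'' : ∀ z ∈ U, DifferentiableAt ℝ (deriv (deriv w₁)) z)
    (hw₁ne : ∀ z ∈ U, w₁ z ≠ 0)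
    (hode₁ : ∀ z ∈ U, deriv (deriv (deriv w₁)) z - 4 * B z * deriv w₁ z
      - 2 * deriv B z * w₁ z = 0)
    (hc₁ : ∀ z ∈ U, deriv (deriv w₁) z * w₁ z - 1 / 2 * (deriv w₁ z) ^ 2
      - 2 * B z * (w₁ z) ^ 2 = 2 * c₁)
    (hc₁ne : c₁ ≠ 0)
    (hw₂ : ∀ z ∈ U, DifferentiableAt ℝ w₂ z)
    (hw₂' : ∀ z ∈ U, DifferentiableAt ℝ (deriv w₂) z)
    (hw₂'' : ∀ z ∈ U, DifferentiableAt ℝ (deriv (deriv w₂)) z)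
    (hw₂ne : ∀ z ∈ U, w₂ z ≠ 0)
    (hode₂ : ∀ z ∈ U, deriv (deriv (deriv w₂)) z - 4 * B z * deriv w₂ z
      - 2 * deriv B z * w₂ z = 0)
    (hc₂ : ∀ z ∈ U, deriv (deriv w₂) z * w₂ z - 1 / 2 * (deriv w₂ z) ^ 2
      - 2 * B z * (w₂ z) ^ 2 = 2 * c₂)
    (hc₂ne : c₂ ≠ 0)
    (w : ℝ → ℝ) (hwdef : w = fun t => w₁ t * deriv w₂ t - w₂ t * deriv w₁ t)
    (hwne : ∀ z ∈ U, w z ≠ 0)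
    (hk : ∀ z ∈ U, deriv (deriv w) z * w z - 1 / 2 * (deriv w z) ^ 2
      - 2 * B z * (w z) ^ 2 = 2 * k)
    (hkne : k ≠ 0)
    (y₁ y₂ y : ℝ → ℝ)
    (hy₁ : y₁ = fun t => 6 * c₁ / (w₁ t) ^ 2)
    (hy₂ : y₂ = fun t => 6 * c₂ / (w₂ t) ^ 2)
    (hy : y = fun t => 6 * k / (w t) ^ 2) :
    (∀ z ∈ U, y₁ z * deriv (deriv y₁) z - 5 / 4 * (deriv y₁ z) ^ 2
      + 2 / 3 * (y₁ z) ^ 3 + 4 * B z * (y₁ z) ^ 2 = 0) ∧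
    (∀ z ∈ U, y₂ z * deriv (deriv y₂) z - 5 / 4 * (deriv y₂ z) ^ 2
      + 2 / 3 * (y₂ z) ^ 3 + 4 * B z * (y₂ z) ^ 2 = 0) ∧
    (∀ z ∈ U, y z * deriv (deriv y) z - 5 / 4 * (deriv y z) ^ 2
      + 2 / 3 * (y z) ^ 3 + 4 * B z * (y z) ^ 2 = 0) ∧
    (∀ z ∈ U, y z = 2 * k * (y₁ z * y₂ z) ^ 3
      / (3 * c₁ * c₂ * (y₁ z * deriv y₂ z - y₂ z * deriv y₁ z) ^ 2)) ∧
    (∀ z ∈ U, 16 * c₁ * c₂ * (c₁ * c₂ * (y₁ z - y₂ z) ^ 2 + k * y₁ z * y₂ z) * (y z) ^ 2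
      + 8 * c₁ * c₂ * k * y₁ z * y₂ z * (y₁ z + y₂ z) * y z
      + k ^ 2 * (y₁ z) ^ 2 * (y₂ z) ^ 2 = 0) := by
  -- Differentiability and derivative formulas for the Wronskian w
  have hwd : ∀ z ∈ U, DifferentiableAt ℝ w z := by
    intro z hz
    rw [hwdef]
    exact ((hw₁ z hz).mul (hw₂' z hz)).sub ((hw₂ z hz).mul (hw₁' z hz))
  have hwderiv : ∀ z ∈ U, deriv w z
      = w₁ z * deriv (deriv w₂) z - w₂ z * deriv (deriv w₁) z := by
    intro z hz
    rw [hwdef]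
    rw [(((hw₁ z hz).hasDerivAt.fun_mul (hw₂' z hz).hasDerivAt).fun_sub
      ((hw₂ z hz).hasDerivAt.fun_mul (hw₁' z hz).hasDerivAt)).deriv]
    ring
  have hwd' : ∀ z ∈ U, DifferentiableAt ℝ (deriv w) z := by
    intro z hz
    have hev : deriv w =ᶠ[nhds z]
        fun t => w₁ t * deriv (deriv w₂) t - w₂ t * deriv (deriv w₁) t := by
      filter_upwards [hU.mem_nhds hz] with t ht using hwderiv t ht
    exact (((hw₁ z hz).mul (hw₂'' z hz)).sub
      ((hw₂ z hz).mul (hw₁'' z hz))).congr_of_eventuallyEq hev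
  have hwderiv2 : ∀ z ∈ U, deriv (deriv w) z
      = deriv w₁ z * deriv (deriv w₂) z - deriv w₂ z * deriv (deriv w₁) z
        + 4 * B z * w z := by
    intro z hz
    have hev : deriv w =ᶠ[nhds z]
        fun t => w₁ t * deriv (deriv w₂) t - w₂ t * deriv (deriv w₁) t := by
      filter_upwards [hU.mem_nhds hz] with t ht using hwderiv t ht
    rw [hev.deriv_eq]
    rw [(((hw₁ z hz).hasDerivAt.fun_mul (hw₂'' z hz).hasDerivAt).fun_sub
      ((hw₂ z hz).hasDerivAt.fun_mul (hw₁'' z hz).hasDerivAt)).deriv]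
    have e₁ : deriv (deriv (deriv w₁)) z
        = 4 * B z * deriv w₁ z + 2 * deriv B z * w₁ z := by linarith [hode₁ z hz]
    have e₂ : deriv (deriv (deriv w₂)) z
        = 4 * B z * deriv w₂ z + 2 * deriv B z * w₂ z := by linarith [hode₂ z hz]
    rw [e₁, e₂]
    simp only [hwdef]
    ring
  refine ⟨ermakov_of_first_integral U hU B c₁ w₁ y₁ hw₁ hw₁' hw₁ne hc₁ hy₁,
    ermakov_of_first_integral U hU B c₂ w₂ y₂ hw₂ hw₂' hw₂ne hc₂ hy₂,
    ermakov_of_first_integral U hU B k w y hwd hwd' hwne hk hy, ?_, ?_⟩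
  · -- Bäcklund formula
    intro z hz
    have d1 : deriv y₁ z = -12 * c₁ * deriv w₁ z / w₁ z ^ 3 := by
      rw [hy₁]
      exact (hasDerivAt_const_div_sq c₁ w₁ z (hw₁ z hz) (hw₁ne z hz)).deriv
    have d2 : deriv y₂ z = -12 * c₂ * deriv w₂ z / w₂ z ^ 3 := by
      rw [hy₂]
      exact (hasDerivAt_const_div_sq c₂ w₂ z (hw₂ z hz) (hw₂ne z hz)).deriv
    have hwz : w z = w₁ z * deriv w₂ z - w₂ z * deriv w₁ z := by rw [hwdef]
    have key : y₁ z * deriv y₂ z - y₂ z * deriv y₁ z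
        = -72 * c₁ * c₂ * w z / (w₁ z ^ 3 * w₂ z ^ 3) := by
      rw [d1, d2, hwz]
      simp only [hy₁, hy₂]
      field_simp [hw₁ne z hz, hw₂ne z hz]
      ring
    rw [key]
    simp only [hy, hy₁, hy₂]
    have hwnez := hwne z hz
    field_simp [hw₁ne z hz, hw₂ne z hz]
    ring
  · -- polynomial relation
    intro z hz
    have hwz : w z = w₁ z * deriv w₂ z - w₂ z * deriv w₁ z := by rw [hwdef]
    have hkz := hk z hz
    rw [hwderiv2 z hz, hwderiv z hz] at hkz
    exact poly_rel (w₁ z) (w₂ z) (deriv w₁ z) (deriv w₂ z)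
      (deriv (deriv w₁) z) (deriv (deriv w₂) z) (B z) (w z) c₁ c₂ k (y₁ z) (y₂ z) (y z)
      (hw₁ne z hz) (hw₂ne z hz) (hwne z hz) (hc₁ z hz) (hc₂ z hz) hkz hwz
      (by rw [hy₁]) (by rw [hy₂]) (by rw [hy])
end

section
/- Let U ⊆ ℝ be an open interval, let Ω : U → ℝ be four times differentiable with Ω'(z) ≠ 0 for all z ∈ U, and define B := -(1/2){Ω,z}. Let f : U → U be three times differentiable with f'(z) ≠ 0 for all z ∈ U, and suppose there are real constants a, b, c, d with ad - bc ≠ 0 and c·Ω(z) + d ≠ 0 on U such that Ω(f(z)) = (a·Ω(z) + b)/(c·Ω(z) + d) for all z ∈ U. Let I be a real constant, let u₀ : U → ℝ be a nonvanishing twice-differentiable solution of the Ermakov equation u₀'' = B·u₀ + I/u₀³ on U, and let u₁ : U → ℝ be a nonvanishing twice-differentiable function with u₁(z)² = u₀(f(z))²/f'(z) for all z ∈ U. Then u₁ satisfies the same Ermakov equation u₁'' = B·u₁ + I/u₁³ on U. -/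
private lemma ermakov_deriv_eqOn {U : Set ℝ} (hU : IsOpen U) {F G : ℝ → ℝ}
    (h : ∀ x ∈ U, F x = G x) {z : ℝ} (hz : z ∈ U) : deriv F z = deriv G z :=
  Filter.EventuallyEq.deriv_eq (Filter.eventually_of_mem (hU.mem_nhds hz) h)

private lemma ermakov_aux_schwarz (w1 w2 w3 X1 X2 X3 f1 f2 f3 K e c : ℝ)
    (hw1 : w1 ≠ 0) (hX1 : X1 ≠ 0) (hf1 : f1 ≠ 0) (hK : K ≠ 0) (he : e ≠ 0)
    (E1 : X1 * f1 = e * w1 / K ^ 2)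
    (E2 : X2 * f1 ^ 2 + X1 * f2 = e * (w2 * K - 2 * c * w1 ^ 2) / K ^ 3)
    (E3 : X3 * f1 ^ 3 + 3 * X2 * f1 * f2 + X1 * f3
      = e * (w3 * K ^ 2 - 6 * c * w1 * w2 * K + 6 * c ^ 2 * w1 ^ 3) / K ^ 4) :
    -(1/2) * (w3 / w1 - 3/2 * (w2 / w1) ^ 2)
      = -(1/2) * (X3 / X1 - 3/2 * (X2 / X1) ^ 2) * f1 ^ 2
        - (1/2) * (f3 / f1 - 3/2 * (f2 / f1) ^ 2) := by
  have h1 : X1 = e * w1 / (K ^ 2 * f1) := by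
    field_simp at E1 ⊢; linarith [E1]
  subst h1
  have h2 : X2 = (e * (w2 * K - 2 * c * w1 ^ 2) / K ^ 3 - (e * w1 / (K ^ 2 * f1)) * f2) / f1 ^ 2 := by
    field_simp at E2 ⊢; linarith [E2]
  subst h2
  have h3 : X3 = (e * (w3 * K ^ 2 - 6 * c * w1 * w2 * K + 6 * c ^ 2 * w1 ^ 3) / K ^ 4
      - 3 * ((e * (w2 * K - 2 * c * w1 ^ 2) / K ^ 3 - (e * w1 / (K ^ 2 * f1)) * f2) / f1 ^ 2) * f1 * f2
      - (e * w1 / (K ^ 2 * f1)) * f3) / f1 ^ 3 := by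
    field_simp at E3 ⊢; linarith [E3]
  subst h3
  field_simp
  ring

private lemma ermakov_aux_final (h m f1 f2 f3 Bf Bz u1 u1' u1'' I : ℝ)
    (hh : h ≠ 0) (hf1 : f1 ≠ 0) (hu1 : u1 ≠ 0)
    (G0 : u1 ^ 2 = h ^ 2 / f1)
    (G1 : 2 * u1 * u1' = 2 * h * m - h ^ 2 * f2 / f1 ^ 2)
    (G2 : 2 * u1' ^ 2 + 2 * u1 * u1'' = 2 * m ^ 2 * f1 + 2 * h * ((Bf * h + I / h ^ 3) * f1)
        - 2 * h * m * f2 / f1 - h ^ 2 * (f3 * f1 - 2 * f2 ^ 2) / f1 ^ 3)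
    (Brel : Bz = Bf * f1 ^ 2 - (1/2) * (f3 / f1 - 3/2 * (f2 / f1) ^ 2)) :
    u1'' = Bz * u1 + I / u1 ^ 3 := by
  have hsq : 4 * u1 ^ 2 * u1' ^ 2 = (2 * h * m - h ^ 2 * f2 / f1 ^ 2) ^ 2 := by
    rw [← G1]; ring
  have hu1' : u1' ^ 2 = (2 * h * m - h ^ 2 * f2 / f1 ^ 2) ^ 2 / (4 * u1 ^ 2) := by
    rw [eq_div_iff (by positivity)]; linarith [hsq]
  have this1 : 2 * u1 * u1'' = 2 * m ^ 2 * f1 + 2 * h * ((Bf * h + I / h ^ 3) * f1)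
        - 2 * h * m * f2 / f1 - h ^ 2 * (f3 * f1 - 2 * f2 ^ 2) / f1 ^ 3
        - 2 * ((2 * h * m - h ^ 2 * f2 / f1 ^ 2) ^ 2 / (4 * u1 ^ 2)) := by
    rw [← hu1']; linarith [G2]
  have key1 : 2 * u1 * u1'' = 2 * Bz * (h ^ 2 / f1) + 2 * I / (h ^ 2 / f1) := by
    rw [this1, G0, Brel]; field_simp; ring
  have key2 : 2 * u1 * (Bz * u1 + I / u1 ^ 3) = 2 * Bz * (h ^ 2 / f1) + 2 * I / (h ^ 2 / f1) := by
    rw [← G0]; field_simp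
  exact mul_left_cancel₀ (by simp [hu1] : (2 : ℝ) * u1 ≠ 0) (key1.trans key2.symm)

/-- Bäcklund transformation for the Ermakov equation: if Ω(f(z)) is a Möbius
transformation of Ω(z), where -2B = {Ω,z}, then u₁² = u₀(f(z))²/f'(z) maps solutions of the
Ermakov equation u'' = B·u + I/u³ to solutions. -/
theorem ermakov_schwarzian_backlund
    (U : Set ℝ) (hU : IsOpen U) (hUconn : IsConnected U)
    (Ω f B u₀ u₁ : ℝ → ℝ) (a b c d I : ℝ)
    (hΩ : ∀ z ∈ U, DifferentiableAt ℝ Ω z)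
    (hΩ' : ∀ z ∈ U, DifferentiableAt ℝ (deriv Ω) z)
    (hΩ'' : ∀ z ∈ U, DifferentiableAt ℝ (deriv (deriv Ω)) z)
    (hΩ''' : ∀ z ∈ U, DifferentiableAt ℝ (deriv (deriv (deriv Ω))) z)
    (hΩ'ne : ∀ z ∈ U, deriv Ω z ≠ 0)
    (hB : B = fun z => -(1 / 2) * (deriv (deriv (deriv Ω)) z / deriv Ω z
      - 3 / 2 * (deriv (deriv Ω) z / deriv Ω z) ^ 2))
    (hfmap : ∀ z ∈ U, f z ∈ U)
    (hf : ∀ z ∈ U, DifferentiableAt ℝ f z)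
    (hf' : ∀ z ∈ U, DifferentiableAt ℝ (deriv f) z)
    (hf'' : ∀ z ∈ U, DifferentiableAt ℝ (deriv (deriv f)) z)
    (hf'ne : ∀ z ∈ U, deriv f z ≠ 0)
    (hdet : a * d - b * c ≠ 0)
    (hden : ∀ z ∈ U, c * Ω z + d ≠ 0)
    (hmob : ∀ z ∈ U, Ω (f z) = (a * Ω z + b) / (c * Ω z + d))
    (hu₀ : ∀ z ∈ U, DifferentiableAt ℝ u₀ z)
    (hu₀' : ∀ z ∈ U, DifferentiableAt ℝ (deriv u₀) z)
    (hu₀ne : ∀ z ∈ U, u₀ z ≠ 0)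
    (hode₀ : ∀ z ∈ U, deriv (deriv u₀) z = B z * u₀ z + I / (u₀ z) ^ 3)
    (hu₁ : ∀ z ∈ U, DifferentiableAt ℝ u₁ z)
    (hu₁' : ∀ z ∈ U, DifferentiableAt ℝ (deriv u₁) z)
    (hu₁ne : ∀ z ∈ U, u₁ z ≠ 0)
    (hsq : ∀ z ∈ U, (u₁ z) ^ 2 = (u₀ (f z)) ^ 2 / deriv f z) :
    ∀ z ∈ U, deriv (deriv u₁) z = B z * u₁ z + I / (u₁ z) ^ 3 := by
  -- abbreviation for the Möbius determinant
  set e := a * d - b * c with he_def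
  -- Step E1 : first derivative of the Möbius relation
  have hE1 : ∀ z ∈ U, deriv Ω (f z) * deriv f z
      = e * deriv Ω z / (c * Ω z + d) ^ 2 := by
    intro z hz
    have hfz := hfmap z hz
    have hL : HasDerivAt (fun x => Ω (f x)) (deriv Ω (f z) * deriv f z) z :=
      (hΩ (f z) hfz).hasDerivAt.comp z (hf z hz).hasDerivAt
    have hR : HasDerivAt (fun x => (a * Ω x + b) / (c * Ω x + d))
        ((a * deriv Ω z * (c * Ω z + d) - (a * Ω z + b) * (c * deriv Ω z))
          / (c * Ω z + d) ^ 2) z :=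
      ((((hΩ z hz).hasDerivAt.const_mul a).add_const b).div
        (((hΩ z hz).hasDerivAt.const_mul c).add_const d) (hden z hz))
    have hE : deriv (fun x => Ω (f x)) z
        = deriv (fun x => (a * Ω x + b) / (c * Ω x + d)) z :=
      ermakov_deriv_eqOn hU hmob hz
    rw [hL.deriv, hR.deriv] at hE
    rw [hE]
    have hK := hden z hz
    field_simp
    ring
  -- Step E2 : second derivative
  have hE2 : ∀ z ∈ U, deriv (deriv Ω) (f z) * (deriv f z) ^ 2
      + deriv Ω (f z) * deriv (deriv f) z
      = e * (deriv (deriv Ω) z * (c * Ω z + d) - 2 * c * (deriv Ω z) ^ 2)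
        / (c * Ω z + d) ^ 3 := by
    intro z hz
    have hfz := hfmap z hz
    have hE : deriv (fun x => deriv Ω (f x) * deriv f x) z
        = deriv (fun x => e * deriv Ω x / (c * Ω x + d) ^ 2) z :=
      ermakov_deriv_eqOn hU hE1 hz
    have hL : HasDerivAt (fun x => deriv Ω (f x) * deriv f x)
        (deriv (deriv Ω) (f z) * deriv f z * deriv f z
          + deriv Ω (f z) * deriv (deriv f) z) z :=
      ((hΩ' (f z) hfz).hasDerivAt.comp z (hf z hz).hasDerivAt).mul (hf' z hz).hasDerivAt
    have hR : HasDerivAt (fun x => e * deriv Ω x / (c * Ω x + d) ^ 2)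
        ((e * deriv (deriv Ω) z * (c * Ω z + d) ^ 2
          - e * deriv Ω z * ((2 : ℕ) * (c * Ω z + d) ^ 1 * (c * deriv Ω z)))
          / ((c * Ω z + d) ^ 2) ^ 2) z :=
      ((hΩ' z hz).hasDerivAt.const_mul e).div
        ((((hΩ z hz).hasDerivAt.const_mul c).add_const d).pow 2)
        (pow_ne_zero 2 (hden z hz))
    rw [hL.deriv, hR.deriv] at hE
    have hK := hden z hz
    rw [show deriv (deriv Ω) (f z) * (deriv f z) ^ 2 + deriv Ω (f z) * deriv (deriv f) z
        = deriv (deriv Ω) (f z) * deriv f z * deriv f z + deriv Ω (f z) * deriv (deriv f) z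
        from by ring, hE]
    push_cast
    field_simp
  -- Step E3 : third derivative
  have hE3 : ∀ z ∈ U, deriv (deriv (deriv Ω)) (f z) * (deriv f z) ^ 3
      + 3 * deriv (deriv Ω) (f z) * deriv f z * deriv (deriv f) z
      + deriv Ω (f z) * deriv (deriv (deriv f)) z
      = e * (deriv (deriv (deriv Ω)) z * (c * Ω z + d) ^ 2
          - 6 * c * deriv Ω z * deriv (deriv Ω) z * (c * Ω z + d)
          + 6 * c ^ 2 * (deriv Ω z) ^ 3)
        / (c * Ω z + d) ^ 4 := by
    intro z hz
    have hfz := hfmap z hz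
    have hE : deriv (fun x => deriv (deriv Ω) (f x) * (deriv f x) ^ 2
          + deriv Ω (f x) * deriv (deriv f) x) z
        = deriv (fun x => e * (deriv (deriv Ω) x * (c * Ω x + d)
            - 2 * c * (deriv Ω x) ^ 2) / (c * Ω x + d) ^ 3) z :=
      ermakov_deriv_eqOn hU hE2 hz
    have hL : HasDerivAt (fun x => deriv (deriv Ω) (f x) * (deriv f x) ^ 2
          + deriv Ω (f x) * deriv (deriv f) x)
        (deriv (deriv (deriv Ω)) (f z) * deriv f z * (deriv f z) ^ 2
          + deriv (deriv Ω) (f z) * ((2 : ℕ) * (deriv f z) ^ 1 * deriv (deriv f) z)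
          + (deriv (deriv Ω) (f z) * deriv f z * deriv (deriv f) z
            + deriv Ω (f z) * deriv (deriv (deriv f)) z)) z :=
      (((hΩ'' (f z) hfz).hasDerivAt.comp z (hf z hz).hasDerivAt).mul
          ((hf' z hz).hasDerivAt.pow 2)).add
        (((hΩ' (f z) hfz).hasDerivAt.comp z (hf z hz).hasDerivAt).mul
          (hf'' z hz).hasDerivAt)
    have hR : HasDerivAt (fun x => e * (deriv (deriv Ω) x * (c * Ω x + d)
          - 2 * c * (deriv Ω x) ^ 2) / (c * Ω x + d) ^ 3)
        ((e * (deriv (deriv (deriv Ω)) z * (c * Ω z + d)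
              + deriv (deriv Ω) z * (c * deriv Ω z)
              - 2 * c * ((2 : ℕ) * (deriv Ω z) ^ 1 * deriv (deriv Ω) z))
            * (c * Ω z + d) ^ 3
          - e * (deriv (deriv Ω) z * (c * Ω z + d) - 2 * c * (deriv Ω z) ^ 2)
            * ((3 : ℕ) * (c * Ω z + d) ^ 2 * (c * deriv Ω z)))
          / ((c * Ω z + d) ^ 3) ^ 2) z :=
      ((((hΩ'' z hz).hasDerivAt.mul
            (((hΩ z hz).hasDerivAt.const_mul c).add_const d)).sub
          (((hΩ' z hz).hasDerivAt.pow 2).const_mul (2 * c))).const_mul e).div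
        ((((hΩ z hz).hasDerivAt.const_mul c).add_const d).pow 3)
        (pow_ne_zero 3 (hden z hz))
    rw [hL.deriv, hR.deriv] at hE
    have hK := hden z hz
    rw [show deriv (deriv (deriv Ω)) (f z) * (deriv f z) ^ 3
        + 3 * deriv (deriv Ω) (f z) * deriv f z * deriv (deriv f) z
        + deriv Ω (f z) * deriv (deriv (deriv f)) z
        = deriv (deriv (deriv Ω)) (f z) * deriv f z * (deriv f z) ^ 2
          + deriv (deriv Ω) (f z) * ((2 : ℕ) * (deriv f z) ^ 1 * deriv (deriv f) z)
          + (deriv (deriv Ω) (f z) * deriv f z * deriv (deriv f) z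
            + deriv Ω (f z) * deriv (deriv (deriv f)) z)
        from by push_cast; ring, hE]
    push_cast
    field_simp
    ring
  -- the Schwarzian transformation relation for B
  have hrel : ∀ z ∈ U, B z = B (f z) * (deriv f z) ^ 2
      - (1/2) * (deriv (deriv (deriv f)) z / deriv f z
        - 3/2 * (deriv (deriv f) z / deriv f z) ^ 2) := by
    intro z hz
    have hfz := hfmap z hz
    simp only [hB]
    exact ermakov_aux_schwarz (deriv Ω z) (deriv (deriv Ω) z) (deriv (deriv (deriv Ω)) z)
      (deriv Ω (f z)) (deriv (deriv Ω) (f z)) (deriv (deriv (deriv Ω)) (f z))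
      (deriv f z) (deriv (deriv f) z) (deriv (deriv (deriv f)) z)
      (c * Ω z + d) e c
      (hΩ'ne z hz) (hΩ'ne (f z) hfz) (hf'ne z hz) (hden z hz) hdet
      (hE1 z hz) (hE2 z hz) (hE3 z hz)
  -- the first-derivative relation for u₁
  have hG1 : ∀ z ∈ U, 2 * u₁ z * deriv u₁ z
      = 2 * u₀ (f z) * deriv u₀ (f z)
        - u₀ (f z) ^ 2 * deriv (deriv f) z / (deriv f z) ^ 2 := by
    intro z hz
    have hfz := hfmap z hz
    have hW : HasDerivAt (fun x => u₀ (f x) ^ 2 / deriv f x)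
        ((((2 : ℕ) * u₀ (f z) ^ 1 * (deriv u₀ (f z) * deriv f z)) * deriv f z
          - u₀ (f z) ^ 2 * deriv (deriv f) z) / (deriv f z) ^ 2) z := by
      exact (((hu₀ (f z) hfz).hasDerivAt.comp z (hf z hz).hasDerivAt).pow 2).div
        (hf' z hz).hasDerivAt (hf'ne z hz)
    have hE : deriv (fun x => u₁ x ^ 2) z
        = deriv (fun x => u₀ (f x) ^ 2 / deriv f x) z :=
      ermakov_deriv_eqOn hU hsq hz
    have hL : HasDerivAt (fun x => u₁ x ^ 2)
        ((2 : ℕ) * u₁ z ^ 1 * deriv u₁ z) z := (hu₁ z hz).hasDerivAt.pow 2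
    rw [hL.deriv, hW.deriv] at hE
    have hf1 := hf'ne z hz
    rw [show 2 * u₁ z * deriv u₁ z = ((2 : ℕ) * u₁ z ^ 1 * deriv u₁ z : ℝ)
        from by push_cast; ring, hE]
    push_cast
    field_simp
  -- the second-derivative relation for u₁
  have hG2 : ∀ z ∈ U, 2 * (deriv u₁ z) ^ 2 + 2 * u₁ z * deriv (deriv u₁) z
      = 2 * (deriv u₀ (f z)) ^ 2 * deriv f z
        + 2 * u₀ (f z) * ((B (f z) * u₀ (f z) + I / u₀ (f z) ^ 3) * deriv f z)
        - 2 * u₀ (f z) * deriv u₀ (f z) * deriv (deriv f) z / deriv f z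
        - u₀ (f z) ^ 2 * (deriv (deriv (deriv f)) z * deriv f z
            - 2 * (deriv (deriv f) z) ^ 2) / (deriv f z) ^ 3 := by
    intro z hz
    have hfz := hfmap z hz
    have hE : deriv (fun x => 2 * u₁ x * deriv u₁ x) z
        = deriv (fun x => 2 * u₀ (f x) * deriv u₀ (f x)
            - u₀ (f x) ^ 2 * deriv (deriv f) x / (deriv f x) ^ 2) z :=
      ermakov_deriv_eqOn hU hG1 hz
    have hL : HasDerivAt (fun x => 2 * u₁ x * deriv u₁ x)
        (2 * deriv u₁ z * deriv u₁ z + 2 * u₁ z * deriv (deriv u₁) z) z :=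
      ((hu₁ z hz).hasDerivAt.const_mul 2).mul (hu₁' z hz).hasDerivAt
    have hR : HasDerivAt (fun x => 2 * u₀ (f x) * deriv u₀ (f x)
          - u₀ (f x) ^ 2 * deriv (deriv f) x / (deriv f x) ^ 2)
        ((2 * (deriv u₀ (f z) * deriv f z) * deriv u₀ (f z)
            + 2 * u₀ (f z) * (deriv (deriv u₀) (f z) * deriv f z))
          - ((((2 : ℕ) * u₀ (f z) ^ 1 * (deriv u₀ (f z) * deriv f z)) * deriv (deriv f) z
              + u₀ (f z) ^ 2 * deriv (deriv (deriv f)) z) * (deriv f z) ^ 2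
            - u₀ (f z) ^ 2 * deriv (deriv f) z
              * ((2 : ℕ) * (deriv f z) ^ 1 * deriv (deriv f) z))
            / ((deriv f z) ^ 2) ^ 2) z :=
      ((((hu₀ (f z) hfz).hasDerivAt.comp z (hf z hz).hasDerivAt).const_mul 2).mul
          ((hu₀' (f z) hfz).hasDerivAt.comp z (hf z hz).hasDerivAt)).sub
        (((((hu₀ (f z) hfz).hasDerivAt.comp z (hf z hz).hasDerivAt).pow 2).mul
            (hf'' z hz).hasDerivAt).div
          ((hf' z hz).hasDerivAt.pow 2) (pow_ne_zero 2 (hf'ne z hz)))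
    rw [hL.deriv, hR.deriv] at hE
    have hf1 := hf'ne z hz
    have hh := hu₀ne (f z) hfz
    rw [show 2 * (deriv u₁ z) ^ 2 + 2 * u₁ z * deriv (deriv u₁) z
        = 2 * deriv u₁ z * deriv u₁ z + 2 * u₁ z * deriv (deriv u₁) z from by ring, hE,
      hode₀ (f z) hfz]
    push_cast
    field_simp
    ring
  -- conclusion
  intro z hz
  have hfz := hfmap z hz
  exact ermakov_aux_final (u₀ (f z)) (deriv u₀ (f z)) (deriv f z) (deriv (deriv f) z)
    (deriv (deriv (deriv f)) z) (B (f z)) (B z) (u₁ z) (deriv u₁ z) (deriv (deriv u₁) z) I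
    (hu₀ne (f z) hfz) (hf'ne z hz) (hu₁ne z hz)
    (hsq z hz)
    (hG1 z hz)
    (hG2 z hz)
    (hrel z hz)
end

section
/- Let U ⊆ ℝ be an open interval, let Ω : U → ℝ be four times differentiable with Ω'(z) ≠ 0 for all z ∈ U, and define B := -(1/2){Ω,z}. Let f : U → U be three times differentiable with f'(z) ≠ 0 for all z ∈ U, and suppose there are real constants a, b, c, d with ad - bc ≠ 0 and c·Ω(z) + d ≠ 0 on U such that Ω(f(z)) = (a·Ω(z) + b)/(c·Ω(z) + d) for all z ∈ U. If y₀ : U → ℝ is a twice-differentiable solution of the Painlevé XXV–Ermakov equation with A = 0, y₀·y₀'' - (5/4)(y₀')² + (2/3)y₀³ + 4B·y₀² = 0, on U, then y₁(z) := y₀(f(z))·f'(z)² is also a solution of the same equation on U. -/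
lemma pxxv_deriv_congr {U : Set ℝ} (hU : IsOpen U) {g h : ℝ → ℝ}
    (hgh : ∀ x ∈ U, g x = h x) {z : ℝ} (hz : z ∈ U) : deriv g z = deriv h z :=
  Filter.EventuallyEq.deriv_eq (Filter.eventuallyEq_of_mem (hU.mem_nhds hz) hgh)

lemma pxxv_key (q1 q2 q3 p1 p2 p3 c D Δ w1 w2 w3 : ℝ)
    (hq1 : q1 ≠ 0) (hp1 : p1 ≠ 0) (hD : D ≠ 0) (hΔ : Δ ≠ 0)
    (e1 : w1 * p1 = Δ * q1 / D ^ 2)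
    (e2 : w2 * p1 ^ 2 + w1 * p2 = Δ * (q2 * D - 2 * c * q1 ^ 2) / D ^ 3)
    (e3 : w3 * p1 ^ 3 + 3 * w2 * p1 * p2 + w1 * p3
      = Δ * (q3 * D ^ 2 - 6 * c * q1 * q2 * D + 6 * c ^ 2 * q1 ^ 3) / D ^ 4) :
    2 * (w3 / w1 - 3 / 2 * (w2 / w1) ^ 2) * p1 ^ 6 + 2 * p1 ^ 3 * p3 - 3 * p1 ^ 2 * p2 ^ 2
      - 2 * (q3 / q1 - 3 / 2 * (q2 / q1) ^ 2) * p1 ^ 4 = 0 := by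
  have hw1 : w1 = Δ * q1 / (D ^ 2 * p1) := by
    field_simp at e1 ⊢; linarith
  have hw1ne : w1 ≠ 0 := by
    rw [hw1]
    exact div_ne_zero (mul_ne_zero hΔ hq1) (by positivity)
  have hw2 : w2 = (Δ * (q2 * D - 2 * c * q1 ^ 2) / D ^ 3 - w1 * p2) / p1 ^ 2 := by
    field_simp at e2 ⊢; linarith
  have hw3 : w3 = (Δ * (q3 * D ^ 2 - 6 * c * q1 * q2 * D + 6 * c ^ 2 * q1 ^ 3) / D ^ 4
      - 3 * w2 * p1 * p2 - w1 * p3) / p1 ^ 3 := by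
    field_simp at e3 ⊢; linarith
  subst hw3 hw2 hw1
  field_simp
  ring

/-- Bäcklund transformation for the Painlevé XXV–Ermakov equation with
A = 0: if Ω(f(z)) is a Möbius transformation of Ω(z), where -2B = {Ω,z}, then
y₁ = y₀(f(z))·f'(z)² maps solutions to solutions. -/
theorem painleveXXV_ermakov_schwarzian_backlund_A_zero
    (U : Set ℝ) (hU : IsOpen U) (hUconn : IsConnected U)
    (Ω f B y₀ : ℝ → ℝ) (a b c d : ℝ)
    (hΩ : ∀ z ∈ U, DifferentiableAt ℝ Ω z)
    (hΩ' : ∀ z ∈ U, DifferentiableAt ℝ (deriv Ω) z)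
    (hΩ'' : ∀ z ∈ U, DifferentiableAt ℝ (deriv (deriv Ω)) z)
    (hΩ''' : ∀ z ∈ U, DifferentiableAt ℝ (deriv (deriv (deriv Ω))) z)
    (hΩ'ne : ∀ z ∈ U, deriv Ω z ≠ 0)
    (hB : B = fun z => -(1 / 2) * (deriv (deriv (deriv Ω)) z / deriv Ω z
      - 3 / 2 * (deriv (deriv Ω) z / deriv Ω z) ^ 2))
    (hfmap : ∀ z ∈ U, f z ∈ U)
    (hf : ∀ z ∈ U, DifferentiableAt ℝ f z)
    (hf' : ∀ z ∈ U, DifferentiableAt ℝ (deriv f) z)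
    (hf'' : ∀ z ∈ U, DifferentiableAt ℝ (deriv (deriv f)) z)
    (hf'ne : ∀ z ∈ U, deriv f z ≠ 0)
    (hdet : a * d - b * c ≠ 0)
    (hden : ∀ z ∈ U, c * Ω z + d ≠ 0)
    (hmob : ∀ z ∈ U, Ω (f z) = (a * Ω z + b) / (c * Ω z + d))
    (hy₀ : ∀ z ∈ U, DifferentiableAt ℝ y₀ z)
    (hy₀' : ∀ z ∈ U, DifferentiableAt ℝ (deriv y₀) z)
    (hode₀ : ∀ z ∈ U, y₀ z * deriv (deriv y₀) z - 5 / 4 * (deriv y₀ z) ^ 2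
      + 2 / 3 * (y₀ z) ^ 3 + 4 * B z * (y₀ z) ^ 2 = 0) :
    ∀ z ∈ U,
      (fun t => y₀ (f t) * (deriv f t) ^ 2) z
        * deriv (deriv (fun t => y₀ (f t) * (deriv f t) ^ 2)) z
      - 5 / 4 * (deriv (fun t => y₀ (f t) * (deriv f t) ^ 2) z) ^ 2
      + 2 / 3 * ((fun t => y₀ (f t) * (deriv f t) ^ 2) z) ^ 3
      + 4 * B z * ((fun t => y₀ (f t) * (deriv f t) ^ 2) z) ^ 2 = 0 := by
  -- first derivative of Ω ∘ f
  have CF1 : ∀ z ∈ U, deriv (fun t => Ω (f t)) z = deriv Ω (f z) * deriv f z :=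
    fun z hz => deriv_comp z (hΩ _ (hfmap z hz)) (hf z hz)
  -- second derivative of Ω ∘ f
  have CF2 : ∀ z ∈ U, deriv (deriv (fun t => Ω (f t))) z
      = deriv (deriv Ω) (f z) * deriv f z ^ 2 + deriv Ω (f z) * deriv (deriv f) z := by
    intro z hz
    have h1 : HasDerivAt (fun t => deriv Ω (f t) * deriv f t)
        (deriv (deriv Ω) (f z) * deriv f z * deriv f z
          + deriv Ω (f z) * deriv (deriv f) z) z :=
      (((hΩ' _ (hfmap z hz)).hasDerivAt.comp z (hf z hz).hasDerivAt).mul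
        (hf' z hz).hasDerivAt)
    rw [pxxv_deriv_congr hU CF1 hz, h1.deriv]; ring
  -- third derivative of Ω ∘ f
  have CF3 : ∀ z ∈ U, deriv (deriv (deriv (fun t => Ω (f t)))) z
      = deriv (deriv (deriv Ω)) (f z) * deriv f z ^ 3
        + 3 * deriv (deriv Ω) (f z) * deriv f z * deriv (deriv f) z
        + deriv Ω (f z) * deriv (deriv (deriv f)) z := by
    intro z hz
    have h1 : HasDerivAt
        (fun t => deriv (deriv Ω) (f t) * deriv f t ^ 2 + deriv Ω (f t) * deriv (deriv f) t)
        ((deriv (deriv (deriv Ω)) (f z) * deriv f z) * deriv f z ^ 2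
          + deriv (deriv Ω) (f z) * ((2 : ℕ) * deriv f z ^ (2 - 1) * deriv (deriv f) z)
          + ((deriv (deriv Ω) (f z) * deriv f z) * deriv (deriv f) z
            + deriv Ω (f z) * deriv (deriv (deriv f)) z)) z :=
      ((((hΩ'' _ (hfmap z hz)).hasDerivAt.comp z (hf z hz).hasDerivAt).mul
          ((hf' z hz).hasDerivAt.pow 2)).add
        (((hΩ' _ (hfmap z hz)).hasDerivAt.comp z (hf z hz).hasDerivAt).mul
          (hf'' z hz).hasDerivAt))
    rw [pxxv_deriv_congr hU CF2 hz, h1.deriv]; push_cast; ring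
  -- Möbius relation: first derivative
  have E1 : ∀ z ∈ U, deriv Ω (f z) * deriv f z
      = (a * d - b * c) * deriv Ω z / (c * Ω z + d) ^ 2 := by
    intro z hz
    rw [← CF1 z hz, pxxv_deriv_congr hU hmob hz]
    have hnum : HasDerivAt (fun t => a * Ω t + b) (a * deriv Ω z) z :=
      ((hΩ z hz).hasDerivAt.const_mul a).add_const b
    have hde : HasDerivAt (fun t => c * Ω t + d) (c * deriv Ω z) z :=
      ((hΩ z hz).hasDerivAt.const_mul c).add_const d
    rw [(hnum.fun_div hde (hden z hz)).deriv,
      div_eq_div_iff (pow_ne_zero _ (hden z hz)) (pow_ne_zero _ (hden z hz))]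
    ring
  -- Möbius relation: second derivative
  have E2 : ∀ z ∈ U, deriv (deriv Ω) (f z) * deriv f z ^ 2 + deriv Ω (f z) * deriv (deriv f) z
      = (a * d - b * c) * (deriv (deriv Ω) z * (c * Ω z + d) - 2 * c * deriv Ω z ^ 2)
        / (c * Ω z + d) ^ 3 := by
    intro z hz
    rw [← CF2 z hz]
    have hagree : ∀ x ∈ U, deriv (fun t => Ω (f t)) x
        = (a * d - b * c) * deriv Ω x / (c * Ω x + d) ^ 2 :=
      fun x hx => (CF1 x hx).trans (E1 x hx)
    rw [pxxv_deriv_congr hU hagree hz]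
    have hnum : HasDerivAt (fun t => (a * d - b * c) * deriv Ω t)
        ((a * d - b * c) * deriv (deriv Ω) z) z :=
      (hΩ' z hz).hasDerivAt.const_mul _
    have hde : HasDerivAt (fun t => (c * Ω t + d) ^ 2)
        ((2 : ℕ) * (c * Ω z + d) ^ (2 - 1) * (c * deriv Ω z)) z :=
      (((hΩ z hz).hasDerivAt.const_mul c).add_const d).pow 2
    rw [(hnum.fun_div hde (pow_ne_zero 2 (hden z hz))).deriv,
      div_eq_div_iff (pow_ne_zero 2 (pow_ne_zero 2 (hden z hz))) (pow_ne_zero 3 (hden z hz))]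
    push_cast; ring
  -- Möbius relation: third derivative
  have E3 : ∀ z ∈ U, deriv (deriv (deriv Ω)) (f z) * deriv f z ^ 3
        + 3 * deriv (deriv Ω) (f z) * deriv f z * deriv (deriv f) z
        + deriv Ω (f z) * deriv (deriv (deriv f)) z
      = (a * d - b * c) * (deriv (deriv (deriv Ω)) z * (c * Ω z + d) ^ 2
          - 6 * c * deriv Ω z * deriv (deriv Ω) z * (c * Ω z + d)
          + 6 * c ^ 2 * deriv Ω z ^ 3) / (c * Ω z + d) ^ 4 := by
    intro z hz
    rw [← CF3 z hz]
    have hagree : ∀ x ∈ U, deriv (deriv (fun t => Ω (f t))) x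
        = (a * d - b * c) * (deriv (deriv Ω) x * (c * Ω x + d) - 2 * c * deriv Ω x ^ 2)
          / (c * Ω x + d) ^ 3 :=
      fun x hx => (CF2 x hx).trans (E2 x hx)
    rw [pxxv_deriv_congr hU hagree hz]
    have hde0 : HasDerivAt (fun t => c * Ω t + d) (c * deriv Ω z) z :=
      ((hΩ z hz).hasDerivAt.const_mul c).add_const d
    have hnum : HasDerivAt
        (fun t => (a * d - b * c) * (deriv (deriv Ω) t * (c * Ω t + d) - 2 * c * deriv Ω t ^ 2))
        ((a * d - b * c) * ((deriv (deriv (deriv Ω)) z * (c * Ω z + d)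
          + deriv (deriv Ω) z * (c * deriv Ω z))
          - 2 * c * ((2 : ℕ) * deriv Ω z ^ (2 - 1) * deriv (deriv Ω) z))) z :=
      ((((hΩ'' z hz).hasDerivAt.mul hde0).sub
        (((hΩ' z hz).hasDerivAt.pow 2).const_mul (2 * c))).const_mul _)
    have hde : HasDerivAt (fun t => (c * Ω t + d) ^ 3)
        ((3 : ℕ) * (c * Ω z + d) ^ (3 - 1) * (c * deriv Ω z)) z := hde0.pow 3
    rw [(hnum.fun_div hde (pow_ne_zero 3 (hden z hz))).deriv,
      div_eq_div_iff (pow_ne_zero 2 (pow_ne_zero 3 (hden z hz))) (pow_ne_zero 4 (hden z hz))]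
    push_cast; ring
  intro z hz
  have hw : f z ∈ U := hfmap z hz
  -- derivatives of y₁
  have Dy1 : ∀ x ∈ U, deriv (fun t => y₀ (f t) * (deriv f t) ^ 2) x
      = deriv y₀ (f x) * deriv f x ^ 3 + 2 * y₀ (f x) * deriv f x * deriv (deriv f) x := by
    intro x hx
    have h1 : HasDerivAt (fun t => y₀ (f t) * (deriv f t) ^ 2)
        ((deriv y₀ (f x) * deriv f x) * deriv f x ^ 2
          + y₀ (f x) * ((2 : ℕ) * deriv f x ^ (2 - 1) * deriv (deriv f) x)) x :=
      (((hy₀ _ (hfmap x hx)).hasDerivAt.comp x (hf x hx).hasDerivAt).mul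
        ((hf' x hx).hasDerivAt.pow 2))
    rw [h1.deriv]; push_cast; ring
  have Dy2 : deriv (deriv (fun t => y₀ (f t) * (deriv f t) ^ 2)) z
      = deriv (deriv y₀) (f z) * deriv f z ^ 4
        + 5 * deriv y₀ (f z) * deriv f z ^ 2 * deriv (deriv f) z
        + 2 * y₀ (f z) * deriv (deriv f) z ^ 2
        + 2 * y₀ (f z) * deriv f z * deriv (deriv (deriv f)) z := by
    have h1 : HasDerivAt
        (fun t => deriv y₀ (f t) * deriv f t ^ 3 + 2 * y₀ (f t) * deriv f t * deriv (deriv f) t)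
        ((deriv (deriv y₀) (f z) * deriv f z) * deriv f z ^ 3
          + deriv y₀ (f z) * ((3 : ℕ) * deriv f z ^ (3 - 1) * deriv (deriv f) z)
          + (((2 * (deriv y₀ (f z) * deriv f z)) * deriv f z
              + 2 * y₀ (f z) * deriv (deriv f) z) * deriv (deriv f) z
            + 2 * y₀ (f z) * deriv f z * deriv (deriv (deriv f)) z)) z :=
      ((((hy₀' _ hw).hasDerivAt.comp z (hf z hz).hasDerivAt).mul
          ((hf' z hz).hasDerivAt.pow 3)).add
        (((((hy₀ _ hw).hasDerivAt.comp z (hf z hz).hasDerivAt).const_mul 2).mul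
            (hf' z hz).hasDerivAt).mul (hf'' z hz).hasDerivAt))
    rw [pxxv_deriv_congr hU Dy1 hz, h1.deriv]; push_cast; ring
  -- Schwarzian/Möbius key identity
  have K : 4 * B z * deriv f z ^ 4 - 4 * B (f z) * deriv f z ^ 6
      + 2 * deriv f z ^ 3 * deriv (deriv (deriv f)) z
      - 3 * deriv f z ^ 2 * deriv (deriv f) z ^ 2 = 0 := by
    have := pxxv_key (deriv Ω z) (deriv (deriv Ω) z) (deriv (deriv (deriv Ω)) z)
      (deriv f z) (deriv (deriv f) z) (deriv (deriv (deriv f)) z)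
      c (c * Ω z + d) (a * d - b * c)
      (deriv Ω (f z)) (deriv (deriv Ω) (f z)) (deriv (deriv (deriv Ω)) (f z))
      (hΩ'ne z hz) (hf'ne z hz) (hden z hz) hdet (E1 z hz) (E2 z hz) (E3 z hz)
    rw [hB]
    simp only []
    linarith
  have hode := hode₀ (f z) hw
  simp only []
  rw [Dy2, Dy1 z hz]
  linear_combination deriv f z ^ 6 * hode + (y₀ (f z)) ^ 2 * K
end

section
/- Let U ⊆ ℝ be an open interval, let Ω : U → ℝ be four times differentiable with Ω'(z) ≠ 0 for all z ∈ U, and define B := -(1/2){Ω,z}. Let f : U → U be three times differentiable with f'(z) ≠ 0 for all z ∈ U, and suppose there are real constants a, b, c, d with ad - bc ≠ 0 and c·Ω(z) + d ≠ 0 on U such that Ω(f(z)) = (a·Ω(z) + b)/(c·Ω(z) + d) for all z ∈ U. Let A : U → ℝ be differentiable with A(f(z))·f'(z)³ = A(z) for all z ∈ U. If y₀ : U → ℝ is a twice-differentiable solution of the Painlevé XXV–Ermakov equation y₀·y₀'' - (5/4)(y₀')² + (2/3)y₀³ + 3A·y₀' + 4B·y₀² - 2A'·y₀ - A² = 0 on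 U, then y₁(z) := y₀(f(z))·f'(z)² is also a solution of the same equation (with the same coefficients A, B) on U. -/
set_option maxHeartbeats 2000000

lemma derivCongrOn {U : Set ℝ} (hU : IsOpen U) {φ ψ : ℝ → ℝ}
    (h : ∀ t ∈ U, φ t = ψ t) {z : ℝ} (hz : z ∈ U) : deriv φ z = deriv ψ z :=
  Filter.EventuallyEq.deriv_eq (Filter.eventuallyEq_of_mem (hU.mem_nhds hz) h)

/-- Bäcklund transformation for the full Painlevé XXV–Ermakov equation:
if Ω(f(z)) is a Möbius transformation of Ω(z), where -2B = {Ω,z}, and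
A(f(z))·f'(z)³ = A(z), then y₁ = y₀(f(z))·f'(z)² maps solutions to solutions. -/
theorem painleveXXV_ermakov_schwarzian_backlund
    (U : Set ℝ) (hU : IsOpen U) (hUconn : IsConnected U)
    (Ω f A B y₀ : ℝ → ℝ) (a b c d : ℝ)
    (hΩ : ∀ z ∈ U, DifferentiableAt ℝ Ω z)
    (hΩ' : ∀ z ∈ U, DifferentiableAt ℝ (deriv Ω) z)
    (hΩ'' : ∀ z ∈ U, DifferentiableAt ℝ (deriv (deriv Ω)) z)
    (hΩ''' : ∀ z ∈ U, DifferentiableAt ℝ (deriv (deriv (deriv Ω))) z)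
    (hΩ'ne : ∀ z ∈ U, deriv Ω z ≠ 0)
    (hB : B = fun z => -(1 / 2) * (deriv (deriv (deriv Ω)) z / deriv Ω z
      - 3 / 2 * (deriv (deriv Ω) z / deriv Ω z) ^ 2))
    (hfmap : ∀ z ∈ U, f z ∈ U)
    (hf : ∀ z ∈ U, DifferentiableAt ℝ f z)
    (hf' : ∀ z ∈ U, DifferentiableAt ℝ (deriv f) z)
    (hf'' : ∀ z ∈ U, DifferentiableAt ℝ (deriv (deriv f)) z)
    (hf'ne : ∀ z ∈ U, deriv f z ≠ 0)
    (hdet : a * d - b * c ≠ 0)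
    (hden : ∀ z ∈ U, c * Ω z + d ≠ 0)
    (hmob : ∀ z ∈ U, Ω (f z) = (a * Ω z + b) / (c * Ω z + d))
    (hA : ∀ z ∈ U, DifferentiableAt ℝ A z)
    (hAf : ∀ z ∈ U, A (f z) * (deriv f z) ^ 3 = A z)
    (hy₀ : ∀ z ∈ U, DifferentiableAt ℝ y₀ z)
    (hy₀' : ∀ z ∈ U, DifferentiableAt ℝ (deriv y₀) z)
    (hode₀ : ∀ z ∈ U, y₀ z * deriv (deriv y₀) z - 5 / 4 * (deriv y₀ z) ^ 2
      + 2 / 3 * (y₀ z) ^ 3 + 3 * A z * deriv y₀ z + 4 * B z * (y₀ z) ^ 2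
      - 2 * deriv A z * y₀ z - (A z) ^ 2 = 0) :
    ∀ z ∈ U,
      (fun t => y₀ (f t) * (deriv f t) ^ 2) z
        * deriv (deriv (fun t => y₀ (f t) * (deriv f t) ^ 2)) z
      - 5 / 4 * (deriv (fun t => y₀ (f t) * (deriv f t) ^ 2) z) ^ 2
      + 2 / 3 * ((fun t => y₀ (f t) * (deriv f t) ^ 2) z) ^ 3
      + 3 * A z * deriv (fun t => y₀ (f t) * (deriv f t) ^ 2) z
      + 4 * B z * ((fun t => y₀ (f t) * (deriv f t) ^ 2) z) ^ 2
      - 2 * deriv A z * ((fun t => y₀ (f t) * (deriv f t) ^ 2) z)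
      - (A z) ^ 2 = 0 := by
  intro z hz
  have hfz : f z ∈ U := hfmap z hz
  have hE : c * Ω z + d ≠ 0 := hden z hz
  have hF1 : deriv f z ≠ 0 := hf'ne z hz
  have hW1 : deriv Ω z ≠ 0 := hΩ'ne z hz
  -- first derivative of y₁ on U
  have hy1d : ∀ w ∈ U, deriv (fun t => y₀ (f t) * (deriv f t) ^ 2) w
      = deriv y₀ (f w) * deriv f w ^ 3
        + y₀ (f w) * (2 * deriv f w * deriv (deriv f) w) := by
    intro w hw
    have h1 : HasDerivAt (fun t => y₀ (f t)) (deriv y₀ (f w) * deriv f w) w :=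
      (hy₀ _ (hfmap w hw)).hasDerivAt.comp w (hf w hw).hasDerivAt
    have h2 : HasDerivAt (fun t => (deriv f t) ^ 2)
        (2 * deriv f w * deriv (deriv f) w) w := by
      simpa [Pi.pow_def] using (hf' w hw).hasDerivAt.pow 2
    exact (h1.mul h2).deriv.trans (by ring)
  -- second derivative of y₁ at z
  have hy1dd : deriv (deriv (fun t => y₀ (f t) * (deriv f t) ^ 2)) z
      = deriv (deriv y₀) (f z) * deriv f z ^ 4
        + 5 * deriv y₀ (f z) * deriv f z ^ 2 * deriv (deriv f) z
        + 2 * y₀ (f z) * (deriv (deriv f) z) ^ 2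
        + 2 * y₀ (f z) * deriv f z * deriv (deriv (deriv f)) z := by
    rw [derivCongrOn hU hy1d hz]
    have h1 : HasDerivAt (fun t => deriv y₀ (f t))
        (deriv (deriv y₀) (f z) * deriv f z) z :=
      (hy₀' _ hfz).hasDerivAt.comp z (hf z hz).hasDerivAt
    have h2 := (hf' z hz).hasDerivAt.pow 3
    have h3 : HasDerivAt (fun t => y₀ (f t)) (deriv y₀ (f z) * deriv f z) z :=
      (hy₀ _ hfz).hasDerivAt.comp z (hf z hz).hasDerivAt
    have h4 := ((hf' z hz).hasDerivAt.const_mul (2:ℝ)).mul (hf'' z hz).hasDerivAt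
    exact ((h1.mul h2).add (h3.mul h4)).deriv.trans (by simp only [Pi.pow_apply, Pi.mul_apply]; ring)
  -- derivative of A at z via the functional equation
  have hAder : deriv A z = deriv A (f z) * deriv f z ^ 4
      + 3 * A (f z) * deriv f z ^ 2 * deriv (deriv f) z := by
    have h0 : deriv (fun t => A (f t) * (deriv f t) ^ 3) z = deriv A z :=
      derivCongrOn hU (fun t ht => hAf t ht) hz
    rw [← h0]
    have h1 : HasDerivAt (fun t => A (f t)) (deriv A (f z) * deriv f z) z :=
      (hA _ hfz).hasDerivAt.comp z (hf z hz).hasDerivAt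
    have h2 := (hf' z hz).hasDerivAt.pow 3
    exact (h1.mul h2).deriv.trans (by simp only [Pi.pow_apply]; ring)
  -- chain-rule derivatives of Ω ∘ f on U
  have hG1 : ∀ w ∈ U, deriv (fun t => Ω (f t)) w = deriv Ω (f w) * deriv f w := by
    intro w hw
    have h1 : HasDerivAt (fun t => Ω (f t)) (deriv Ω (f w) * deriv f w) w :=
      (hΩ _ (hfmap w hw)).hasDerivAt.comp w (hf w hw).hasDerivAt
    exact h1.deriv
  have hG2 : ∀ w ∈ U, deriv (deriv (fun t => Ω (f t))) w
      = deriv (deriv Ω) (f w) * deriv f w ^ 2 + deriv Ω (f w) * deriv (deriv f) w := by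
    intro w hw
    rw [derivCongrOn hU hG1 hw]
    have h1 : HasDerivAt (fun t => deriv Ω (f t))
        (deriv (deriv Ω) (f w) * deriv f w) w :=
      (hΩ' _ (hfmap w hw)).hasDerivAt.comp w (hf w hw).hasDerivAt
    exact (h1.mul (hf' w hw).hasDerivAt).deriv.trans (by ring)
  -- Möbius-side derivatives on U
  have hH1 : ∀ w ∈ U, deriv (fun t => Ω (f t)) w
      = (a * d - b * c) * deriv Ω w / (c * Ω w + d) ^ 2 := by
    intro w hw
    have hEw := hden w hw
    rw [derivCongrOn hU hmob hw]
    have h1 : HasDerivAt (fun t => a * Ω t + b) (a * deriv Ω w) w :=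
      ((hΩ w hw).hasDerivAt.const_mul a).add_const b
    have h2 : HasDerivAt (fun t => c * Ω t + d) (c * deriv Ω w) w :=
      ((hΩ w hw).hasDerivAt.const_mul c).add_const d
    refine (h1.div h2 hEw).deriv.trans ?_
    field_simp
    ring
  have hH2 : ∀ w ∈ U, deriv (deriv (fun t => Ω (f t))) w
      = (a * d - b * c) * (deriv (deriv Ω) w * (c * Ω w + d)
          - 2 * c * (deriv Ω w) ^ 2) / (c * Ω w + d) ^ 3 := by
    intro w hw
    have hEw := hden w hw
    rw [derivCongrOn hU hH1 hw]
    have h1 : HasDerivAt (fun t => (a * d - b * c) * deriv Ω t)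
        ((a * d - b * c) * deriv (deriv Ω) w) w :=
      (hΩ' w hw).hasDerivAt.const_mul _
    have h2 : HasDerivAt (fun t => c * Ω t + d) (c * deriv Ω w) w :=
      ((hΩ w hw).hasDerivAt.const_mul c).add_const d
    refine (h1.div (h2.pow 2) (pow_ne_zero 2 hEw)).deriv.trans ?_
    simp only [Pi.pow_apply]
    field_simp
    ring
  -- the three matching relations at z
  have relA : deriv Ω (f z) * deriv f z
      = (a * d - b * c) * deriv Ω z / (c * Ω z + d) ^ 2 :=
    (hG1 z hz).symm.trans (hH1 z hz)
  have relB : deriv (deriv Ω) (f z) * deriv f z ^ 2 + deriv Ω (f z) * deriv (deriv f) z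
      = (a * d - b * c) * (deriv (deriv Ω) z * (c * Ω z + d)
          - 2 * c * (deriv Ω z) ^ 2) / (c * Ω z + d) ^ 3 :=
    (hG2 z hz).symm.trans (hH2 z hz)
  have relC : deriv (deriv (deriv Ω)) (f z) * deriv f z ^ 3
      + 3 * deriv (deriv Ω) (f z) * deriv f z * deriv (deriv f) z
      + deriv Ω (f z) * deriv (deriv (deriv f)) z
      = (a * d - b * c) * (deriv (deriv (deriv Ω)) z * (c * Ω z + d) ^ 2
          - 6 * c * deriv Ω z * deriv (deriv Ω) z * (c * Ω z + d)
          + 6 * c ^ 2 * (deriv Ω z) ^ 3) / (c * Ω z + d) ^ 4 := by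
    have lhs : deriv (deriv (deriv (fun t => Ω (f t)))) z
        = deriv (deriv (deriv Ω)) (f z) * deriv f z ^ 3
          + 3 * deriv (deriv Ω) (f z) * deriv f z * deriv (deriv f) z
          + deriv Ω (f z) * deriv (deriv (deriv f)) z := by
      rw [derivCongrOn hU hG2 hz]
      have h1 : HasDerivAt (fun t => deriv (deriv Ω) (f t))
          (deriv (deriv (deriv Ω)) (f z) * deriv f z) z :=
        (hΩ'' _ hfz).hasDerivAt.comp z (hf z hz).hasDerivAt
      have h2 := (hf' z hz).hasDerivAt.pow 2
      have h3 : HasDerivAt (fun t => deriv Ω (f t))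
          (deriv (deriv Ω) (f z) * deriv f z) z :=
        (hΩ' _ hfz).hasDerivAt.comp z (hf z hz).hasDerivAt
      exact ((h1.mul h2).add (h3.mul (hf'' z hz).hasDerivAt)).deriv.trans (by simp only [Pi.pow_apply]; ring)
    have rhs : deriv (deriv (deriv (fun t => Ω (f t)))) z
        = (a * d - b * c) * (deriv (deriv (deriv Ω)) z * (c * Ω z + d) ^ 2
            - 6 * c * deriv Ω z * deriv (deriv Ω) z * (c * Ω z + d)
            + 6 * c ^ 2 * (deriv Ω z) ^ 3) / (c * Ω z + d) ^ 4 := by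
      rw [derivCongrOn hU hH2 hz]
      have h2 : HasDerivAt (fun t => c * Ω t + d) (c * deriv Ω z) z :=
        ((hΩ z hz).hasDerivAt.const_mul c).add_const d
      have hnum : HasDerivAt
          (fun t => (a * d - b * c) * (deriv (deriv Ω) t * (c * Ω t + d)
            - 2 * c * (deriv Ω t) ^ 2))
          ((a * d - b * c) * ((deriv (deriv (deriv Ω)) z * (c * Ω z + d)
            + deriv (deriv Ω) z * (c * deriv Ω z))
            - (2 * c) * (2 * deriv Ω z ^ 1 * deriv (deriv Ω) z))) z := by
        exact (((hΩ'' z hz).hasDerivAt.mul h2).sub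
          (((hΩ' z hz).hasDerivAt.pow 2).const_mul (2 * c))).const_mul _
      refine (hnum.div (h2.pow 3) (pow_ne_zero 3 hE)).deriv.trans ?_
      simp only [Pi.pow_apply]
      field_simp
      ring
    exact lhs.symm.trans rhs
  -- nonvanishing of deriv Ω at f z
  have hW1f : deriv Ω (f z) ≠ 0 := hΩ'ne _ hfz
  -- solve for the derivatives of Ω at f z
  have eW1f : deriv Ω (f z)
      = ((a * d - b * c) * deriv Ω z / (c * Ω z + d) ^ 2) / deriv f z := by
    rw [eq_div_iff hF1]; linear_combination relA
  have eW2f : deriv (deriv Ω) (f z)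
      = ((a * d - b * c) * (deriv (deriv Ω) z * (c * Ω z + d)
          - 2 * c * (deriv Ω z) ^ 2) / (c * Ω z + d) ^ 3
        - deriv Ω (f z) * deriv (deriv f) z) / deriv f z ^ 2 := by
    rw [eq_div_iff (pow_ne_zero 2 hF1)]; linear_combination relB
  have eW3f : deriv (deriv (deriv Ω)) (f z)
      = ((a * d - b * c) * (deriv (deriv (deriv Ω)) z * (c * Ω z + d) ^ 2
          - 6 * c * deriv Ω z * deriv (deriv Ω) z * (c * Ω z + d)
          + 6 * c ^ 2 * (deriv Ω z) ^ 3) / (c * Ω z + d) ^ 4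
        - 3 * deriv (deriv Ω) (f z) * deriv f z * deriv (deriv f) z
        - deriv Ω (f z) * deriv (deriv (deriv f)) z) / deriv f z ^ 3 := by
    rw [eq_div_iff (pow_ne_zero 3 hF1)]; linear_combination relC
  -- key Schwarzian relation
  have hkey : 4 * B (f z) * deriv f z ^ 4
      = 4 * B z * deriv f z ^ 2 + 2 * deriv (deriv (deriv f)) z * deriv f z
        - 3 * (deriv (deriv f) z) ^ 2 := by
    simp only [hB]
    rw [eW3f, eW2f, eW1f]
    field_simp
    ring
  -- assemble the ODE
  have hodef := hode₀ (f z) hfz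
  have hAfz := hAf z hz
  simp only []
  rw [hy1dd, hy1d z hz, hAder]
  linear_combination (deriv f z) ^ 6 * hodef
    + (A z + A (f z) * deriv f z ^ 3 - 3 * deriv y₀ (f z) * deriv f z ^ 3
        - 6 * y₀ (f z) * deriv f z * deriv (deriv f) z) * hAfz
    + (-(y₀ (f z)) ^ 2 * (deriv f z) ^ 2) * hkey
end

section
/- Let U ⊆ ℝ be an open interval, let Ω : U → ℝ be four times differentiable with Ω'(z) ≠ 0 for all z ∈ U, and define B := -(1/2){Ω,z}, so that Ω satisfies the Schwarzian equation {Ω,z} = -2B. Then: (i) the function w := Ω/Ω' satisfies the linear equation w''' - 4B·w' - 2B'·w = 0 on U; (ii) for any real constant r, if u : U → ℝ is twice differentiable, nonvanishing on U, and satisfies u² = 2r·Ω/Ω' on U, then u satisfies the Ermakov equation u'' = B·u - r²/u³ on U; (iii) if moreover Ω(z) ≠ 0 for all z ∈ U, then y := -(3/2)(Ω'/Ω)² satisfies the Painlevé XXV–Ermakov equation with A = 0, y·y'' - (5/4)(y')² + (2/3)y³ + 4B·y² = 0, on U. -/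
set_option maxHeartbeats 2000000

/-- If Ω solves the Schwarzian equation {Ω,z} = -2B, then w = Ω/Ω' solves
w''' - 4B·w' - 2B'·w = 0; any nonvanishing u with u² = 2r·Ω/Ω' solves the Ermakov equation
u'' = B·u - r²/u³; and (if Ω is nonvanishing) y = -(3/2)(Ω'/Ω)² solves the Painlevé
XXV–Ermakov equation with A = 0. -/
theorem particular_solutions_from_schwarzian
    (U : Set ℝ) (hU : IsOpen U) (hUconn : IsConnected U)
    (Ω B : ℝ → ℝ)
    (hΩ : ∀ z ∈ U, DifferentiableAt ℝ Ω z)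
    (hΩ' : ∀ z ∈ U, DifferentiableAt ℝ (deriv Ω) z)
    (hΩ'' : ∀ z ∈ U, DifferentiableAt ℝ (deriv (deriv Ω)) z)
    (hΩ''' : ∀ z ∈ U, DifferentiableAt ℝ (deriv (deriv (deriv Ω))) z)
    (hΩ'ne : ∀ z ∈ U, deriv Ω z ≠ 0)
    (hB : B = fun z => -(1 / 2) * (deriv (deriv (deriv Ω)) z / deriv Ω z
      - 3 / 2 * (deriv (deriv Ω) z / deriv Ω z) ^ 2)) :
    (∀ z ∈ U,
      deriv (deriv (deriv (fun t => Ω t / deriv Ω t))) z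
      - 4 * B z * deriv (fun t => Ω t / deriv Ω t) z
      - 2 * deriv B z * (Ω z / deriv Ω z) = 0) ∧
    (∀ r : ℝ, ∀ u : ℝ → ℝ,
      (∀ z ∈ U, DifferentiableAt ℝ u z) →
      (∀ z ∈ U, DifferentiableAt ℝ (deriv u) z) →
      (∀ z ∈ U, u z ≠ 0) →
      (∀ z ∈ U, (u z) ^ 2 = 2 * r * (Ω z / deriv Ω z)) →
      ∀ z ∈ U, deriv (deriv u) z = B z * u z - r ^ 2 / (u z) ^ 3) ∧
    ((∀ z ∈ U, Ω z ≠ 0) →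
      ∀ z ∈ U,
        (fun t => -(3 / 2) * (deriv Ω t / Ω t) ^ 2) z
          * deriv (deriv (fun t => -(3 / 2) * (deriv Ω t / Ω t) ^ 2)) z
        - 5 / 4 * (deriv (fun t => -(3 / 2) * (deriv Ω t / Ω t) ^ 2) z) ^ 2
        + 2 / 3 * ((fun t => -(3 / 2) * (deriv Ω t / Ω t) ^ 2) z) ^ 3
        + 4 * B z * ((fun t => -(3 / 2) * (deriv Ω t / Ω t) ^ 2) z) ^ 2 = 0) := by
  subst hB
  -- first derivative of w = Ω/Ω'
  have hw1 : ∀ z ∈ U, deriv (fun t => Ω t / deriv Ω t) z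
      = (deriv Ω z ^ 2 - Ω z * deriv (deriv Ω) z) / deriv Ω z ^ 2 := by
    intro z hz
    erw [((hΩ z hz).hasDerivAt.div (hΩ' z hz).hasDerivAt (hΩ'ne z hz)).deriv]
    ring
  -- second derivative of w
  have hw2 : ∀ z ∈ U, deriv (deriv (fun t => Ω t / deriv Ω t)) z
      = ((deriv Ω z * deriv (deriv Ω) z - Ω z * deriv (deriv (deriv Ω)) z) * deriv Ω z ^ 2
         - (deriv Ω z ^ 2 - Ω z * deriv (deriv Ω) z) * (2 * deriv Ω z * deriv (deriv Ω) z))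
        / deriv Ω z ^ 4 := by
    intro z hz
    have hev : deriv (fun t => Ω t / deriv Ω t) =ᶠ[nhds z]
        (fun t => (deriv Ω t ^ 2 - Ω t * deriv (deriv Ω) t) / deriv Ω t ^ 2) :=
      Filter.eventuallyEq_of_mem (hU.mem_nhds hz) (fun t ht => hw1 t ht)
    rw [hev.deriv_eq]
    have hnum : HasDerivAt (fun t => deriv Ω t ^ 2 - Ω t * deriv (deriv Ω) t)
        (2 * deriv Ω z ^ 1 * deriv (deriv Ω) z
          - (deriv Ω z * deriv (deriv Ω) z + Ω z * deriv (deriv (deriv Ω)) z)) z :=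
      ((hΩ' z hz).hasDerivAt.pow 2).sub ((hΩ z hz).hasDerivAt.mul (hΩ'' z hz).hasDerivAt)
    have hden : HasDerivAt (fun t => deriv Ω t ^ 2)
        (2 * deriv Ω z ^ 1 * deriv (deriv Ω) z) z := (hΩ' z hz).hasDerivAt.pow 2
    erw [(hnum.div hden (pow_ne_zero 2 (hΩ'ne z hz))).deriv]
    field_simp
    ring
  refine ⟨?_, ?_, ?_⟩
  · -- part (i)
    intro z hz
    have hev2 : deriv (deriv (fun t => Ω t / deriv Ω t)) =ᶠ[nhds z]
        (fun t => ((deriv Ω t * deriv (deriv Ω) t - Ω t * deriv (deriv (deriv Ω)) t) * deriv Ω t ^ 2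
         - (deriv Ω t ^ 2 - Ω t * deriv (deriv Ω) t) * (2 * deriv Ω t * deriv (deriv Ω) t))
        / deriv Ω t ^ 4) :=
      Filter.eventuallyEq_of_mem (hU.mem_nhds hz) (fun t ht => hw2 t ht)
    rw [hev2.deriv_eq]
    have h0 := (hΩ z hz).hasDerivAt
    have h1 := (hΩ' z hz).hasDerivAt
    have h2 := (hΩ'' z hz).hasDerivAt
    have h3 := (hΩ''' z hz).hasDerivAt
    have hW2d := ((((h1.mul h2).sub (h0.mul h3)).mul (h1.pow 2)).sub
        (((h1.pow 2).sub (h0.mul h2)).mul ((h1.const_mul 2).mul h2))).div (h1.pow 4)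
        (pow_ne_zero 4 (hΩ'ne z hz))
    have hw3c : deriv (fun t =>
        ((deriv Ω t * deriv (deriv Ω) t - Ω t * deriv (deriv (deriv Ω)) t) * deriv Ω t ^ 2
         - (deriv Ω t ^ 2 - Ω t * deriv (deriv Ω) t) * (2 * deriv Ω t * deriv (deriv Ω) t))
        / deriv Ω t ^ 4) z
        = (deriv Ω z * ((deriv (deriv Ω) z * deriv (deriv Ω) z
              - Ω z * deriv (deriv (deriv (deriv Ω))) z) * deriv Ω z ^ 2
            - (deriv Ω z ^ 2 - Ω z * deriv (deriv Ω) z)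
              * (2 * deriv (deriv Ω) z * deriv (deriv Ω) z
                + 2 * deriv Ω z * deriv (deriv (deriv Ω)) z))
          - 4 * deriv (deriv Ω) z * ((deriv Ω z * deriv (deriv Ω) z
              - Ω z * deriv (deriv (deriv Ω)) z) * deriv Ω z ^ 2
            - (deriv Ω z ^ 2 - Ω z * deriv (deriv Ω) z) * (2 * deriv Ω z * deriv (deriv Ω) z)))
          / deriv Ω z ^ 5 := by
      erw [hW2d.deriv]
      have hb : deriv Ω z ≠ 0 := hΩ'ne z hz
      clear hev2 hW2d h0 h1 h2 h3 hw1 hw2 hΩ hΩ' hΩ'' hΩ''' hΩ'ne hz hU hUconn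
      simp only [Pi.mul_apply, Pi.div_apply, Pi.sub_apply, Pi.pow_apply, Pi.add_apply]
      field_simp
      ring
    rw [hw3c]
    have hBd := (((h3.div h1 (hΩ'ne z hz)).sub
        (((h2.div h1 (hΩ'ne z hz)).pow 2).const_mul (3 / 2))).const_mul (-(1 / 2)))
    have hBpc : deriv (fun y => -(1 / 2) * (deriv (deriv (deriv Ω)) y / deriv Ω y
        - 3 / 2 * (deriv (deriv Ω) y / deriv Ω y) ^ 2)) z
        = -(1 / 2) * ((deriv (deriv (deriv (deriv Ω))) z * deriv Ω z ^ 2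
            - 4 * deriv Ω z * deriv (deriv Ω) z * deriv (deriv (deriv Ω)) z
            + 3 * deriv (deriv Ω) z ^ 3) / deriv Ω z ^ 3) := by
      erw [hBd.deriv]
      have hb : deriv Ω z ≠ 0 := hΩ'ne z hz
      clear hBd hev2 hW2d hw3c h0 h1 h2 h3 hw1 hw2 hΩ hΩ' hΩ'' hΩ''' hΩ'ne hz hU hUconn
      simp only [Pi.mul_apply, Pi.div_apply, Pi.sub_apply, Pi.pow_apply, Pi.add_apply, Nat.reduceSub, pow_one]
      field_simp
      ring
    rw [hBpc, hw1 z hz]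
    have hb : deriv Ω z ≠ 0 := hΩ'ne z hz
    clear hBd hBpc hev2 hW2d hw3c h0 h1 h2 h3 hw1 hw2 hΩ hΩ' hΩ'' hΩ''' hΩ'ne hz hU hUconn
    field_simp
    ring
  · -- part (ii)
    intro r u hu hu' hune hsq z hz
    by_cases hr : r = 0
    · exact absurd ((pow_eq_zero_iff two_ne_zero).mp
        (by rw [hsq z hz, hr]; ring)) (hune z hz)
    · have h0 := (hΩ z hz).hasDerivAt
      have h1 := (hΩ' z hz).hasDerivAt
      have h2 := (hΩ'' z hz).hasDerivAt
      have h3 := (hΩ''' z hz).hasDerivAt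
      -- u u' = r w' on U
      have hE2 : ∀ t ∈ U, u t * deriv u t
          = r * ((deriv Ω t * deriv Ω t - Ω t * deriv (deriv Ω) t) / deriv Ω t ^ 2) := by
        intro t ht
        have hev : (fun s => u s ^ 2) =ᶠ[nhds t]
            (fun s => 2 * r * (Ω s / deriv Ω s)) :=
          Filter.eventuallyEq_of_mem (hU.mem_nhds ht) (fun s hs => hsq s hs)
        have d1 := hev.deriv_eq
        erw [((hu t ht).hasDerivAt.pow 2).deriv,
          (((hΩ t ht).hasDerivAt.div (hΩ' t ht).hasDerivAt (hΩ'ne t ht)).const_mul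
            (2 * r)).deriv] at d1
        linear_combination d1 / 2
      -- differentiate u u' = r w'
      have hev2 : (fun t => u t * deriv u t) =ᶠ[nhds z]
          (fun t => r * ((deriv Ω t * deriv Ω t - Ω t * deriv (deriv Ω) t) / deriv Ω t ^ 2)) :=
        Filter.eventuallyEq_of_mem (hU.mem_nhds hz) hE2
      have d2 := hev2.deriv_eq
      erw [((hu z hz).hasDerivAt.mul (hu' z hz).hasDerivAt).deriv,
        ((((h1.mul h1).sub (h0.mul h2)).div (h1.pow 2)
          (pow_ne_zero 2 (hΩ'ne z hz))).const_mul r).deriv] at d2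
      -- clean polynomial facts
      have P1 : u z ^ 2 * deriv Ω z = 2 * r * Ω z := by
        have h := hsq z hz
        field_simp [hΩ'ne z hz] at h
        linear_combination h
      have P2 : u z * deriv u z * deriv Ω z ^ 2
          = r * (deriv Ω z * deriv Ω z - Ω z * deriv (deriv Ω) z) := by
        have h := hE2 z hz
        field_simp [hΩ'ne z hz] at h
        linear_combination h
      have P3 : (deriv u z * deriv u z + u z * deriv (deriv u) z) * deriv Ω z ^ 4
          = r * (((deriv (deriv Ω) z * deriv Ω z + deriv Ω z * deriv (deriv Ω) z)
              - (deriv Ω z * deriv (deriv Ω) z + Ω z * deriv (deriv (deriv Ω)) z)) * deriv Ω z ^ 2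
            - (deriv Ω z * deriv Ω z - Ω z * deriv (deriv Ω) z)
              * (2 * deriv Ω z * deriv (deriv Ω) z)) := by
        simp only [Pi.mul_apply, Pi.div_apply, Pi.sub_apply, Pi.pow_apply, Pi.add_apply] at d2
        field_simp [hΩ'ne z hz] at d2
        linear_combination d2
      have sq2 : (u z * deriv u z * deriv Ω z ^ 2) ^ 2
          = (r * (deriv Ω z * deriv Ω z - Ω z * deriv (deriv Ω) z)) ^ 2 := by rw [P2]
      have key : deriv (deriv u) z * u z ^ 3 * deriv Ω z ^ 5
          = 2 * r ^ 2 * Ω z * ((deriv Ω z * deriv (deriv Ω) z - Ω z * deriv (deriv (deriv Ω)) z)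
              * deriv Ω z ^ 2
            - (deriv Ω z ^ 2 - Ω z * deriv (deriv Ω) z) * (2 * deriv Ω z * deriv (deriv Ω) z))
          - r ^ 2 * deriv Ω z * (deriv Ω z ^ 2 - Ω z * deriv (deriv Ω) z) ^ 2 := by
        linear_combination (u z ^ 2 * deriv Ω z) * P3 - deriv Ω z * sq2
          + (r * ((deriv Ω z * deriv (deriv Ω) z - Ω z * deriv (deriv (deriv Ω)) z)
              * deriv Ω z ^ 2
            - (deriv Ω z ^ 2 - Ω z * deriv (deriv Ω) z)
              * (2 * deriv Ω z * deriv (deriv Ω) z))) * P1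
      have hu4 : u z ^ 4 * deriv Ω z ^ 2 = 4 * r ^ 2 * Ω z ^ 2 := by
        linear_combination (u z ^ 2 * deriv Ω z + 2 * r * Ω z) * P1
      have hb : deriv Ω z ≠ 0 := hΩ'ne z hz
      have hune' : u z ≠ 0 := hune z hz
      clear d2 hev2 hE2 h0 h1 h2 h3 hw1 hw2 hΩ hΩ' hΩ'' hΩ''' hΩ'ne hU hUconn hsq hune hu hu' hz
      have hmain : deriv (deriv u) z * (4 * deriv Ω z ^ 5 * u z ^ 3)
          = ((3 * deriv (deriv Ω) z ^ 2
              - 2 * deriv Ω z * deriv (deriv (deriv Ω)) z) * u z ^ 4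
             - 4 * deriv Ω z ^ 2 * r ^ 2) * deriv Ω z ^ 3 := by
        linear_combination 4 * key - (3 * deriv (deriv Ω) z ^ 2
          - 2 * deriv Ω z * deriv (deriv (deriv Ω)) z) * deriv Ω z * hu4
      have hne4 : (4 : ℝ) * deriv Ω z ^ 5 * u z ^ 3 ≠ 0 :=
        mul_ne_zero (mul_ne_zero (by norm_num) (pow_ne_zero _ hb)) (pow_ne_zero _ hune')
      have hform : deriv (deriv u) z
          = (((3 * deriv (deriv Ω) z ^ 2
              - 2 * deriv Ω z * deriv (deriv (deriv Ω)) z) * u z ^ 4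
             - 4 * deriv Ω z ^ 2 * r ^ 2) * deriv Ω z ^ 3)
            / (4 * deriv Ω z ^ 5 * u z ^ 3) := by
        rw [eq_div_iff hne4]; linear_combination hmain
      rw [hform]
      field_simp
      ring
  · -- part (iii)
    intro hΩ0 z hz
    have hy1 : ∀ t ∈ U, deriv (fun s => -(3 / 2) * (deriv Ω s / Ω s) ^ 2) t
        = (-3 : ℝ) * ((Ω t * deriv Ω t * deriv (deriv Ω) t - deriv Ω t ^ 3) / Ω t ^ 3) := by
      intro t ht
      erw [((((hΩ' t ht).hasDerivAt.div (hΩ t ht).hasDerivAt (hΩ0 t ht)).pow 2).const_mul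
        (-(3 / 2))).deriv]
      have hb : deriv Ω t ≠ 0 := hΩ'ne t ht
      have ha : Ω t ≠ 0 := hΩ0 t ht
      simp only [Pi.mul_apply, Pi.div_apply, Pi.sub_apply, Pi.pow_apply, Pi.add_apply, Nat.reduceSub, pow_one]
      field_simp
      ring
    have hev : deriv (fun s => -(3 / 2) * (deriv Ω s / Ω s) ^ 2) =ᶠ[nhds z]
        (fun t => (-3 : ℝ) * ((Ω t * deriv Ω t * deriv (deriv Ω) t - deriv Ω t ^ 3) / Ω t ^ 3)) :=
      Filter.eventuallyEq_of_mem (hU.mem_nhds hz) hy1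
    have h0 := (hΩ z hz).hasDerivAt
    have h1 := (hΩ' z hz).hasDerivAt
    have h2 := (hΩ'' z hz).hasDerivAt
    have h3 := (hΩ''' z hz).hasDerivAt
    have hy2d := (((((h0.mul h1).mul h2).sub (h1.pow 3)).div (h0.pow 3)
        (pow_ne_zero 3 (hΩ0 z hz))).const_mul (-3 : ℝ))
    rw [hev.deriv_eq]; erw [hy2d.deriv]; rw [hy1 z hz]
    have hb : deriv Ω z ≠ 0 := hΩ'ne z hz
    have ha : Ω z ≠ 0 := hΩ0 z hz
    clear hy2d hev hy1 h0 h1 h2 h3 hw1 hw2 hΩ hΩ' hΩ'' hΩ''' hΩ'ne hΩ0 hz hU hUconn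
    simp only [Pi.mul_apply, Pi.div_apply, Pi.sub_apply, Pi.pow_apply, Pi.add_apply]
    field_simp
    ring
end
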